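/- Let C be an a-necklace of length L. Then C is a Maker win with τ_M(C) = 1 + ⌈log₂ L⌉, and J_1(𝒮,C) does not hold. -/

import Mathlib

namespace MB

/-- A marked hypergraph: a finite vertex set, an edge set of finite subsets of vertices,
and a set of marked vertices. -/
structure MarkedHypergraph (V : Type) where
  verts : Finset V
  edges : Finset (Finset V)
  marked : Finset V

namespace MarkedHypergraph

variable {V : Type} [DecidableEq V]

/-- The structural requirements on a marked hypergraph: nonempty vertex set, edges are
nonempty subsets of the vertex set, marked vertices are vertices. -/
def IsValid (H : MarkedHypergraph V) : Prop :=
  H.verts.Nonempty ∧ (∀ e ∈ H.edges, e ⊆ H.verts ∧ e.Nonempty) ∧ H.marked ⊆ H.verts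

/-- `k`-uniformity: every edge has exactly `k` vertices. -/
def IsUniform (H : MarkedHypergraph V) (k : ℕ) : Prop :=
  ∀ e ∈ H.edges, e.card = k

/-- `H^{+x}`: mark the vertex `x`. -/
def plus (H : MarkedHypergraph V) (x : V) : MarkedHypergraph V :=
  ⟨H.verts, H.edges, insert x H.marked⟩

/-- `H^{-y}`: remove the vertex `y` and all edges containing it. -/
def minus (H : MarkedHypergraph V) (y : V) : MarkedHypergraph V :=
  ⟨H.verts.erase y, H.edges.filter fun e => y ∉ e, H.marked.erase y⟩

/-- `X` is a subhypergraph of `H`. -/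
def IsSub (X H : MarkedHypergraph V) : Prop :=
  X.verts ⊆ H.verts ∧ X.edges ⊆ H.edges ∧ X.marked = X.verts ∩ H.marked

/-- A trivial Maker win: some edge has at most one non-marked vertex. -/
def TrivialMakerWin (H : MarkedHypergraph V) : Prop :=
  ∃ e ∈ H.edges, (e \ H.marked).card ≤ 1

theorem card_free_lt (H : MarkedHypergraph V) (x y : V)
    (hy : y ∈ (H.plus x).verts \ (H.plus x).marked) :
    (((H.plus x).minus y).verts \ ((H.plus x).minus y).marked).card
      < (H.verts \ H.marked).card := by
  have hy' : y ∈ H.verts \ insert x H.marked := hy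
  rw [Finset.mem_sdiff] at hy'
  have hyv : y ∈ H.verts := hy'.1
  have hym : y ∉ H.marked := fun h => hy'.2 (Finset.mem_insert_of_mem h)
  show (H.verts.erase y \ (insert x H.marked).erase y).card < (H.verts \ H.marked).card
  calc (H.verts.erase y \ (insert x H.marked).erase y).card
      ≤ ((H.verts \ H.marked).erase y).card := by
        apply Finset.card_le_card
        intro v hv
        rw [Finset.mem_sdiff, Finset.mem_erase] at hv
        rw [Finset.mem_erase, Finset.mem_sdiff]
        exact ⟨hv.1.1, hv.1.2, fun hvm =>
          hv.2 (Finset.mem_erase.mpr ⟨hv.1.1, Finset.mem_insert_of_mem hvm⟩)⟩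
    _ < (H.verts \ H.marked).card :=
        Finset.card_erase_lt_of_mem (Finset.mem_sdiff.mpr ⟨hyv, hym⟩)

/-- Maker win, defined by recursion on the number of non-marked vertices:
if at most one non-marked vertex remains, Maker wins iff the position is a trivial Maker
win; otherwise Maker wins iff he has a pick `x` such that for every answer `y` of Breaker,
the resulting position is a Maker win. -/
def MakerWin (H : MarkedHypergraph V) : Prop :=
  if (H.verts \ H.marked).card ≤ 1 then TrivialMakerWin H
  else ∃ x ∈ H.verts \ H.marked,
    ∀ y ∈ (H.plus x).verts \ (H.plus x).marked, MakerWin ((H.plus x).minus y)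
termination_by (H.verts \ H.marked).card
decreasing_by exact card_free_lt H _ _ (by assumption)

/-- Breaker win: not a Maker win. -/
def BreakerWin (H : MarkedHypergraph V) : Prop := ¬ H.MakerWin

open Classical in
/-- `τ_M(H)`: the minimum number of rounds Maker needs to claim a fully marked edge
(`⊤` if Breaker wins). -/
noncomputable def tauM (H : MarkedHypergraph V) : ℕ∞ :=
  if TrivialMakerWin H then H.edges.inf fun e => ((e \ H.marked).card : ℕ∞)
  else if (H.verts \ H.marked).card ≤ 1 then (⊤ : ℕ∞)
  else 1 + (H.verts \ H.marked).inf fun x =>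
    ((H.plus x).verts \ (H.plus x).marked).attach.sup fun y =>
      tauM ((H.plus x).minus y.1)
termination_by (H.verts \ H.marked).card
decreasing_by exact card_free_lt H _ _ y.2

end MarkedHypergraph

open MarkedHypergraph

variable {V : Type} [DecidableEq V]

/-- The intersection `I_H(𝒳)` of a collection `𝒳` of marked hypergraphs in `H`. -/
def inter (H : MarkedHypergraph V) (𝒳 : Set (MarkedHypergraph V)) : Set V :=
  {y | y ∈ H.verts ∧ y ∉ H.marked ∧ ∀ X ∈ 𝒳, y ∈ X.verts}

/-- The union of a finite collection of marked hypergraphs. -/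
def unionOf (O : Finset (MarkedHypergraph V)) : MarkedHypergraph V :=
  ⟨O.sup MarkedHypergraph.verts, O.sup MarkedHypergraph.edges, O.sup MarkedHypergraph.marked⟩

/-- Isomorphism of pointed marked hypergraphs. -/
def PointedIso (X : MarkedHypergraph V) (x : V) (Y : MarkedHypergraph V) (y : V) : Prop :=
  ∃ φ : V → V, Set.InjOn φ ↑X.verts ∧ X.verts.image φ = Y.verts ∧
    (∀ e : Finset V, e ⊆ X.verts → (e ∈ X.edges ↔ e.image φ ∈ Y.edges)) ∧
    (∀ v ∈ X.verts, (v ∈ X.marked ↔ φ v ∈ Y.marked)) ∧ φ x = y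

/-- `(D,x)` is a danger: `x` is a non-marked vertex and `D^{+x}` is a Maker win. -/
def IsDanger (D : MarkedHypergraph V) (x : V) : Prop :=
  x ∈ D.verts ∧ x ∉ D.marked ∧ (D.plus x).MakerWin

/-- A family of dangers: a set of pointed marked hypergraphs, all of which are dangers. -/
def IsDangerFamily (F : Set (MarkedHypergraph V × V)) : Prop :=
  ∀ p ∈ F, IsDanger p.1 p.2

/-- The collection of all dangers at `x` in `H`: subhypergraphs `D` of `H` containing `x`
such that `D^{+x}` is a Maker win. -/
def dangersAt (H : MarkedHypergraph V) (x : V) : Set (MarkedHypergraph V) :=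
  {D | D.IsValid ∧ D.IsSub H ∧ x ∈ D.verts ∧ (D.plus x).MakerWin}

/-- `xℱ(H)`: the collection of subhypergraphs `X` of `H` containing `x` such that `(X,x)`
is isomorphic to a member of the family `F`. -/
def xFam (F : Set (MarkedHypergraph V × V)) (H : MarkedHypergraph V) (x : V) :
    Set (MarkedHypergraph V) :=
  {X | X.IsValid ∧ X.IsSub H ∧ x ∈ X.verts ∧ ∃ p ∈ F, PointedIso X x p.1 p.2}

/-- `J F r H` is the property `J_r(ℱ,H)` (for `r ≥ 1`; `J F 0 H` is `True` by convention). -/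
def J (F : Set (MarkedHypergraph V × V)) : ℕ → MarkedHypergraph V → Prop
  | 0, _ => True
  | r + 1, H => ∀ x ∈ H.verts \ H.marked,
      ∃ y ∈ inter (H.plus x) (xFam F H x), J F r ((H.plus x).minus y)

/-- `P` is an `ab`-path (in a 3-uniform setting) of length `L`. -/
def IsPathLen (P : MarkedHypergraph V) (a b : V) (L : ℕ) : Prop :=
  (L = 0 ∧ a = b ∧ P.verts = {a} ∧ P.edges = ∅) ∨
  (1 ≤ L ∧ a ≠ b ∧ ∃ e : ℕ → Finset V,
    P.edges = (Finset.range L).image e ∧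
    P.verts = (Finset.range L).biUnion e ∧
    (∀ i, i < L → (e i).card = 3) ∧
    (∀ i j, i < L → j < L → i ≠ j → e i ≠ e j) ∧
    a ∈ e 0 ∧ b ∈ e (L - 1) ∧
    (∀ i, i + 1 < L → (e i ∩ e (i + 1)).card = 1) ∧
    (∀ i j, i + 2 ≤ j → j < L → e i ∩ e j = ∅) ∧
    (∀ i, 1 ≤ i → i < L → a ∉ e i) ∧
    (∀ i, i + 1 < L → b ∉ e i))

/-- `P` is an `ab`-path. -/
def IsPath (P : MarkedHypergraph V) (a b : V) : Prop := ∃ L, IsPathLen P a b L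

/-- `C` is an `a`-cycle of length `L`. -/
def IsCycleLen (C : MarkedHypergraph V) (a : V) (L : ℕ) : Prop :=
  2 ≤ L ∧ ∃ e : ℕ → Finset V,
    C.edges = (Finset.range L).image e ∧
    C.verts = (Finset.range L).biUnion e ∧
    (∀ i, i < L → (e i).card = 3) ∧
    (∀ i j, i < L → j < L → i ≠ j → e i ≠ e j) ∧
    a ∈ e 0 ∧ a ∈ e (L - 1) ∧
    (∀ i, 0 < i → i + 1 < L → a ∉ e i) ∧
    (L = 2 → (e 0 ∩ e 1).card = 2) ∧
    (3 ≤ L → (e 0 ∩ e (L - 1) = {a} ∧ ∀ i, i + 1 < L → (e i ∩ e (i + 1)).card = 1)) ∧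
    (∀ i j, i < j → j < L → 2 ≤ j - i → j - i ≤ L - 2 → e i ∩ e j = ∅)

/-- `C` is an `a`-cycle. -/
def IsCycle (C : MarkedHypergraph V) (a : V) : Prop := ∃ L, IsCycleLen C a L

/-- `T` is an `a`-tadpole: the union of an `ab`-path and a `b`-cycle meeting only at `b`. -/
def IsTadpole (T : MarkedHypergraph V) (a : V) : Prop :=
  ∃ b P C, IsPath P a b ∧ IsCycle C b ∧ P.verts ∩ C.verts = {b} ∧
    T.verts = P.verts ∪ C.verts ∧ T.edges = P.edges ∪ C.edges

/-- `S` is an `x`-snake: an `xm`-path of positive length with `m` marked. -/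
def IsSnake (S : MarkedHypergraph V) (x : V) : Prop :=
  ∃ m L, 1 ≤ L ∧ IsPathLen S x m L ∧ m ∈ S.marked

/-- `N` is a nunchaku: an `ab`-path of positive length with marked set exactly `{a,b}`. -/
def IsNunchaku (N : MarkedHypergraph V) : Prop :=
  ∃ a b L, 1 ≤ L ∧ IsPathLen N a b L ∧ N.marked = {a, b}

/-- `C` is an `a`-necklace: an `a`-cycle with marked set exactly `{a}`. -/
def IsNecklace (C : MarkedHypergraph V) (a : V) : Prop :=
  ∃ L, IsCycleLen C a L ∧ C.marked = {a}

/-- The family `𝒮` of pointed snakes with exactly one marked vertex. -/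
def famS : Set (MarkedHypergraph V × V) := {p | IsSnake p.1 p.2 ∧ p.1.marked.card = 1}

/-- The family `𝒞` of pointed cycles with no marked vertex. -/
def famC : Set (MarkedHypergraph V × V) := {p | IsCycle p.1 p.2 ∧ p.1.marked = ∅}

/-- The family `𝒯` of pointed tadpoles with no marked vertex. -/
def famT : Set (MarkedHypergraph V × V) := {p | IsTadpole p.1 p.2 ∧ p.1.marked = ∅}

/-- `𝒟₀ = 𝒮 ∪ 𝒞`. -/
def famD0 : Set (MarkedHypergraph V × V) := famS ∪ famC

/-- `𝒟₁ = 𝒮 ∪ 𝒯`. -/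
def famD1 : Set (MarkedHypergraph V × V) := famS ∪ famT

/-- `obs(ℱ)`: pointed marked hypergraphs `(D,x)` which, for some `ℱ`-dangerous vertex `z`,
are the union of a collection `𝒪` of subhypergraphs, each of which is (or becomes, once `x`
is marked) an `ℱ`-danger at `z`, with `I_{D^{+x+z}}(𝒪) = ∅`. -/
def obs (F : Set (MarkedHypergraph V × V)) : Set (MarkedHypergraph V × V) :=
  {p | p.2 ∈ p.1.verts ∧ p.2 ∉ p.1.marked ∧
    ∃ z, z ∈ p.1.verts ∧ z ∉ p.1.marked ∧ z ≠ p.2 ∧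
      ∃ O : Set (MarkedHypergraph V),
        (∀ X ∈ O, X.IsValid ∧ X.IsSub p.1) ∧
        (∀ X ∈ O, p.2 ∈ X.verts → X.plus p.2 ∈ xFam F (p.1.plus p.2) z) ∧
        (∀ X ∈ O, p.2 ∉ X.verts → X ∈ xFam F p.1 z) ∧
        (∀ v ∈ p.1.verts, ∃ X ∈ O, v ∈ X.verts) ∧
        (∀ e ∈ p.1.edges, ∃ X ∈ O, e ∈ X.edges) ∧
        (∀ m ∈ p.1.marked, ∃ X ∈ O, m ∈ X.marked) ∧
        inter ((p.1.plus p.2).plus z) O = ∅}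

/-- `obsr(ℱ)`: the members `(D,x)` of `obs(ℱ)` such that `D` contains no `ℱ`-danger at `x`. -/
def obsr (F : Set (MarkedHypergraph V × V)) : Set (MarkedHypergraph V × V) :=
  {p | p ∈ obs F ∧ xFam F p.1 p.2 = ∅}

/-- `ℱ^{*r}`. -/
def star (F : Set (MarkedHypergraph V × V)) : ℕ → Set (MarkedHypergraph V × V)
  | 0 => F
  | r + 1 => F ∪ obs (star F r)

/-- `𝒟₂ = 𝒟₁ ∪ obsr(𝒟₁)`. -/
def famD2 : Set (MarkedHypergraph V × V) := famD1 ∪ obsr famD1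

/-- The lengths of nunchakus contained in `H`. -/
def nunchakuLengths (H : MarkedHypergraph V) : Set ℕ :=
  {L | 1 ≤ L ∧ ∃ N a b, N.IsSub H ∧ IsPathLen N a b L ∧ N.marked = {a, b}}

/-- `H` contains a fully marked edge, a nunchaku, or a necklace. -/
def WinPattern (H : MarkedHypergraph V) : Prop :=
  (∃ e ∈ H.edges, e ⊆ H.marked) ∨ (∃ N, N.IsSub H ∧ IsNunchaku N) ∨
    (∃ C a, C.IsSub H ∧ IsNecklace C a)

/-- `Wk k H`: Maker can force that after `k` rounds of play the updated marked hypergraph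
contains a fully marked edge, a nunchaku or a necklace. -/
def Wk : ℕ → MarkedHypergraph V → Prop
  | 0, H => WinPattern H
  | k + 1, H => ∃ x ∈ H.verts \ H.marked,
      ∀ y ∈ (H.plus x).verts \ (H.plus x).marked, Wk k ((H.plus x).minus y)

end MB
namespace MB
namespace MarkedHypergraph

variable {V : Type} [DecidableEq V]

theorem tauM_trivial {H : MarkedHypergraph V} (h : TrivialMakerWin H) :
    tauM H = H.edges.inf fun e => ((e \ H.marked).card : ℕ∞) := by
  rw [tauM]; simp [h]

theorem tauM_small {H : MarkedHypergraph V} (h : ¬ TrivialMakerWin H)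
    (h2 : (H.verts \ H.marked).card ≤ 1) : tauM H = ⊤ := by
  rw [tauM]; simp [h, h2]

theorem tauM_big {H : MarkedHypergraph V} (h : ¬ TrivialMakerWin H)
    (h2 : 2 ≤ (H.verts \ H.marked).card) :
    tauM H = 1 + (H.verts \ H.marked).inf fun x =>
      ((H.plus x).verts \ (H.plus x).marked).attach.sup fun y =>
        tauM ((H.plus x).minus y.1) := by
  rw [tauM]
  have : ¬ (H.verts \ H.marked).card ≤ 1 := by omega
  simp [h, this]

theorem makerWin_small {H : MarkedHypergraph V} (h2 : (H.verts \ H.marked).card ≤ 1) :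
    MakerWin H ↔ TrivialMakerWin H := by
  rw [MakerWin]; simp [h2]

theorem makerWin_big {H : MarkedHypergraph V} (h2 : 2 ≤ (H.verts \ H.marked).card) :
    MakerWin H ↔ ∃ x ∈ H.verts \ H.marked,
      ∀ y ∈ (H.plus x).verts \ (H.plus x).marked, MakerWin ((H.plus x).minus y) := by
  rw [MakerWin]
  have : ¬ (H.verts \ H.marked).card ≤ 1 := by omega
  simp [this]

/-- edges of plus-minus stay inside verts. -/
theorem edges_sub_verts_pm {H : MarkedHypergraph V} (hv : ∀ e ∈ H.edges, e ⊆ H.verts)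
    (x y : V) : ∀ e ∈ ((H.plus x).minus y).edges, e ⊆ ((H.plus x).minus y).verts := by
  intro e he
  simp only [plus, minus, Finset.mem_filter] at he ⊢
  intro v hv'
  exact Finset.mem_erase.mpr ⟨fun he' => he.2 (he' ▸ hv'), hv _ he.1 hv'⟩

theorem makerWin_of_trivial {H : MarkedHypergraph V} (hv : ∀ e ∈ H.edges, e ⊆ H.verts)
    (h : TrivialMakerWin H) : MakerWin H := by
  obtain ⟨N, hN⟩ : ∃ N, (H.verts \ H.marked).card ≤ N := ⟨_, le_refl _⟩
  induction N generalizing H with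
  | zero => exact (makerWin_small (by omega)).mpr h
  | succ N ih =>
    by_cases h2 : (H.verts \ H.marked).card ≤ 1
    · exact (makerWin_small h2).mpr h
    · rw [makerWin_big (by omega)]
      obtain ⟨e, he, hec⟩ := h
      have hne' : (H.verts \ H.marked).Nonempty := by rw [← Finset.card_pos]; omega
      have : Nonempty V := ⟨hne'.choose⟩
      -- find x free with e ⊆ insert x H.marked
      have hex : ∃ x, x ∈ H.verts \ H.marked ∧ e ⊆ insert x H.marked := by
        rcases Finset.card_le_one_iff_subset_singleton.mp hec with ⟨v, hv'⟩
        by_cases hvm : v ∈ e \ H.marked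
        · have hv1 : v ∈ e := (Finset.mem_sdiff.mp hvm).1
          have hv2 : v ∉ H.marked := (Finset.mem_sdiff.mp hvm).2
          refine ⟨v, Finset.mem_sdiff.mpr ⟨hv e he hv1, hv2⟩, ?_⟩
          intro w hw
          by_cases hwm : w ∈ H.marked
          · exact Finset.mem_insert_of_mem hwm
          · have : w ∈ e \ H.marked := Finset.mem_sdiff.mpr ⟨hw, hwm⟩
            have := hv' this
            simp only [Finset.mem_singleton] at this
            exact this ▸ Finset.mem_insert_self _ _
        · -- e ⊆ marked; pick any free x
          obtain ⟨x, hx⟩ := hne'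
          refine ⟨x, hx, fun w hw => ?_⟩
          by_cases hwm : w ∈ H.marked
          · exact Finset.mem_insert_of_mem hwm
          · exact absurd (hv' (Finset.mem_sdiff.mpr ⟨hw, hwm⟩)) (by
              simp only [Finset.mem_singleton]
              rintro rfl
              exact hvm (Finset.mem_sdiff.mpr ⟨hw, hwm⟩))
      obtain ⟨x, hx, hsub⟩ := hex
      refine ⟨x, hx, fun y hy => ?_⟩
      have hyne : y ∉ e := by
        intro hye
        have := hsub hye
        exact (Finset.mem_sdiff.mp hy).2 this
      apply ih
      · exact edges_sub_verts_pm hv x y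
      · refine ⟨e, ?_, ?_⟩
        · simp only [plus, minus, Finset.mem_filter]
          exact ⟨he, hyne⟩
        · have : e \ ((H.plus x).minus y).marked = ∅ := by
            apply Finset.eq_empty_of_forall_notMem
            intro w hw
            rw [Finset.mem_sdiff] at hw
            exact hw.2 (Finset.mem_erase.mpr ⟨fun h' => hyne (h' ▸ hw.1), hsub hw.1⟩)
          rw [this]; simp
      · have := card_free_lt H x y hy
        omega

theorem makerWin_of_tauM_ne_top {H : MarkedHypergraph V}
    (hv : ∀ e ∈ H.edges, e ⊆ H.verts) (h : tauM H ≠ ⊤) : MakerWin H := by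
  obtain ⟨N, hN⟩ : ∃ N, (H.verts \ H.marked).card ≤ N := ⟨_, le_refl _⟩
  induction N generalizing H with
  | zero =>
    by_cases ht : TrivialMakerWin H
    · exact makerWin_of_trivial hv ht
    · exact absurd (tauM_small ht (by omega)) h
  | succ N ih =>
    by_cases ht : TrivialMakerWin H
    · exact makerWin_of_trivial hv ht
    · by_cases h2 : (H.verts \ H.marked).card ≤ 1
      · exact absurd (tauM_small ht h2) h
      · rw [tauM_big ht (by omega)] at h
        have hinf : ((H.verts \ H.marked).inf fun x =>
            ((H.plus x).verts \ (H.plus x).marked).attach.sup fun y =>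
              tauM ((H.plus x).minus y.1)) ≠ ⊤ := by
          intro h'
          rw [h'] at h
          simp at h
        have hne : (H.verts \ H.marked).Nonempty := by rw [← Finset.card_pos]; omega
        obtain ⟨x, hx, heq⟩ := Finset.exists_mem_eq_inf (H.verts \ H.marked) hne
          (fun x => ((H.plus x).verts \ (H.plus x).marked).attach.sup fun y =>
              tauM ((H.plus x).minus y.1))
        rw [makerWin_big (by omega)]
        refine ⟨x, hx, fun y hy => ?_⟩
        apply ih (edges_sub_verts_pm hv x y)
        · intro h'
          apply hinf
          rw [heq]
          have hle := Finset.le_sup (f := fun y : {z // z ∈ (H.plus x).verts \ (H.plus x).marked} =>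
            tauM ((H.plus x).minus y.1)) (Finset.mem_attach _ ⟨y, hy⟩)
          simp only [h'] at hle
          exact top_le_iff.mp hle
        · have := card_free_lt H x y hy
          omega

end MarkedHypergraph
end MB
namespace MB
namespace MarkedHypergraph

variable {V : Type} [DecidableEq V]

theorem IsSub.marked_sub {X H : MarkedHypergraph V} (hs : X.IsSub H) : X.marked ⊆ H.marked := by
  rw [hs.2.2]; exact Finset.inter_subset_right

theorem IsSub.free_sub {X H : MarkedHypergraph V} (hs : X.IsSub H) :
    X.verts \ X.marked ⊆ H.verts \ H.marked := by
  intro v hv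
  rw [Finset.mem_sdiff] at hv ⊢
  refine ⟨hs.1 hv.1, fun hm => hv.2 ?_⟩
  rw [hs.2.2, Finset.mem_inter]
  exact ⟨hv.1, hm⟩

theorem sub_pm₁ {X H : MarkedHypergraph V} (hs : X.IsSub H) {x : V} (hx : x ∈ X.verts) (y : V) :
    ((X.plus x).minus y).IsSub ((H.plus x).minus y) := by
  obtain ⟨hV, hE, hM⟩ := hs
  refine ⟨Finset.erase_subset_erase _ hV, ?_, ?_⟩
  · intro e he
    simp only [plus, minus, Finset.mem_filter] at he ⊢
    exact ⟨hE he.1, he.2⟩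
  · ext v
    simp only [plus, minus, Finset.mem_erase, Finset.mem_insert, Finset.mem_inter]
    constructor
    · rintro ⟨hvy, (rfl | hvm)⟩
      · exact ⟨⟨hvy, hx⟩, hvy, Or.inl rfl⟩
      · have : v ∈ X.verts ∩ H.marked := hM ▸ hvm
        rw [Finset.mem_inter] at this
        exact ⟨⟨hvy, this.1⟩, hvy, Or.inr this.2⟩
    · rintro ⟨⟨hvy, hvX⟩, -, (rfl | hvm)⟩
      · exact ⟨hvy, Or.inl rfl⟩
      · exact ⟨hvy, Or.inr (by rw [hM, Finset.mem_inter]; exact ⟨hvX, hvm⟩)⟩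

theorem sub_pm₂ {X H : MarkedHypergraph V} (hs : X.IsSub H)
    (hXv : ∀ e ∈ X.edges, e ⊆ X.verts) {x y y' : V} (hx : x ∈ X.verts)
    (hy : y ∉ X.verts) :
    ((X.plus x).minus y').IsSub ((H.plus x).minus y) := by
  obtain ⟨hV, hE, hM⟩ := hs
  refine ⟨?_, ?_, ?_⟩
  · intro v hv
    simp only [plus, minus, Finset.mem_erase] at hv ⊢
    exact ⟨fun h => hy (h ▸ hv.2), hV hv.2⟩
  · intro e he
    simp only [plus, minus, Finset.mem_filter] at he ⊢
    exact ⟨hE he.1, fun hye => hy (hXv e he.1 hye)⟩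
  · ext v
    simp only [plus, minus, Finset.mem_erase, Finset.mem_insert, Finset.mem_inter]
    constructor
    · rintro ⟨hvy', (rfl | hvm)⟩
      · exact ⟨⟨hvy', hx⟩, fun h => hy (h ▸ hx), Or.inl rfl⟩
      · have : v ∈ X.verts ∩ H.marked := hM ▸ hvm
        rw [Finset.mem_inter] at this
        exact ⟨⟨hvy', this.1⟩, fun h => hy (h ▸ this.1), Or.inr this.2⟩
    · rintro ⟨⟨hvy', hvX⟩, -, (rfl | hvm)⟩
      · exact ⟨hvy', Or.inl rfl⟩
      · exact ⟨hvy', Or.inr (by rw [hM, Finset.mem_inter]; exact ⟨hvX, hvm⟩)⟩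

theorem tauM_sub {X H : MarkedHypergraph V} (hs : X.IsSub H)
    (hXv : ∀ e ∈ X.edges, e ⊆ X.verts) : tauM H ≤ tauM X := by
  obtain ⟨N, hN⟩ : ∃ N, (H.verts \ H.marked).card ≤ N := ⟨_, le_refl _⟩
  induction N generalizing X H with
  | zero =>
    by_cases hXt : TrivialMakerWin X
    · obtain ⟨e, he, hec⟩ := id hXt
      have hHt : TrivialMakerWin H := by
        refine ⟨e, hs.2.1 he, le_trans (Finset.card_le_card ?_) hec⟩
        exact Finset.sdiff_subset_sdiff (le_refl _) hs.marked_sub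
      rw [tauM_trivial hHt, tauM_trivial hXt]
      apply Finset.le_inf
      intro e' he'
      refine le_trans (Finset.inf_le (hs.2.1 he')) ?_
      exact_mod_cast Finset.card_le_card
        (Finset.sdiff_subset_sdiff (le_refl _) hs.marked_sub)
    · have hXc : (X.verts \ X.marked).card ≤ 1 := by
        have := Finset.card_le_card hs.free_sub
        omega
      rw [tauM_small hXt hXc]
      exact le_top
  | succ N ih =>
    by_cases hXt : TrivialMakerWin X
    · obtain ⟨e, he, hec⟩ := id hXt
      have hHt : TrivialMakerWin H := by
        refine ⟨e, hs.2.1 he, le_trans (Finset.card_le_card ?_) hec⟩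
        exact Finset.sdiff_subset_sdiff (le_refl _) hs.marked_sub
      rw [tauM_trivial hHt, tauM_trivial hXt]
      apply Finset.le_inf
      intro e' he'
      refine le_trans (Finset.inf_le (hs.2.1 he')) ?_
      exact_mod_cast Finset.card_le_card
        (Finset.sdiff_subset_sdiff (le_refl _) hs.marked_sub)
    · by_cases hXc : (X.verts \ X.marked).card ≤ 1
      · rw [tauM_small hXt hXc]; exact le_top
      · -- main case
        have hHc : 2 ≤ (H.verts \ H.marked).card := by
          have := Finset.card_le_card hs.free_sub
          omega
        rw [tauM_big hXt (by omega)]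
        obtain ⟨x, hx, heq⟩ := Finset.exists_mem_eq_inf (X.verts \ X.marked)
          (by rw [← Finset.card_pos]; omega)
          (fun x => ((X.plus x).verts \ (X.plus x).marked).attach.sup fun y =>
              tauM ((X.plus x).minus y.1))
        rw [heq]
        by_cases hHt : TrivialMakerWin H
        · rw [tauM_trivial hHt]
          obtain ⟨e, he, hec⟩ := hHt
          refine le_trans (Finset.inf_le he) (le_trans ?_ le_self_add)
          exact_mod_cast hec
        · rw [tauM_big hHt hHc]
          have hxH : x ∈ H.verts \ H.marked := hs.free_sub hx
          refine add_le_add_right (le_trans (Finset.inf_le hxH) ?_) 1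
          apply Finset.sup_le
          rintro ⟨y, hy⟩ -
          show tauM ((H.plus x).minus y) ≤ _
          by_cases hyX : y ∈ X.verts
          · have hyX' : y ∈ (X.plus x).verts \ (X.plus x).marked := by
              simp only [plus, Finset.mem_sdiff, Finset.mem_insert] at hy ⊢
              refine ⟨hyX, fun h => hy.2 ?_⟩
              rcases h with rfl | h
              · exact Or.inl rfl
              · exact Or.inr (hs.marked_sub h)
            refine le_trans (ih (sub_pm₁ ⟨hs.1, hs.2.1, hs.2.2⟩
              (Finset.mem_sdiff.mp hx).1 y) (edges_sub_verts_pm hXv x y) ?_) ?_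
            · have := card_free_lt H x y hy
              omega
            · exact Finset.le_sup (f := fun y : {z // z ∈ (X.plus x).verts \ (X.plus x).marked} =>
                tauM ((X.plus x).minus y.1)) (Finset.mem_attach _ ⟨y, hyX'⟩)
          · have hfree' : ((X.plus x).verts \ (X.plus x).marked).Nonempty := by
              have hsub : (X.verts \ X.marked).erase x ⊆
                  (X.plus x).verts \ (X.plus x).marked := by
                intro v hv
                rw [Finset.mem_erase, Finset.mem_sdiff] at hv
                simp only [plus, Finset.mem_sdiff, Finset.mem_insert]
                exact ⟨hv.2.1, fun h => h.elim hv.1 hv.2.2⟩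
              have : 1 ≤ ((X.verts \ X.marked).erase x).card := by
                rw [Finset.card_erase_of_mem hx]; omega
              rw [← Finset.card_pos]
              have := Finset.card_le_card hsub
              omega
            obtain ⟨y', hy'⟩ := hfree'
            refine le_trans (ih (sub_pm₂ ⟨hs.1, hs.2.1, hs.2.2⟩ hXv
              (Finset.mem_sdiff.mp hx).1 hyX) (edges_sub_verts_pm hXv x y') ?_) ?_
            · have := card_free_lt H x y hy
              omega
            · exact Finset.le_sup (f := fun y : {z // z ∈ (X.plus x).verts \ (X.plus x).marked} =>
                tauM ((X.plus x).minus y.1)) (Finset.mem_attach _ ⟨y', hy'⟩)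

end MarkedHypergraph
end MB
namespace MB
open MarkedHypergraph

variable {V : Type} [DecidableEq V]

/-- An abstract path (arc) in a 3-uniform hypergraph, with designated endpoints. -/
structure Arc (V : Type) where
  f : ℕ → Finset V
  len : ℕ
  p : V
  q : V

namespace Arc

def verts (A : Arc V) : Finset V := (Finset.range A.len).biUnion A.f

def edges (A : Arc V) : Finset (Finset V) := (Finset.range A.len).image A.f

structure Ok (A : Arc V) : Prop where
  pos : 1 ≤ A.len
  card3 : ∀ i, i < A.len → (A.f i).card = 3
  consec : ∀ i, i + 1 < A.len → (A.f i ∩ A.f (i + 1)).card = 1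
  far : ∀ i j, i + 2 ≤ j → j < A.len → A.f i ∩ A.f j = ∅
  pmem : A.p ∈ A.f 0
  qmem : A.q ∈ A.f (A.len - 1)
  pq : A.p ≠ A.q
  pnot : ∀ i, 1 ≤ i → i < A.len → A.p ∉ A.f i
  qnot : ∀ i, i + 1 < A.len → A.q ∉ A.f i

theorem mem_verts {A : Arc V} {v : V} : v ∈ A.verts ↔ ∃ i, i < A.len ∧ v ∈ A.f i := by
  simp [verts, Finset.mem_biUnion]

theorem mem_edges {A : Arc V} {e : Finset V} : e ∈ A.edges ↔ ∃ i, i < A.len ∧ A.f i = e := by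
  simp [edges, Finset.mem_image]

theorem edge_sub_verts {A : Arc V} {i : ℕ} (hi : i < A.len) : A.f i ⊆ A.verts := by
  intro v hv; exact mem_verts.mpr ⟨i, hi, hv⟩

/-- In an Ok arc, a vertex in two distinct edges lies in consecutive edges. -/
theorem Ok.adj {A : Arc V} (hA : A.Ok) {v : V} {i j : ℕ} (hij : i < j) (hj : j < A.len)
    (h1 : v ∈ A.f i) (h2 : v ∈ A.f j) : j = i + 1 := by
  by_contra h
  have : v ∈ A.f i ∩ A.f j := Finset.mem_inter.mpr ⟨h1, h2⟩
  rw [hA.far i j (by omega) hj] at this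
  exact absurd this (Finset.notMem_empty v)

theorem locate {A : Arc V} (hA : A.Ok) {x : V} (hx : x ∈ A.verts) :
    (∃ i, i + 1 < A.len ∧ x ∈ A.f i ∧ x ∈ A.f (i + 1)) ∨
    (∃ i, i < A.len ∧ x ∈ A.f i ∧ ∀ j, j < A.len → x ∈ A.f j → j = i) := by
  classical
  obtain ⟨i0, hi0⟩ := mem_verts.mp hx
  set S := (Finset.range A.len).filter (fun i => x ∈ A.f i) with hS
  have hSne : S.Nonempty := ⟨i0, by simp [hS, Finset.mem_filter, hi0.1, hi0.2]⟩
  set m := S.min' hSne with hm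
  have hmS : m ∈ S := S.min'_mem hSne
  rw [hS, Finset.mem_filter, Finset.mem_range] at hmS
  by_cases hj : m + 1 < A.len ∧ x ∈ A.f (m + 1)
  · exact Or.inl ⟨m, hj.1, hmS.2, hj.2⟩
  · refine Or.inr ⟨m, hmS.1, hmS.2, fun j hjlen hjx => ?_⟩
    have hmj : m ≤ j := S.min'_le j (by simp [hS, Finset.mem_filter, hjlen, hjx])
    rcases Nat.eq_or_lt_of_le hmj with h | h
    · omega
    · have := hA.adj h hjlen hmS.2 hjx
      exact absurd ⟨this ▸ hjlen, this ▸ hjx⟩ hj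

def sub (A : Arc V) (s t : ℕ) (p' q' : V) : Arc V :=
  ⟨fun k => A.f (s + k), t + 1 - s, p', q'⟩

theorem sub_ok {A : Arc V} (hA : A.Ok) {s t : ℕ} (hst : s ≤ t) (ht : t < A.len)
    {p' q' : V} (hp : p' ∈ A.f s) (hq : q' ∈ A.f t) (hpq : p' ≠ q')
    (hp2 : s < t → p' ∉ A.f (s + 1)) (hq2 : s < t → q' ∉ A.f (t - 1)) :
    (A.sub s t p' q').Ok := by
  constructor
  · show 1 ≤ t + 1 - s; omega
  · intro i hi
    exact hA.card3 (s + i) (by simp only [sub] at hi; omega)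
  · intro i hi
    simp only [sub] at hi ⊢
    have h1 : s + (i + 1) = (s + i) + 1 := by omega
    rw [h1]
    exact hA.consec (s + i) (by omega)
  · intro i j hij hj
    simp only [sub] at hj ⊢
    exact hA.far (s + i) (s + j) (by omega) (by omega)
  · show p' ∈ A.f (s + 0); simpa using hp
  · show q' ∈ A.f (s + (t + 1 - s - 1))
    have : s + (t + 1 - s - 1) = t := by omega
    rw [this]; exact hq
  · exact hpq
  · intro i h1 h2
    simp only [sub] at h2 ⊢
    rcases Nat.eq_or_lt_of_le h1 with h | h
    · have : s < t := by omega
      have h3 : s + i = s + 1 := by omega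
      rw [h3]; exact hp2 this
    · intro hmem
      have : p' ∈ A.f s ∩ A.f (s + i) := Finset.mem_inter.mpr ⟨hp, hmem⟩
      rw [hA.far s (s + i) (by omega) (by omega)] at this
      exact absurd this (Finset.notMem_empty _)
  · intro i h1
    simp only [sub] at h1 ⊢
    by_cases h : s + i = t - 1
    · rw [h]; exact hq2 (by omega)
    · intro hmem
      have : q' ∈ A.f (s + i) ∩ A.f t := Finset.mem_inter.mpr ⟨hmem, hq⟩
      rw [hA.far (s + i) t (by omega) ht] at this
      exact absurd this (Finset.notMem_empty _)

theorem mem_sub_verts {A : Arc V} {s t : ℕ} {p' q' v : V} :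
    v ∈ (A.sub s t p' q').verts ↔ ∃ j, s ≤ j ∧ j ≤ t ∧ v ∈ A.f j := by
  rw [mem_verts]
  constructor
  · rintro ⟨i, hi, hv⟩
    simp only [sub] at hi hv
    exact ⟨s + i, by omega, by omega, hv⟩
  · rintro ⟨j, h1, h2, hv⟩
    refine ⟨j - s, by simp only [sub]; omega, ?_⟩
    simp only [sub]
    have : s + (j - s) = j := by omega
    rw [this]; exact hv

theorem mem_sub_edges {A : Arc V} {s t : ℕ} {p' q' : V} {e : Finset V} :
    e ∈ (A.sub s t p' q').edges ↔ ∃ j, s ≤ j ∧ j ≤ t ∧ A.f j = e := by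
  rw [mem_edges]
  constructor
  · rintro ⟨i, hi, hv⟩
    simp only [sub] at hi hv
    exact ⟨s + i, by omega, by omega, hv⟩
  · rintro ⟨j, h1, h2, hv⟩
    refine ⟨j - s, by simp only [sub]; omega, ?_⟩
    simp only [sub]
    have : s + (j - s) = j := by omega
    rw [this]; exact hv

def rev (A : Arc V) : Arc V := ⟨fun k => A.f (A.len - 1 - k), A.len, A.q, A.p⟩

theorem rev_ok {A : Arc V} (hA : A.Ok) : A.rev.Ok := by
  constructor
  · exact hA.pos
  · intro i hi
    exact hA.card3 _ (by simp only [rev] at hi ⊢; omega)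
  · intro i hi
    simp only [rev] at hi ⊢
    have h1 : A.len - 1 - i = (A.len - 1 - (i + 1)) + 1 := by omega
    rw [h1, Finset.inter_comm]
    exact hA.consec _ (by omega)
  · intro i j hij hj
    simp only [rev] at hj ⊢
    rw [Finset.inter_comm]
    exact hA.far (A.len - 1 - j) (A.len - 1 - i) (by omega) (by omega)
  · show A.q ∈ A.f (A.len - 1 - 0); simpa using hA.qmem
  · show A.p ∈ A.f (A.len - 1 - (A.rev.len - 1))
    have : A.len - 1 - (A.rev.len - 1) = 0 := by simp only [rev]; omega
    rw [this]; exact hA.pmem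
  · exact hA.pq.symm
  · intro i h1 h2
    simp only [rev] at h2 ⊢
    exact hA.qnot _ (by omega)
  · intro i h1
    simp only [rev] at h1 ⊢
    exact hA.pnot _ (by omega) (by omega)

theorem rev_verts {A : Arc V} : A.rev.verts = A.verts := by
  ext v
  rw [mem_verts, mem_verts]
  constructor
  · rintro ⟨i, hi, hv⟩
    simp only [rev] at hi hv
    exact ⟨A.len - 1 - i, by omega, hv⟩
  · rintro ⟨i, hi, hv⟩
    refine ⟨A.len - 1 - i, by simp only [rev]; omega, ?_⟩
    simp only [rev]
    have : A.len - 1 - (A.len - 1 - i) = i := by omega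
    rw [this]; exact hv

theorem rev_edges {A : Arc V} : A.rev.edges = A.edges := by
  ext e
  rw [mem_edges, mem_edges]
  constructor
  · rintro ⟨i, hi, hv⟩
    simp only [rev] at hi hv
    exact ⟨A.len - 1 - i, by omega, hv⟩
  · rintro ⟨i, hi, hv⟩
    refine ⟨A.len - 1 - i, by simp only [rev]; omega, ?_⟩
    simp only [rev]
    have : A.len - 1 - (A.len - 1 - i) = i := by omega
    rw [this]; exact hv

theorem rev_len {A : Arc V} : A.rev.len = A.len := rfl

end Arc

/-- picking an element of a 3-element set avoiding a small set -/
theorem pick3 {e s : Finset V} (he : e.card = 3) (h : (e ∩ s).card ≤ 2) :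
    (e \ s).Nonempty := by
  rw [← Finset.card_pos]
  have := Finset.card_sdiff_add_card_inter e s
  omega

theorem inter_card_le_of_subset {e s t : Finset V} (h : e ∩ s ⊆ t) :
    (e ∩ s).card ≤ t.card := Finset.card_le_card h

/-- A structural arc system for a marked hypergraph. -/
structure StrSys (AS : List (Arc V)) (H : MarkedHypergraph V) : Prop where
  ok : ∀ A ∈ AS, A.Ok
  vsub : ∀ A ∈ AS, A.verts ⊆ H.verts
  esub : ∀ A ∈ AS, A.edges ⊆ H.edges
  cover : ∀ e ∈ H.edges, ∃ A ∈ AS, e ∈ A.edges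
  marks : ∀ A ∈ AS, ∀ v ∈ A.verts, v ∈ H.marked → v = A.p ∨ v = A.q
  pw : AS.Pairwise (fun A B => ∀ v, v ∈ A.verts → v ∈ B.verts → v ∈ H.marked)

def Nunch (A : Arc V) (M : Finset V) : Prop := A.p ∈ M ∧ A.q ∈ M

def GoodSys (n : ℕ) (H : MarkedHypergraph V) : Prop :=
  ∃ AS : List (Arc V), StrSys AS H ∧ ∀ A ∈ AS, Nunch A H.marked → n ≤ A.len

theorem StrSys.edge_free {AS : List (Arc V)} {H : MarkedHypergraph V} (h : StrSys AS H)
    (hn : ∀ A ∈ AS, Nunch A H.marked → 2 ≤ A.len) :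
    ∀ e ∈ H.edges, 2 ≤ (e \ H.marked).card := by
  intro e he
  obtain ⟨A, hA, heA⟩ := h.cover e he
  obtain ⟨i, hi, hfi⟩ := Arc.mem_edges.mp heA
  subst hfi
  have hok := h.ok A hA
  have hsubv : A.f i ⊆ A.verts := Arc.edge_sub_verts hi
  have hcard : (A.f i ∩ H.marked).card ≤ 1 := by
    by_contra hc
    obtain ⟨u, hu, w, hw, huw⟩ :=
      Finset.one_lt_card.mp (show 1 < (A.f i ∩ H.marked).card by omega)
    rw [Finset.mem_inter] at hu hw
    have hu' := h.marks A hA u (hsubv hu.1) hu.2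
    have hw' := h.marks A hA w (hsubv hw.1) hw.2
    have hpq : A.p ∈ A.f i ∧ A.q ∈ A.f i := by
      rcases hu' with rfl | rfl <;> rcases hw' with rfl | rfl <;>
        first | (exact absurd rfl huw) | (exact ⟨hu.1, hw.1⟩) | (exact ⟨hw.1, hu.1⟩)
    have hNu : Nunch A H.marked := by
      rcases hu' with rfl | rfl <;> rcases hw' with rfl | rfl <;>
        first | (exact absurd rfl huw) | (exact ⟨hu.2, hw.2⟩) | (exact ⟨hw.2, hu.2⟩)
    have hlen := hn A hA hNu
    have hi0 : i = 0 := by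
      by_contra h0
      exact hok.pnot i (by omega) hi hpq.1
    rw [hi0] at hpq
    exact hok.qnot 0 (by omega) hpq.2
  have he3 : (A.f i).card = 3 := hok.card3 i hi
  have := Finset.card_sdiff_add_card_inter (A.f i) H.marked
  omega

theorem StrSys.edge_free1 {AS : List (Arc V)} {H : MarkedHypergraph V} (h : StrSys AS H) :
    ∀ e ∈ H.edges, 1 ≤ (e \ H.marked).card := by
  intro e he
  obtain ⟨A, hA, heA⟩ := h.cover e he
  obtain ⟨i, hi, hfi⟩ := Arc.mem_edges.mp heA
  subst hfi
  have hok := h.ok A hA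
  have hsubv : A.f i ⊆ A.verts := Arc.edge_sub_verts hi
  have hcard : (A.f i ∩ H.marked).card ≤ 2 := by
    refine le_trans (inter_card_le_of_subset (t := {A.p, A.q}) ?_) ?_
    · intro v hv
      rw [Finset.mem_inter] at hv
      rcases h.marks A hA v (hsubv hv.1) hv.2 with rfl | rfl <;> simp
    · exact le_trans (Finset.card_insert_le _ _) (by simp)
  have he3 : (A.f i).card = 3 := hok.card3 i hi
  have := Finset.card_sdiff_add_card_inter (A.f i) H.marked
  omega

end MB
set_option linter.unusedSectionVars false
namespace MB
open MarkedHypergraph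

variable {V : Type} [DecidableEq V]

theorem minus_marked_eq {H : MarkedHypergraph V} {y : V} (hy : y ∉ H.marked) :
    (H.minus y).marked = H.marked := Finset.erase_eq_of_notMem hy

theorem pick3' {e s : Finset V} {v : V} (he : e.card = 3) (hs : (e ∩ s).card ≤ 1) :
    (e \ (s ∪ {v})).Nonempty := by
  apply pick3 he
  rw [Finset.inter_union_distrib_left]
  refine le_trans (Finset.card_union_le _ _) ?_
  have h2 : (e ∩ {v}).card ≤ 1 :=
    le_trans (Finset.card_le_card Finset.inter_subset_right) (by simp)
  omega

/-- Replacing one arc of a system by pieces, after deleting a vertex of that arc.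
This primed version does not require the marks condition on the replaced arc `B`. -/
theorem strSys_replace' {S T : List (Arc V)} {B : Arc V} {H : MarkedHypergraph V}
    (hok : ∀ A ∈ S ++ B :: T, A.Ok)
    (hvsub : ∀ A ∈ S ++ B :: T, A.verts ⊆ H.verts)
    (hesub : ∀ A ∈ S ++ B :: T, A.edges ⊆ H.edges)
    (hcover : ∀ e ∈ H.edges, ∃ A ∈ S ++ B :: T, e ∈ A.edges)
    (hmarksOld : ∀ A, A ∈ S ∨ A ∈ T → ∀ v ∈ A.verts, v ∈ H.marked → v = A.p ∨ v = A.q)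
    (hpw : (S ++ B :: T).Pairwise
      (fun A C => ∀ v, v ∈ A.verts → v ∈ C.verts → v ∈ H.marked))
    {y : V} (hy : y ∉ H.marked) (hyB : y ∈ B.verts)
    (P : List (Arc V))
    (hPok : ∀ X ∈ P, X.Ok)
    (hPsub : ∀ X ∈ P, X.verts ⊆ B.verts)
    (hPy : ∀ X ∈ P, y ∉ X.verts)
    (hPe : ∀ X ∈ P, ∀ e ∈ X.edges, e ∈ B.edges)
    (hPcov : ∀ e ∈ B.edges, y ∉ e → ∃ X ∈ P, e ∈ X.edges)
    (hPmark : ∀ X ∈ P, ∀ v ∈ X.verts, v ∈ H.marked → v = X.p ∨ v = X.q)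
    (hPpw : List.Pairwise (fun X Y => ∀ v, v ∈ X.verts → v ∈ Y.verts → v ∈ H.marked) P) :
    StrSys (S ++ (P ++ T)) (H.minus y) := by
  have hBmem : B ∈ S ++ B :: T := by simp
  obtain ⟨hpwS, hpwBT, hcrossS⟩ := List.pairwise_append.mp hpw
  obtain ⟨hBT, hpwT⟩ := List.pairwise_cons.mp hpwBT
  have hyS : ∀ A ∈ S, y ∉ A.verts := by
    intro A hA hyA
    exact hy (hcrossS A hA B (by simp) y hyA hyB)
  have hyT : ∀ A ∈ T, y ∉ A.verts := by
    intro A hA hyA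
    exact hy (hBT A hA y hyB hyA)
  have hmemnew : ∀ A ∈ S ++ (P ++ T), A ∈ S ∨ A ∈ T ∨ A ∈ P := by
    intro A hA
    rcases List.mem_append.mp hA with h1 | h1
    · exact Or.inl h1
    · rcases List.mem_append.mp h1 with h2 | h2
      · exact Or.inr (Or.inr h2)
      · exact Or.inr (Or.inl h2)
  have holdmem : ∀ A, A ∈ S ∨ A ∈ T → A ∈ S ++ B :: T := by
    rintro A (h1 | h1)
    · exact List.mem_append.mpr (Or.inl h1)
    · exact List.mem_append.mpr (Or.inr (List.mem_cons.mpr (Or.inr h1)))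
  have hynew : ∀ A ∈ S ++ (P ++ T), y ∉ A.verts := by
    intro A hA
    rcases hmemnew A hA with h1 | h1 | h1
    · exact hyS A h1
    · exact hyT A h1
    · exact hPy A h1
  constructor
  · intro A hA
    rcases hmemnew A hA with h1 | h1 | h1
    · exact hok A (holdmem A (Or.inl h1))
    · exact hok A (holdmem A (Or.inr h1))
    · exact hPok A h1
  · intro A hA v hv
    have hvy : v ≠ y := fun h' => hynew A hA (h' ▸ hv)
    have hvH : v ∈ H.verts := by
      rcases hmemnew A hA with h1 | h1 | h1
      · exact hvsub A (holdmem A (Or.inl h1)) hv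
      · exact hvsub A (holdmem A (Or.inr h1)) hv
      · exact hvsub B hBmem (hPsub A h1 hv)
    exact Finset.mem_erase.mpr ⟨hvy, hvH⟩
  · intro A hA e he
    have hsv : e ⊆ A.verts := by
      obtain ⟨i, hi, hfi⟩ := Arc.mem_edges.mp he
      exact hfi ▸ Arc.edge_sub_verts hi
    have heH : e ∈ H.edges := by
      rcases hmemnew A hA with h1 | h1 | h1
      · exact hesub A (holdmem A (Or.inl h1)) he
      · exact hesub A (holdmem A (Or.inr h1)) he
      · exact hesub B hBmem (hPe A h1 e he)
    simp only [minus, Finset.mem_filter]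
    exact ⟨heH, fun hye => hynew A hA (hsv hye)⟩
  · intro e he
    simp only [minus, Finset.mem_filter] at he
    obtain ⟨A, hA, heA⟩ := hcover e he.1
    rcases List.mem_append.mp hA with h1 | h1
    · exact ⟨A, by simp [h1], heA⟩
    · rcases List.mem_cons.mp h1 with h2 | h2
      · subst h2
        obtain ⟨X, hX, heX⟩ := hPcov e heA he.2
        exact ⟨X, by simp [hX], heX⟩
      · exact ⟨A, by simp [h2], heA⟩
  · intro A hA v hv hvm
    rw [minus_marked_eq hy] at hvm
    rcases hmemnew A hA with h1 | h1 | h1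
    · exact hmarksOld A (Or.inl h1) v hv hvm
    · exact hmarksOld A (Or.inr h1) v hv hvm
    · exact hPmark A h1 v hv hvm
  · have hupg : ∀ {A C : Arc V}, y ∉ A.verts →
        (∀ v, v ∈ A.verts → v ∈ C.verts → v ∈ H.marked) →
        (∀ v, v ∈ A.verts → v ∈ C.verts → v ∈ (H.minus y).marked) := by
      intro A C hyA hR v h1 h2
      rw [minus_marked_eq hy]
      exact hR v h1 h2
    rw [List.pairwise_append, List.pairwise_append]
    refine ⟨?_, ⟨?_, ?_, ?_⟩, ?_⟩
    · exact hpwS.imp_of_mem (fun {A C} hA hC hr => hupg (hyS A hA) hr)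
    · exact hPpw.imp_of_mem (fun {A C} hA hC hr => hupg (hPy A hA) hr)
    · exact hpwT.imp_of_mem (fun {A C} hA hC hr => hupg (hyT A hA) hr)
    · intro X hX A hA v hvX hvA
      rw [minus_marked_eq hy]
      exact hBT A hA v (hPsub X hX hvX) hvA
    · intro A hA C hC v hvA hvC
      rw [minus_marked_eq hy]
      rcases List.mem_append.mp hC with h1 | h1
      · exact hcrossS A hA B (by simp) v hvA (hPsub C h1 hvC)
      · exact hcrossS A hA C (by simp [h1]) v hvA hvC

/-- Left piece of an arc broken at edge positions `a ≤ b` (where `y` lives). -/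
theorem left_piece {B : Arc V} (hokB : B.Ok) {H : MarkedHypergraph V} {y : V}
    {a b : ℕ} (ha : 1 ≤ a) (hab : a ≤ b) (hb : b < B.len)
    (hclean : ∀ k, k < B.len → y ∈ B.f k → k = a ∨ k = b)
    (hBm : ∀ v ∈ B.verts, v ∈ H.marked → v = B.p ∨ v = B.q) :
    ∃ X : Arc V, X.Ok ∧ X.verts ⊆ B.verts ∧ y ∉ X.verts ∧
      (∀ e ∈ X.edges, e ∈ B.edges) ∧
      (∀ k, k < a → B.f k ∈ X.edges) ∧
      (∀ v ∈ X.verts, v ∈ H.marked → v = X.p ∨ v = X.q) ∧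
      ¬ Nunch X H.marked ∧
      (∀ v ∈ X.verts, ∃ k, k ≤ a - 1 ∧ v ∈ B.f k) := by
  have hcard : ((B.f (a-1)) ∩ (if 2 ≤ a then B.f (a-2) else ∅)).card ≤ 1 := by
    by_cases h2 : 2 ≤ a
    · rw [if_pos h2, Finset.inter_comm]
      have hc := hokB.consec (a-2) (by omega)
      have he : a - 2 + 1 = a - 1 := by omega
      rw [he] at hc
      omega
    · rw [if_neg h2]; simp
  obtain ⟨q', hq'⟩ := pick3' (v := B.p) (hokB.card3 (a-1) (by omega)) hcard
  rw [Finset.mem_sdiff, Finset.mem_union, Finset.mem_singleton] at hq'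
  push_neg at hq'
  obtain ⟨hq1, hq2, hq3⟩ := hq'
  set X := B.sub 0 (a-1) B.p q' with hX
  have hXv : ∀ v ∈ X.verts, ∃ k, k ≤ a - 1 ∧ v ∈ B.f k := by
    intro v hv
    obtain ⟨j, _, hj2, hj3⟩ := Arc.mem_sub_verts.mp hv
    exact ⟨j, hj2, hj3⟩
  have hXsub : X.verts ⊆ B.verts := by
    intro v hv
    obtain ⟨k, hk, hvk⟩ := hXv v hv
    exact Arc.mem_verts.mpr ⟨k, by omega, hvk⟩
  have hXy : y ∉ X.verts := by
    intro hv
    obtain ⟨k, hk, hvk⟩ := hXv y hv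
    rcases hclean k (by omega) hvk with rfl | rfl <;> omega
  have hq'X : q' ∈ X.verts := Arc.mem_sub_verts.mpr ⟨a-1, by omega, le_refl _, hq1⟩
  have hnq : ∀ v ∈ X.verts, v ∈ H.marked → v = B.p ∨ v = B.q := fun v hv hm =>
    hBm v (hXsub hv) hm
  have hqB : ∀ v ∈ X.verts, v ≠ B.q := by
    intro v hv hvq
    obtain ⟨k, hk, hvk⟩ := hXv v hv
    exact hokB.qnot k (by omega) (hvq ▸ hvk)
  refine ⟨X, ?_, hXsub, hXy, ?_, ?_, ?_, ?_, hXv⟩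
  · refine Arc.sub_ok hokB (by omega) (by omega) hokB.pmem hq1 (fun h => hq3 h.symm) ?_ ?_
    · intro h0
      exact fun hmem => hokB.pnot 1 (le_refl _) (by omega) (by simpa using hmem)
    · intro h0
      rw [if_pos (show 2 ≤ a by omega)] at hq2
      have he2 : a - 1 - 1 = a - 2 := by omega
      rw [he2]
      exact hq2
  · intro e he
    obtain ⟨j, _, hj2, hj3⟩ := Arc.mem_sub_edges.mp he
    exact Arc.mem_edges.mpr ⟨j, by omega, hj3⟩
  · intro k hk
    exact Arc.mem_sub_edges.mpr ⟨k, by omega, by omega, rfl⟩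
  · intro v hv hm
    rcases hnq v hv hm with h1 | h1
    · exact Or.inl h1
    · exact absurd h1 (hqB v hv)
  · rintro ⟨-, hq⟩
    have : q' = B.p ∨ q' = B.q := hnq q' hq'X hq
    rcases this with h1 | h1
    · exact hq3 h1
    · exact hqB q' hq'X h1

/-- Right piece of an arc broken at edge positions `a ≤ b`. -/
theorem right_piece {B : Arc V} (hokB : B.Ok) {H : MarkedHypergraph V} {y : V}
    {a b : ℕ} (hab : a ≤ b) (hb : b + 2 ≤ B.len)
    (hclean : ∀ k, k < B.len → y ∈ B.f k → k = a ∨ k = b)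
    (hBm : ∀ v ∈ B.verts, v ∈ H.marked → v = B.p ∨ v = B.q) :
    ∃ X : Arc V, X.Ok ∧ X.verts ⊆ B.verts ∧ y ∉ X.verts ∧
      (∀ e ∈ X.edges, e ∈ B.edges) ∧
      (∀ k, b < k → k < B.len → B.f k ∈ X.edges) ∧
      (∀ v ∈ X.verts, v ∈ H.marked → v = X.p ∨ v = X.q) ∧
      ¬ Nunch X H.marked ∧
      (∀ v ∈ X.verts, ∃ k, b + 1 ≤ k ∧ k < B.len ∧ v ∈ B.f k) := by
  have hcard : ((B.f (b+1)) ∩ (if b + 2 ≤ B.len - 1 then B.f (b+2) else ∅)).card ≤ 1 := by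
    by_cases h2 : b + 2 ≤ B.len - 1
    · rw [if_pos h2]
      have hc := hokB.consec (b+1) (by omega)
      rw [show b + 1 + 1 = b + 2 from by omega] at hc
      omega
    · rw [if_neg h2]; simp
  obtain ⟨p', hp'⟩ := pick3' (v := B.q) (hokB.card3 (b+1) (by omega)) hcard
  rw [Finset.mem_sdiff, Finset.mem_union, Finset.mem_singleton] at hp'
  push_neg at hp'
  obtain ⟨hp1, hp2, hp3⟩ := hp'
  set X := B.sub (b+1) (B.len - 1) p' B.q with hX
  have hXv : ∀ v ∈ X.verts, ∃ k, b + 1 ≤ k ∧ k < B.len ∧ v ∈ B.f k := by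
    intro v hv
    obtain ⟨j, hj1, hj2, hj3⟩ := Arc.mem_sub_verts.mp hv
    exact ⟨j, hj1, by omega, hj3⟩
  have hXsub : X.verts ⊆ B.verts := by
    intro v hv
    obtain ⟨k, hk1, hk2, hvk⟩ := hXv v hv
    exact Arc.mem_verts.mpr ⟨k, hk2, hvk⟩
  have hXy : y ∉ X.verts := by
    intro hv
    obtain ⟨k, hk1, hk2, hvk⟩ := hXv y hv
    rcases hclean k hk2 hvk with rfl | rfl <;> omega
  have hp'X : p' ∈ X.verts := Arc.mem_sub_verts.mpr ⟨b+1, le_refl _, by omega, hp1⟩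
  have hnq : ∀ v ∈ X.verts, v ∈ H.marked → v = B.p ∨ v = B.q := fun v hv hm =>
    hBm v (hXsub hv) hm
  have hpB : ∀ v ∈ X.verts, v ≠ B.p := by
    intro v hv hvp
    obtain ⟨k, hk1, hk2, hvk⟩ := hXv v hv
    exact hokB.pnot k (by omega) hk2 (hvp ▸ hvk)
  refine ⟨X, ?_, hXsub, hXy, ?_, ?_, ?_, ?_, hXv⟩
  · refine Arc.sub_ok hokB (by omega) (by omega) hp1 hokB.qmem hp3 ?_ ?_
    · intro h0 hmem
      rw [if_pos (show b + 2 ≤ B.len - 1 by omega)] at hp2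
      exact hp2 hmem
    · intro h0 hmem
      exact hokB.qnot (B.len - 1 - 1) (by omega) hmem
  · intro e he
    obtain ⟨j, hj1, hj2, hj3⟩ := Arc.mem_sub_edges.mp he
    exact Arc.mem_edges.mpr ⟨j, by omega, hj3⟩
  · intro k hk1 hk2
    exact Arc.mem_sub_edges.mpr ⟨k, by omega, by omega, rfl⟩
  · intro v hv hm
    rcases hnq v hv hm with h1 | h1
    · exact absurd h1 (hpB v hv)
    · exact Or.inr h1
  · rintro ⟨hp, -⟩
    have : p' = B.p ∨ p' = B.q := hnq p' hp'X hp
    rcases this with h1 | h1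
    · exact hpB p' hp'X h1
    · exact hp3 h1

theorem strSys_replace {S T : List (Arc V)} {B : Arc V} {H : MarkedHypergraph V}
    (h : StrSys (S ++ B :: T) H) {y : V} (hy : y ∉ H.marked) (hyB : y ∈ B.verts)
    (P : List (Arc V))
    (hPok : ∀ X ∈ P, X.Ok)
    (hPsub : ∀ X ∈ P, X.verts ⊆ B.verts)
    (hPy : ∀ X ∈ P, y ∉ X.verts)
    (hPe : ∀ X ∈ P, ∀ e ∈ X.edges, e ∈ B.edges)
    (hPcov : ∀ e ∈ B.edges, y ∉ e → ∃ X ∈ P, e ∈ X.edges)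
    (hPmark : ∀ X ∈ P, ∀ v ∈ X.verts, v ∈ H.marked → v = X.p ∨ v = X.q)
    (hPpw : List.Pairwise (fun X Y => ∀ v, v ∈ X.verts → v ∈ Y.verts → v ∈ H.marked) P) :
    StrSys (S ++ (P ++ T)) (H.minus y) := by
  refine strSys_replace' h.ok h.vsub h.esub h.cover ?_ h.pw hy hyB
    P hPok hPsub hPy hPe hPcov hPmark hPpw
  rintro A (h1 | h1)
  · exact h.marks A (List.mem_append.mpr (Or.inl h1))
  · exact h.marks A (List.mem_append.mpr (Or.inr (List.mem_cons.mpr (Or.inr h1))))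

theorem strSys_replace_plus {S T : List (Arc V)} {B : Arc V} {H : MarkedHypergraph V}
    (h : StrSys (S ++ B :: T) H) {x : V} (hxm : x ∉ H.marked) (hxB : x ∈ B.verts)
    {y : V} (hy : y ∉ insert x H.marked) (hyB : y ∈ B.verts)
    (P : List (Arc V))
    (hPok : ∀ X ∈ P, X.Ok)
    (hPsub : ∀ X ∈ P, X.verts ⊆ B.verts)
    (hPy : ∀ X ∈ P, y ∉ X.verts)
    (hPe : ∀ X ∈ P, ∀ e ∈ X.edges, e ∈ B.edges)
    (hPcov : ∀ e ∈ B.edges, y ∉ e → ∃ X ∈ P, e ∈ X.edges)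
    (hPmark : ∀ X ∈ P, ∀ v ∈ X.verts, v ∈ insert x H.marked → v = X.p ∨ v = X.q)
    (hPpw : List.Pairwise
      (fun X Y => ∀ v, v ∈ X.verts → v ∈ Y.verts → v ∈ insert x H.marked) P) :
    StrSys (S ++ (P ++ T)) ((H.plus x).minus y) := by
  obtain ⟨hpwS, hpwBT, hcrossS⟩ := List.pairwise_append.mp h.pw
  obtain ⟨hBT, hpwT⟩ := List.pairwise_cons.mp hpwBT
  refine strSys_replace' (H := H.plus x) h.ok h.vsub h.esub h.cover ?_ ?_ hy hyB
    P hPok hPsub hPy hPe hPcov hPmark hPpw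
  · rintro A hmem v hv hvm
    rcases Finset.mem_insert.mp hvm with rfl | hvm'
    · exfalso
      apply hxm
      rcases hmem with h1 | h1
      · exact hcrossS A h1 B (by simp) v hv hxB
      · exact hBT A h1 v hxB hv
    · rcases hmem with h1 | h1
      · exact h.marks A (List.mem_append.mpr (Or.inl h1)) v hv hvm'
      · exact h.marks A (List.mem_append.mpr (Or.inr (List.mem_cons.mpr (Or.inr h1)))) v hv hvm'
  · refine h.pw.imp (fun {A C} hr v h1 h2 => ?_)
    exact Finset.mem_insert_of_mem (hr v h1 h2)

end MB
namespace MB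
open MarkedHypergraph

variable {V : Type} [DecidableEq V]

theorem strSys_other_not_mem {S T : List (Arc V)} {B : Arc V} {H : MarkedHypergraph V}
    (h : StrSys (S ++ B :: T) H) {y : V} (hy : y ∉ H.marked) (hyB : y ∈ B.verts) :
    ∀ A, A ∈ S ∨ A ∈ T → y ∉ A.verts := by
  obtain ⟨hpwS, hpwBT, hcrossS⟩ := List.pairwise_append.mp h.pw
  obtain ⟨hBT, hpwT⟩ := List.pairwise_cons.mp hpwBT
  rintro A (h1 | h1) hyA
  · exact hy (hcrossS A h1 B (by simp) y hyA hyB)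
  · exact hy (hBT A h1 y hyB hyA)

theorem del_core {S T : List (Arc V)} {B : Arc V} {H : MarkedHypergraph V}
    (h : StrSys (S ++ B :: T) H) {y : V} (hy : y ∉ H.marked) (hyB : y ∈ B.verts)
    {a b : ℕ} (hab : a ≤ b) (hba : b ≤ a + 1) (hblen : b < B.len)
    (hya : y ∈ B.f a) (hyb : y ∈ B.f b)
    (hclean : ∀ k, k < B.len → y ∈ B.f k → k = a ∨ k = b) :
    ∃ AS', StrSys AS' (H.minus y) ∧
      ∀ B' ∈ AS', Nunch B' (H.minus y).marked →
        B' ∈ (S ++ B :: T) ∧ y ∉ B'.verts ∧ Nunch B' H.marked := by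
  have hokB := h.ok B (by simp)
  have hBm := h.marks B (by simp)
  have hold := strSys_other_not_mem h hy hyB
  have holdmem : ∀ A : Arc V, A ∈ S ∨ A ∈ T → A ∈ S ++ B :: T := by
    rintro A (h1 | h1)
    · exact List.mem_append.mpr (Or.inl h1)
    · exact List.mem_append.mpr (Or.inr (List.mem_cons.mpr (Or.inr h1)))
  have hkcov : ∀ k, k < B.len → y ∉ B.f k → k < a ∨ b < k := by
    intro k hk hyk
    have h1 : k ≠ a := fun h => hyk (h ▸ hya)
    have h2 : k ≠ b := fun h => hyk (h ▸ hyb)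
    omega
  by_cases hL : 1 ≤ a <;> by_cases hR : b + 2 ≤ B.len
  · -- both pieces
    obtain ⟨XL, okL, subL, yL, eL, covL, mkL, nuL, chL⟩ :=
      left_piece hokB hL hab hblen hclean hBm
    obtain ⟨XR, okR, subR, yR, eR, covR, mkR, nuR, chR⟩ :=
      right_piece hokB hab hR hclean hBm
    refine ⟨S ++ ([XL, XR] ++ T), strSys_replace h hy hyB [XL, XR] ?_ ?_ ?_ ?_ ?_ ?_ ?_, ?_⟩
    · intro X hX
      simp only [List.mem_cons, List.not_mem_nil, or_false] at hX
      rcases hX with rfl | rfl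
      · exact okL
      · exact okR
    · intro X hX
      simp only [List.mem_cons, List.not_mem_nil, or_false] at hX
      rcases hX with rfl | rfl
      · exact subL
      · exact subR
    · intro X hX
      simp only [List.mem_cons, List.not_mem_nil, or_false] at hX
      rcases hX with rfl | rfl
      · exact yL
      · exact yR
    · intro X hX
      simp only [List.mem_cons, List.not_mem_nil, or_false] at hX
      rcases hX with rfl | rfl
      · exact eL
      · exact eR
    · intro e he hye
      obtain ⟨k, hk, hfk⟩ := Arc.mem_edges.mp he
      rcases hkcov k hk (fun hmem => hye (hfk ▸ hmem)) with h1 | h1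
      · exact ⟨XL, by simp, hfk ▸ covL k h1⟩
      · exact ⟨XR, by simp, hfk ▸ covR k h1 hk⟩
    · intro X hX
      simp only [List.mem_cons, List.not_mem_nil, or_false] at hX
      rcases hX with rfl | rfl
      · exact mkL
      · exact mkR
    · refine List.Pairwise.cons ?_ (List.pairwise_singleton _ _)
      intro Y hY
      simp only [List.mem_singleton] at hY
      subst hY
      intro v h1 h2
      exfalso
      obtain ⟨k, hk, hvk⟩ := chL v h1
      obtain ⟨l, hl1, hl2, hvl⟩ := chR v h2
      have : v ∈ B.f k ∩ B.f l := Finset.mem_inter.mpr ⟨hvk, hvl⟩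
      rw [hokB.far k l (by omega) hl2] at this
      exact absurd this (Finset.notMem_empty v)
    · intro B' hB' hN
      rw [minus_marked_eq hy] at hN
      have : B' ∈ S ∨ B' ∈ T ∨ B' ∈ [XL, XR] := by
        rcases List.mem_append.mp hB' with h1 | h1
        · exact Or.inl h1
        · rcases List.mem_append.mp h1 with h2 | h2
          · exact Or.inr (Or.inr h2)
          · exact Or.inr (Or.inl h2)
      rcases this with h1 | h1 | h1
      · exact ⟨holdmem B' (Or.inl h1), hold B' (Or.inl h1), hN⟩
      · exact ⟨holdmem B' (Or.inr h1), hold B' (Or.inr h1), hN⟩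
      · simp only [List.mem_cons, List.not_mem_nil, or_false] at h1
        rcases h1 with rfl | rfl
        · exact absurd hN nuL
        · exact absurd hN nuR
  · -- only left piece
    obtain ⟨XL, okL, subL, yL, eL, covL, mkL, nuL, chL⟩ :=
      left_piece hokB hL hab hblen hclean hBm
    refine ⟨S ++ ([XL] ++ T), strSys_replace h hy hyB [XL] ?_ ?_ ?_ ?_ ?_ ?_ ?_, ?_⟩
    · intro X hX
      simp only [List.mem_singleton] at hX
      exact hX ▸ okL
    · intro X hX
      simp only [List.mem_singleton] at hX
      exact hX ▸ subL
    · intro X hX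
      simp only [List.mem_singleton] at hX
      exact hX ▸ yL
    · intro X hX
      simp only [List.mem_singleton] at hX
      exact hX ▸ eL
    · intro e he hye
      obtain ⟨k, hk, hfk⟩ := Arc.mem_edges.mp he
      rcases hkcov k hk (fun hmem => hye (hfk ▸ hmem)) with h1 | h1
      · exact ⟨XL, by simp, hfk ▸ covL k h1⟩
      · omega
    · intro X hX
      simp only [List.mem_singleton] at hX
      exact hX ▸ mkL
    · exact List.pairwise_singleton _ _
    · intro B' hB' hN
      rw [minus_marked_eq hy] at hN
      have : B' ∈ S ∨ B' ∈ T ∨ B' = XL := by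
        rcases List.mem_append.mp hB' with h1 | h1
        · exact Or.inl h1
        · rcases List.mem_append.mp h1 with h2 | h2
          · simp only [List.mem_singleton] at h2
            exact Or.inr (Or.inr h2)
          · exact Or.inr (Or.inl h2)
      rcases this with h1 | h1 | rfl
      · exact ⟨holdmem B' (Or.inl h1), hold B' (Or.inl h1), hN⟩
      · exact ⟨holdmem B' (Or.inr h1), hold B' (Or.inr h1), hN⟩
      · exact absurd hN nuL
  · -- only right piece
    obtain ⟨XR, okR, subR, yR, eR, covR, mkR, nuR, chR⟩ :=
      right_piece hokB hab hR hclean hBm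
    refine ⟨S ++ ([XR] ++ T), strSys_replace h hy hyB [XR] ?_ ?_ ?_ ?_ ?_ ?_ ?_, ?_⟩
    · intro X hX
      simp only [List.mem_singleton] at hX
      exact hX ▸ okR
    · intro X hX
      simp only [List.mem_singleton] at hX
      exact hX ▸ subR
    · intro X hX
      simp only [List.mem_singleton] at hX
      exact hX ▸ yR
    · intro X hX
      simp only [List.mem_singleton] at hX
      exact hX ▸ eR
    · intro e he hye
      obtain ⟨k, hk, hfk⟩ := Arc.mem_edges.mp he
      rcases hkcov k hk (fun hmem => hye (hfk ▸ hmem)) with h1 | h1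
      · omega
      · exact ⟨XR, by simp, hfk ▸ covR k h1 hk⟩
    · intro X hX
      simp only [List.mem_singleton] at hX
      exact hX ▸ mkR
    · exact List.pairwise_singleton _ _
    · intro B' hB' hN
      rw [minus_marked_eq hy] at hN
      have : B' ∈ S ∨ B' ∈ T ∨ B' = XR := by
        rcases List.mem_append.mp hB' with h1 | h1
        · exact Or.inl h1
        · rcases List.mem_append.mp h1 with h2 | h2
          · simp only [List.mem_singleton] at h2
            exact Or.inr (Or.inr h2)
          · exact Or.inr (Or.inl h2)
      rcases this with h1 | h1 | rfl
      · exact ⟨holdmem B' (Or.inl h1), hold B' (Or.inl h1), hN⟩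
      · exact ⟨holdmem B' (Or.inr h1), hold B' (Or.inr h1), hN⟩
      · exact absurd hN nuR
  · -- no pieces
    refine ⟨S ++ ([] ++ T), strSys_replace h hy hyB [] ?_ ?_ ?_ ?_ ?_ ?_ ?_, ?_⟩
    · intro X hX; exact absurd hX (List.not_mem_nil (a := X))
    · intro X hX; exact absurd hX (List.not_mem_nil (a := X))
    · intro X hX; exact absurd hX (List.not_mem_nil (a := X))
    · intro X hX; exact absurd hX (List.not_mem_nil (a := X))
    · intro e he hye
      obtain ⟨k, hk, hfk⟩ := Arc.mem_edges.mp he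
      rcases hkcov k hk (fun hmem => hye (hfk ▸ hmem)) with h1 | h1 <;> omega
    · intro X hX; exact absurd hX (List.not_mem_nil (a := X))
    · exact List.Pairwise.nil
    · intro B' hB' hN
      rw [minus_marked_eq hy] at hN
      have : B' ∈ S ∨ B' ∈ T := by
        rcases List.mem_append.mp hB' with h1 | h1
        · exact Or.inl h1
        · rcases List.mem_append.mp h1 with h2 | h2
          · exact absurd h2 (List.not_mem_nil (a := B'))
          · exact Or.inr h2
      exact ⟨holdmem B' this, hold B' this, hN⟩

theorem strSys_del {AS : List (Arc V)} {H : MarkedHypergraph V} (h : StrSys AS H)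
    {y : V} (hy : y ∉ H.marked) :
    ∃ AS', StrSys AS' (H.minus y) ∧
      ∀ B' ∈ AS', Nunch B' (H.minus y).marked →
        B' ∈ AS ∧ y ∉ B'.verts ∧ Nunch B' H.marked := by
  by_cases hyin : ∃ B ∈ AS, y ∈ B.verts
  · obtain ⟨B, hB, hyB⟩ := hyin
    obtain ⟨S, T, rfl⟩ := List.append_of_mem hB
    have hokB := h.ok B (by simp)
    rcases Arc.locate hokB hyB with ⟨i, hi1, hyi, hyi1⟩ | ⟨i, hi, hyi, huniq⟩
    · -- junction
      have hclean : ∀ k, k < B.len → y ∈ B.f k → k = i ∨ k = i + 1 := by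
        intro k hk hyk
        by_contra hkk
        push_neg at hkk
        rcases lt_trichotomy k i with h1 | h1 | h1
        · have h2 := hokB.adj h1 (by omega) hyk hyi
          have : y ∈ B.f k ∩ B.f (i+1) := Finset.mem_inter.mpr ⟨hyk, hyi1⟩
          rw [hokB.far k (i+1) (by omega) hi1] at this
          exact absurd this (Finset.notMem_empty y)
        · exact hkk.1 h1
        · have h1' : i + 1 < k := by omega
          have h2 := hokB.adj h1' hk hyi1 hyk
          have : y ∈ B.f i ∩ B.f k := Finset.mem_inter.mpr ⟨hyi, hyk⟩
          rw [hokB.far i k (by omega) hk] at this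
          exact absurd this (Finset.notMem_empty y)
      exact del_core h hy hyB (by omega) (by omega) hi1 hyi hyi1 hclean
    · -- single edge
      have hclean : ∀ k, k < B.len → y ∈ B.f k → k = i ∨ k = i := by
        intro k hk hyk
        exact Or.inl (huniq k hk hyk)
      exact del_core h hy hyB (le_refl i) (by omega) hi hyi hyi hclean
  · push_neg at hyin
    refine ⟨AS, ?_, ?_⟩
    · constructor
      · exact h.ok
      · intro A hA v hv
        exact Finset.mem_erase.mpr ⟨fun h' => hyin A hA (h' ▸ hv), h.vsub A hA hv⟩
      · intro A hA e he
        have hsv : e ⊆ A.verts := by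
          obtain ⟨j, hj, hfj⟩ := Arc.mem_edges.mp he
          exact hfj ▸ Arc.edge_sub_verts hj
        simp only [minus, Finset.mem_filter]
        exact ⟨h.esub A hA he, fun hye => hyin A hA (hsv hye)⟩
      · intro e he
        simp only [minus, Finset.mem_filter] at he
        exact h.cover e he.1
      · intro A hA v hv hvm
        rw [minus_marked_eq hy] at hvm
        exact h.marks A hA v hv hvm
      · refine h.pw.imp_of_mem (fun {A C} hA hC hr => ?_)
        intro v h1 h2
        rw [minus_marked_eq hy]
        exact hr v h1 h2
    · intro B' hB' hN
      rw [minus_marked_eq hy] at hN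
      exact ⟨hB', hyin B' hB', hN⟩

end MB
namespace MB
open MarkedHypergraph

variable {V : Type} [DecidableEq V]

theorem strSys_plus {AS : List (Arc V)} {H : MarkedHypergraph V} (h : StrSys AS H) {x : V}
    (hx : ∀ A ∈ AS, x ∈ A.verts → x = A.p ∨ x = A.q) : StrSys AS (H.plus x) := by
  constructor
  · exact h.ok
  · exact h.vsub
  · exact h.esub
  · exact h.cover
  · intro A hA v hv hvm
    rcases Finset.mem_insert.mp hvm with rfl | hvm'
    · exact hx A hA hv
    · exact h.marks A hA v hv hvm'
  · exact h.pw.imp (fun {A C} hr v h1 h2 => Finset.mem_insert_of_mem (hr v h1 h2))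

theorem kill_pick {A : Arc V} (hA : A.Ok) : ∃ y, y ∈ A.verts ∧ y ≠ A.p ∧ y ≠ A.q := by
  by_cases h1 : A.len = 1
  · have hle : (A.f 0 ∩ {A.p, A.q}).card ≤ 2 :=
      le_trans (Finset.card_le_card Finset.inter_subset_right)
        (le_trans (Finset.card_insert_le _ _) (by simp))
    obtain ⟨y, hy⟩ := pick3 (hA.card3 0 (by have := hA.pos; omega)) hle
    rw [Finset.mem_sdiff, Finset.mem_insert, Finset.mem_singleton] at hy
    push_neg at hy
    exact ⟨y, Arc.mem_verts.mpr ⟨0, by have := hA.pos; omega, hy.1⟩, hy.2.1, hy.2.2⟩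
  · have hl2 : 2 ≤ A.len := by have := hA.pos; omega
    have hc : (A.f 0 ∩ A.f 1).card ≤ 1 := le_of_eq (hA.consec 0 (by omega))
    obtain ⟨y, hy⟩ := pick3' (v := A.p) (hA.card3 0 (by omega)) hc
    rw [Finset.mem_sdiff, Finset.mem_union, Finset.mem_singleton] at hy
    push_neg at hy
    refine ⟨y, Arc.mem_verts.mpr ⟨0, by omega, hy.1⟩, hy.2.2, ?_⟩
    intro h
    exact hA.qnot 0 (by omega) (h ▸ hy.1)

theorem strSys_rev {S T : List (Arc V)} {B : Arc V} {H : MarkedHypergraph V}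
    (h : StrSys (S ++ B :: T) H) : StrSys (S ++ B.rev :: T) H := by
  have hokB := h.ok B (by simp)
  have hmem : ∀ A ∈ S ++ B.rev :: T, A ∈ S ∨ A = B.rev ∨ A ∈ T := by
    intro A hA
    rcases List.mem_append.mp hA with h1 | h1
    · exact Or.inl h1
    · rcases List.mem_cons.mp h1 with h2 | h2
      · exact Or.inr (Or.inl h2)
      · exact Or.inr (Or.inr h2)
  have holdmem : ∀ A : Arc V, A ∈ S ∨ A ∈ T → A ∈ S ++ B :: T := by
    rintro A (h1 | h1)
    · exact List.mem_append.mpr (Or.inl h1)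
    · exact List.mem_append.mpr (Or.inr (List.mem_cons.mpr (Or.inr h1)))
  obtain ⟨hpwS, hpwBT, hcrossS⟩ := List.pairwise_append.mp h.pw
  obtain ⟨hBT, hpwT⟩ := List.pairwise_cons.mp hpwBT
  constructor
  · intro A hA
    rcases hmem A hA with h1 | rfl | h1
    · exact h.ok A (holdmem A (Or.inl h1))
    · exact Arc.rev_ok hokB
    · exact h.ok A (holdmem A (Or.inr h1))
  · intro A hA
    rcases hmem A hA with h1 | rfl | h1
    · exact h.vsub A (holdmem A (Or.inl h1))
    · rw [Arc.rev_verts]; exact h.vsub B (by simp)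
    · exact h.vsub A (holdmem A (Or.inr h1))
  · intro A hA
    rcases hmem A hA with h1 | rfl | h1
    · exact h.esub A (holdmem A (Or.inl h1))
    · rw [Arc.rev_edges]; exact h.esub B (by simp)
    · exact h.esub A (holdmem A (Or.inr h1))
  · intro e he
    obtain ⟨A, hA, heA⟩ := h.cover e he
    rcases List.mem_append.mp hA with h1 | h1
    · exact ⟨A, by simp [h1], heA⟩
    · rcases List.mem_cons.mp h1 with h2 | h2
      · subst h2
        exact ⟨A.rev, by simp, by rw [Arc.rev_edges]; exact heA⟩
      · exact ⟨A, by simp [h2], heA⟩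
  · intro A hA v hv hvm
    rcases hmem A hA with h1 | rfl | h1
    · exact h.marks A (holdmem A (Or.inl h1)) v hv hvm
    · rw [Arc.rev_verts] at hv
      rcases h.marks B (by simp) v hv hvm with h2 | h2
      · exact Or.inr h2
      · exact Or.inl h2
    · exact h.marks A (holdmem A (Or.inr h1)) v hv hvm
  · rw [List.pairwise_append, List.pairwise_cons]
    refine ⟨hpwS, ⟨?_, hpwT⟩, ?_⟩
    · intro A hA v hv1 hv2
      rw [Arc.rev_verts] at hv1
      exact hBT A hA v hv1 hv2
    · intro A hA C hC v hv1 hv2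
      rcases List.mem_cons.mp hC with h2 | h2
      · subst h2
        rw [Arc.rev_verts] at hv2
        exact hcrossS A hA B (by simp) v hv1 hv2
      · exact hcrossS A hA C (by simp [h2]) v hv1 hv2

theorem strSys_split {S T : List (Arc V)} {B : Arc V} {H : MarkedHypergraph V}
    (h : StrSys (S ++ B :: T) H) {x : V} (hxm : x ∉ H.marked)
    {i : ℕ} (hi : i + 1 < B.len) (hx1 : x ∈ B.f i) (hx2 : x ∈ B.f (i + 1)) :
    StrSys (S ++ (B.sub 0 i B.p x) :: (B.sub (i + 1) (B.len - 1) x B.q) :: T) (H.plus x) := by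
  have hokB := h.ok B (by simp)
  have hBm := h.marks B (by simp)
  obtain ⟨hpwS, hpwBT, hcrossS⟩ := List.pairwise_append.mp h.pw
  obtain ⟨hBT, hpwT⟩ := List.pairwise_cons.mp hpwBT
  set A1 := B.sub 0 i B.p x with hA1
  set A2 := B.sub (i + 1) (B.len - 1) x B.q with hA2
  have hpx : B.p ≠ x := by
    intro heq
    exact hokB.pnot (i + 1) (by omega) hi (heq ▸ hx2)
  have hqx : x ≠ B.q := by
    intro heq
    exact hokB.qnot i hi (heq ▸ hx1)
  have okA1 : A1.Ok := by
    refine Arc.sub_ok hokB (Nat.zero_le i) (by omega) hokB.pmem hx1 hpx ?_ ?_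
    · intro h0
      exact hokB.pnot 1 (le_refl _) (by omega)
    · intro h0 hmem
      have : x ∈ B.f (i - 1) ∩ B.f (i + 1) := Finset.mem_inter.mpr ⟨hmem, hx2⟩
      rw [hokB.far (i - 1) (i + 1) (by omega) hi] at this
      exact absurd this (Finset.notMem_empty x)
  have okA2 : A2.Ok := by
    refine Arc.sub_ok hokB (by omega) (by omega) hx2 hokB.qmem hqx ?_ ?_
    · intro h0 hmem
      have : x ∈ B.f i ∩ B.f (i + 1 + 1) := Finset.mem_inter.mpr ⟨hx1, hmem⟩
      rw [hokB.far i (i + 1 + 1) (by omega) (by omega)] at this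
      exact absurd this (Finset.notMem_empty x)
    · intro h0 hmem
      exact hokB.qnot (B.len - 1 - 1) (by omega) hmem
  have ch1 : ∀ v ∈ A1.verts, ∃ k, k ≤ i ∧ v ∈ B.f k := by
    intro v hv
    obtain ⟨j, _, hj2, hj3⟩ := Arc.mem_sub_verts.mp hv
    exact ⟨j, hj2, hj3⟩
  have ch2 : ∀ v ∈ A2.verts, ∃ k, i + 1 ≤ k ∧ k < B.len ∧ v ∈ B.f k := by
    intro v hv
    obtain ⟨j, hj1, hj2, hj3⟩ := Arc.mem_sub_verts.mp hv
    exact ⟨j, hj1, by omega, hj3⟩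
  have hsub1 : A1.verts ⊆ B.verts := by
    intro v hv
    obtain ⟨k, hk, hvk⟩ := ch1 v hv
    exact Arc.mem_verts.mpr ⟨k, by omega, hvk⟩
  have hsub2 : A2.verts ⊆ B.verts := by
    intro v hv
    obtain ⟨k, hk1, hk2, hvk⟩ := ch2 v hv
    exact Arc.mem_verts.mpr ⟨k, hk2, hvk⟩
  have hmem : ∀ A ∈ S ++ A1 :: A2 :: T, A ∈ S ∨ A = A1 ∨ A = A2 ∨ A ∈ T := by
    intro A hA
    rcases List.mem_append.mp hA with h1 | h1
    · exact Or.inl h1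
    · rcases List.mem_cons.mp h1 with h2 | h2
      · exact Or.inr (Or.inl h2)
      · rcases List.mem_cons.mp h2 with h3 | h3
        · exact Or.inr (Or.inr (Or.inl h3))
        · exact Or.inr (Or.inr (Or.inr h3))
  have holdmem : ∀ A : Arc V, A ∈ S ∨ A ∈ T → A ∈ S ++ B :: T := by
    rintro A (h1 | h1)
    · exact List.mem_append.mpr (Or.inl h1)
    · exact List.mem_append.mpr (Or.inr (List.mem_cons.mpr (Or.inr h1)))
  have hxold : ∀ A : Arc V, A ∈ S ∨ A ∈ T → x ∉ A.verts := by
    rintro A (h1 | h1) hxA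
    · exact hxm (hcrossS A h1 B (by simp) x hxA (Arc.mem_verts.mpr ⟨i, by omega, hx1⟩))
    · exact hxm (hBT A h1 x (Arc.mem_verts.mpr ⟨i, by omega, hx1⟩) hxA)
  constructor
  · intro A hA
    rcases hmem A hA with h1 | rfl | rfl | h1
    · exact h.ok A (holdmem A (Or.inl h1))
    · exact okA1
    · exact okA2
    · exact h.ok A (holdmem A (Or.inr h1))
  · intro A hA
    rcases hmem A hA with h1 | rfl | rfl | h1
    · exact h.vsub A (holdmem A (Or.inl h1))
    · exact subset_trans hsub1 (h.vsub B (by simp))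
    · exact subset_trans hsub2 (h.vsub B (by simp))
    · exact h.vsub A (holdmem A (Or.inr h1))
  · intro A hA e he
    rcases hmem A hA with h1 | rfl | rfl | h1
    · exact h.esub A (holdmem A (Or.inl h1)) he
    · obtain ⟨j, _, hj2, hj3⟩ := Arc.mem_sub_edges.mp he
      exact h.esub B (by simp) (Arc.mem_edges.mpr ⟨j, by omega, hj3⟩)
    · obtain ⟨j, hj1, hj2, hj3⟩ := Arc.mem_sub_edges.mp he
      exact h.esub B (by simp) (Arc.mem_edges.mpr ⟨j, by omega, hj3⟩)
    · exact h.esub A (holdmem A (Or.inr h1)) he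
  · intro e he
    obtain ⟨A, hA, heA⟩ := h.cover e he
    rcases List.mem_append.mp hA with h1 | h1
    · exact ⟨A, by simp [h1], heA⟩
    · rcases List.mem_cons.mp h1 with h2 | h2
      · subst h2
        obtain ⟨k, hk, hfk⟩ := Arc.mem_edges.mp heA
        by_cases hki : k ≤ i
        · exact ⟨A1, by simp, Arc.mem_sub_edges.mpr ⟨k, by omega, hki, hfk⟩⟩
        · exact ⟨A2, by simp, Arc.mem_sub_edges.mpr ⟨k, by omega, by omega, hfk⟩⟩
      · exact ⟨A, by simp [h2], heA⟩
  · intro A hA v hv hvm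
    rcases Finset.mem_insert.mp hvm with rfl | hvm'
    · rcases hmem A hA with h1 | rfl | rfl | h1
      · exact absurd hv (hxold A (Or.inl h1))
      · exact Or.inr rfl
      · exact Or.inl rfl
      · exact absurd hv (hxold A (Or.inr h1))
    · rcases hmem A hA with h1 | rfl | rfl | h1
      · exact h.marks A (holdmem A (Or.inl h1)) v hv hvm'
      · rcases hBm v (hsub1 hv) hvm' with h2 | h2
        · exact Or.inl h2
        · exfalso
          obtain ⟨k, hk, hvk⟩ := ch1 v hv
          exact hokB.qnot k (by omega) (h2 ▸ hvk)
      · rcases hBm v (hsub2 hv) hvm' with h2 | h2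
        · exfalso
          obtain ⟨k, hk1, hk2, hvk⟩ := ch2 v hv
          exact hokB.pnot k (by omega) hk2 (h2 ▸ hvk)
        · exact Or.inr h2
      · exact h.marks A (holdmem A (Or.inr h1)) v hv hvm'
  · have hrel12 : ∀ v, v ∈ A1.verts → v ∈ A2.verts → v ∈ insert x H.marked := by
      intro v h1 h2
      obtain ⟨k, hk, hvk⟩ := ch1 v h1
      obtain ⟨l, hl1, hl2, hvl⟩ := ch2 v h2
      have hlk : l = k + 1 ∧ k = i := by
        by_contra hc
        have : v ∈ B.f k ∩ B.f l := Finset.mem_inter.mpr ⟨hvk, hvl⟩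
        rw [hokB.far k l (by omega) hl2] at this
        exact absurd this (Finset.notMem_empty v)
      have hvk' : v ∈ B.f i := by rw [← hlk.2]; exact hvk
      have hvl' : v ∈ B.f (i + 1) := by
        have h5 : l = i + 1 := by omega
        rw [← h5]; exact hvl
      have hcard := hokB.consec i hi
      have hvx : v = x :=
        Finset.card_le_one.mp (le_of_eq hcard) v (Finset.mem_inter.mpr ⟨hvk', hvl'⟩) x
          (Finset.mem_inter.mpr ⟨hx1, hx2⟩)
      rw [hvx]
      exact Finset.mem_insert_self x _
    rw [List.pairwise_append, List.pairwise_cons, List.pairwise_cons]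
    refine ⟨hpwS.imp (fun {A C} hr v h1 h2 => Finset.mem_insert_of_mem (hr v h1 h2)),
      ⟨?_, ?_, hpwT.imp (fun {A C} hr v h1 h2 => Finset.mem_insert_of_mem (hr v h1 h2))⟩, ?_⟩
    · intro C hC
      rcases List.mem_cons.mp hC with h2 | h2
      · subst h2
        exact hrel12
      · intro v h1' h2'
        exact Finset.mem_insert_of_mem (hBT C h2 v (hsub1 h1') h2')
    · intro C hC v h1' h2'
      exact Finset.mem_insert_of_mem (hBT C hC v (hsub2 h1') h2')
    · intro A hA C hC v h1' h2'
      rcases List.mem_cons.mp hC with h2 | h2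
      · subst h2
        exact Finset.mem_insert_of_mem (hcrossS A hA B (by simp) v h1' (hsub1 h2'))
      · rcases List.mem_cons.mp h2 with h3 | h3
        · subst h3
          exact Finset.mem_insert_of_mem (hcrossS A hA B (by simp) v h1' (hsub2 h2'))
        · exact Finset.mem_insert_of_mem (hcrossS A hA C (by simp [h3]) v h1' h2')

end MB
namespace MB
open MarkedHypergraph

variable {V : Type} [DecidableEq V]

theorem Arc.Ok.p_mem_verts {A : Arc V} (hA : A.Ok) : A.p ∈ A.verts :=
  Arc.mem_verts.mpr ⟨0, by have := hA.pos; omega, hA.pmem⟩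

theorem Arc.Ok.q_mem_verts {A : Arc V} (hA : A.Ok) : A.q ∈ A.verts :=
  Arc.mem_verts.mpr ⟨A.len - 1, by have := hA.pos; omega, hA.qmem⟩

/-- Old arcs that do not contain `x` keep their nunchaku bound after marking `x`. -/
theorem nunch_old_bound {n : ℕ} {S T : List (Arc V)} {A : Arc V} {H : MarkedHypergraph V}
    (hstr : StrSys (S ++ A :: T) H)
    (hlen : ∀ B ∈ S ++ A :: T, Nunch B H.marked → n ≤ B.len)
    {x : V} (hxm : x ∉ H.marked) (hxA : x ∈ A.verts) :
    ∀ B', B' ∈ S ∨ B' ∈ T → Nunch B' (insert x H.marked) → n ≤ B'.len := by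
  rintro B' hB' ⟨hp, hq⟩
  have hxout := strSys_other_not_mem hstr hxm hxA B' hB'
  have hmem : B' ∈ S ++ A :: T := by
    rcases hB' with h1 | h1
    · exact List.mem_append.mpr (Or.inl h1)
    · exact List.mem_append.mpr (Or.inr (List.mem_cons.mpr (Or.inr h1)))
  have hokB' := hstr.ok B' hmem
  have hp' : B'.p ∈ H.marked := by
    rcases Finset.mem_insert.mp hp with rfl | h1
    · exact absurd hokB'.p_mem_verts hxout
    · exact h1
  have hq' : B'.q ∈ H.marked := by
    rcases Finset.mem_insert.mp hq with rfl | h1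
    · exact absurd hokB'.q_mem_verts hxout
    · exact h1
  exact hlen B' hmem ⟨hp', hq'⟩

theorem step_center {n : ℕ} {S T : List (Arc V)} {A : Arc V} {H : MarkedHypergraph V}
    (hstr : StrSys (S ++ A :: T) H)
    (hlen : ∀ B ∈ S ++ A :: T, Nunch B H.marked → n ≤ B.len) (hn : 2 ≤ n)
    {x : V} (hxm : x ∉ H.marked)
    {i : ℕ} (hi : i < A.len) (hx1 : x ∈ A.f i)
    (huniq : ∀ j, j < A.len → x ∈ A.f j → j = i)
    (hxp : x ≠ A.p) (hxq : x ≠ A.q)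
    (hcond : A.q ∈ H.marked → (A.p ∈ H.marked ∧ i + 1 ≤ A.len - i)) :
    ∃ y, y ∈ H.verts ∧ y ∉ insert x H.marked ∧
      ∃ AS', StrSys AS' ((H.plus x).minus y) ∧
        ∀ B' ∈ AS', Nunch B' (insert x H.marked) → (n + 1) / 2 ≤ B'.len := by
  have hokA := hstr.ok A (by simp)
  have hAm := hstr.marks A (by simp)
  have hxA : x ∈ A.verts := Arc.mem_verts.mpr ⟨i, hi, hx1⟩
  have hxout := strSys_other_not_mem hstr hxm hxA
  have hOld := nunch_old_bound hstr hlen hxm hxA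
  have hmem3 : ∀ B' : Arc V, B' ∈ S ++ ([] ++ T) → B' ∈ S ∨ B' ∈ T := by
    intro B' h1
    rcases List.mem_append.mp h1 with h2 | h2
    · exact Or.inl h2
    · simp only [List.nil_append] at h2
      exact Or.inr h2
  by_cases hl1 : A.len = 1
  · -- single-edge arc: delete the endpoint q
    have hi0 : i = 0 := by omega
    subst hi0
    have hqm : A.q ∉ H.marked := by
      intro hq
      obtain ⟨hp, -⟩ := hcond hq
      exact absurd (hlen A (by simp) ⟨hp, hq⟩) (by omega)
    have hyfree : A.q ∉ insert x H.marked := by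
      intro hmem
      rcases Finset.mem_insert.mp hmem with h1 | h1
      · exact hxq h1.symm
      · exact hqm h1
    refine ⟨A.q, hstr.vsub A (by simp) hokA.q_mem_verts, hyfree, S ++ ([] ++ T), ?_, ?_⟩
    · refine strSys_replace_plus hstr hxm hxA hyfree hokA.q_mem_verts []
        (by simp) (by simp) (by simp) (by simp) ?_ (by simp) List.Pairwise.nil
      intro e he hye
      obtain ⟨k, hk, hfk⟩ := Arc.mem_edges.mp he
      exfalso
      have hk0 : k = 0 := by omega
      apply hye
      rw [← hfk, hk0]
      have := hokA.qmem
      rw [hl1] at this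
      exact this
    · intro B' hB' hN
      have := hOld B' (hmem3 B' hB') hN
      omega
  · have hl2 : 2 ≤ A.len := by have := hokA.pos; omega
    by_cases hi0 : i = 0
    · -- center of the first edge: delete the junction between edges 0 and 1
      subst hi0
      have hne : (A.f 0 ∩ A.f 1).Nonempty := by
        rw [← Finset.card_pos, hokA.consec 0 (by omega)]
        omega
      obtain ⟨y, hy⟩ := hne
      rw [Finset.mem_inter] at hy
      have hyA : y ∈ A.verts := Arc.mem_verts.mpr ⟨0, by omega, hy.1⟩
      have hyx : y ≠ x := by
        intro h
        have := huniq 1 (by omega) (h ▸ hy.2)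
        omega
      have hym : y ∉ H.marked := by
        intro hm
        rcases hAm y hyA hm with h1 | h1
        · exact hokA.pnot 1 (le_refl _) (by omega) (h1 ▸ hy.2)
        · exact hokA.qnot 0 (by omega) (h1 ▸ hy.1)
      have hyfree : y ∉ insert x H.marked := by
        intro hmem
        rcases Finset.mem_insert.mp hmem with h1 | h1
        · exact hyx h1
        · exact hym h1
      have hclean : ∀ k, k < A.len → y ∈ A.f k → k = 0 ∨ k = 1 := by
        intro k hk hyk
        by_contra hc
        push_neg at hc
        have : y ∈ A.f 0 ∩ A.f k := Finset.mem_inter.mpr ⟨hy.1, hyk⟩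
        rw [hokA.far 0 k (by omega) hk] at this
        exact absurd this (Finset.notMem_empty y)
      by_cases hl3 : 3 ≤ A.len
      · obtain ⟨XR, okR, subR, yR, eR, covR, mkR, nuR, chR⟩ :=
          right_piece (a := 0) (b := 1) hokA (by omega) (by omega) hclean hAm
        have hxR : x ∉ XR.verts := by
          intro hmem
          obtain ⟨k, hk1, hk2, hvk⟩ := chR x hmem
          have := huniq k hk2 hvk
          omega
        refine ⟨y, hstr.vsub A (by simp) hyA, hyfree, S ++ ([XR] ++ T), ?_, ?_⟩
        · refine strSys_replace_plus hstr hxm hxA hyfree hyA [XR] ?_ ?_ ?_ ?_ ?_ ?_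
            (List.pairwise_singleton _ _)
          · intro X hX
            simp only [List.mem_singleton] at hX
            exact hX ▸ okR
          · intro X hX
            simp only [List.mem_singleton] at hX
            exact hX ▸ subR
          · intro X hX
            simp only [List.mem_singleton] at hX
            exact hX ▸ yR
          · intro X hX
            simp only [List.mem_singleton] at hX
            exact hX ▸ eR
          · intro e he hye
            obtain ⟨k, hk, hfk⟩ := Arc.mem_edges.mp he
            have hk0 : k ≠ 0 := fun h => hye (by rw [← hfk, h]; exact hy.1)
            have hk1 : k ≠ 1 := fun h => hye (by rw [← hfk, h]; exact hy.2)
            exact ⟨XR, by simp, hfk ▸ covR k (by omega) hk⟩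
          · intro X hX v hv hvm
            simp only [List.mem_singleton] at hX
            subst hX
            rcases Finset.mem_insert.mp hvm with rfl | h1
            · exact absurd hv hxR
            · exact mkR v hv h1
        · intro B' hB' hN
          have : B' ∈ S ∨ B' ∈ T ∨ B' = XR := by
            rcases List.mem_append.mp hB' with h1 | h1
            · exact Or.inl h1
            · rcases List.mem_append.mp h1 with h2 | h2
              · simp only [List.mem_singleton] at h2
                exact Or.inr (Or.inr h2)
              · exact Or.inr (Or.inl h2)
          rcases this with h1 | h1 | rfl
          · have := hOld B' (Or.inl h1) hN
            omega
          · have := hOld B' (Or.inr h1) hN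
            omega
          · exfalso
            apply nuR
            obtain ⟨hp, hq⟩ := hN
            have hp' : B'.p ∈ H.marked := by
              rcases Finset.mem_insert.mp hp with rfl | h1
              · exact absurd okR.p_mem_verts hxR
              · exact h1
            have hq' : B'.q ∈ H.marked := by
              rcases Finset.mem_insert.mp hq with rfl | h1
              · exact absurd okR.q_mem_verts hxR
              · exact h1
            exact ⟨hp', hq'⟩
      · -- A.len = 2 : everything dies
        refine ⟨y, hstr.vsub A (by simp) hyA, hyfree, S ++ ([] ++ T), ?_, ?_⟩
        · refine strSys_replace_plus hstr hxm hxA hyfree hyA []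
            (by simp) (by simp) (by simp) (by simp) ?_ (by simp) List.Pairwise.nil
          intro e he hye
          obtain ⟨k, hk, hfk⟩ := Arc.mem_edges.mp he
          exfalso
          have hk0 : k ≠ 0 := fun h => hye (by rw [← hfk, h]; exact hy.1)
          have hk1 : k ≠ 1 := fun h => hye (by rw [← hfk, h]; exact hy.2)
          omega
        · intro B' hB' hN
          have := hOld B' (hmem3 B' hB') hN
          omega
    · -- 1 ≤ i : delete a center of edge i-1, keep the right piece with endpoint x
      have hi1 : 1 ≤ i := by omega
      have hcard : ((A.f (i-1)) ∩ ((if 2 ≤ i then A.f (i-2) else ∅) ∪ (A.f i ∪ {A.p}))).card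
          ≤ 2 := by
        rw [Finset.inter_union_distrib_left, Finset.inter_union_distrib_left]
        refine le_trans (Finset.card_union_le _ _) ?_
        have h2 := Finset.card_union_le (A.f (i-1) ∩ A.f i) (A.f (i-1) ∩ {A.p})
        have h3 : (A.f (i-1) ∩ A.f i).card ≤ 1 := by
          have hc := hokA.consec (i-1) (by omega)
          rw [show i - 1 + 1 = i from by omega] at hc
          omega
        by_cases h4 : 2 ≤ i
        · rw [if_pos h4]
          have h5 : (A.f (i-1) ∩ A.f (i-2)).card ≤ 1 := by
            have hc := hokA.consec (i-2) (by omega)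
            rw [show i - 2 + 1 = i - 1 from by omega, Finset.inter_comm] at hc
            omega
          have h6 : (A.f (i-1) ∩ {A.p}).card = 0 := by
            rw [Finset.card_eq_zero, Finset.eq_empty_iff_forall_notMem]
            intro v hv
            rw [Finset.mem_inter, Finset.mem_singleton] at hv
            exact hokA.pnot (i-1) (by omega) (by omega) (hv.2 ▸ hv.1)
          omega
        · rw [if_neg h4]
          have h6 : (A.f (i-1) ∩ {A.p}).card ≤ 1 :=
            le_trans (Finset.card_le_card Finset.inter_subset_right) (by simp)
          simp only [Finset.inter_empty, Finset.card_empty]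
          omega
      obtain ⟨y, hy⟩ := pick3 (hokA.card3 (i-1) (by omega)) hcard
      rw [Finset.mem_sdiff, Finset.mem_union, Finset.mem_union, Finset.mem_singleton] at hy
      push_neg at hy
      obtain ⟨hy1, hyif, hyfi, hyp⟩ := hy
      have hyA : y ∈ A.verts := Arc.mem_verts.mpr ⟨i-1, by omega, hy1⟩
      have hyx : y ≠ x := by
        intro h
        have := huniq (i-1) (by omega) (h ▸ hy1)
        omega
      have hym : y ∉ H.marked := by
        intro hm
        rcases hAm y hyA hm with h1 | h1
        · exact hyp h1
        · exact hokA.qnot (i-1) (by omega) (h1 ▸ hy1)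
      have hyfree : y ∉ insert x H.marked := by
        intro hmem
        rcases Finset.mem_insert.mp hmem with h1 | h1
        · exact hyx h1
        · exact hym h1
      have hclean : ∀ k, k < A.len → y ∈ A.f k → k = i - 1 ∨ k = i - 1 := by
        intro k hk hyk
        rcases lt_trichotomy k (i-1) with h1 | h1 | h1
        · have h2 := hokA.adj h1 (by omega) hyk hy1
          exfalso
          rw [if_pos (show 2 ≤ i from by omega)] at hyif
          exact hyif (by rw [show i - 2 = k from by omega]; exact hyk)
        · exact Or.inl h1
        · have h2 := hokA.adj h1 hk hy1 hyk
          exfalso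
          exact hyfi (by rw [show i = k from by omega]; exact hyk)
      -- right piece with endpoint x
      set XR := A.sub i (A.len - 1) x A.q with hXR
      have okXR : XR.Ok := by
        refine Arc.sub_ok hokA (by omega) (by omega) hx1 hokA.qmem hxq ?_ ?_
        · intro h0 hmem
          have := huniq (i+1) (by omega) hmem
          omega
        · intro h0 hmem
          exact hokA.qnot (A.len - 1 - 1) (by omega) hmem
      have chXR : ∀ v ∈ XR.verts, ∃ k, i ≤ k ∧ k < A.len ∧ v ∈ A.f k := by
        intro v hv
        obtain ⟨j, hj1, hj2, hj3⟩ := Arc.mem_sub_verts.mp hv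
        exact ⟨j, hj1, by omega, hj3⟩
      have subXR : XR.verts ⊆ A.verts := by
        intro v hv
        obtain ⟨k, hk1, hk2, hvk⟩ := chXR v hv
        exact Arc.mem_verts.mpr ⟨k, hk2, hvk⟩
      have yXR : y ∉ XR.verts := by
        intro hv
        obtain ⟨k, hk1, hk2, hvk⟩ := chXR y hv
        rcases hclean k hk2 hvk with h1 | h1 <;> omega
      have eXR : ∀ e ∈ XR.edges, e ∈ A.edges := by
        intro e he
        obtain ⟨j, hj1, hj2, hj3⟩ := Arc.mem_sub_edges.mp he
        exact Arc.mem_edges.mpr ⟨j, by omega, hj3⟩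
      have covXR : ∀ k, i ≤ k → k < A.len → A.f k ∈ XR.edges := by
        intro k hk1 hk2
        exact Arc.mem_sub_edges.mpr ⟨k, hk1, by omega, rfl⟩
      have mkXR : ∀ v ∈ XR.verts, v ∈ insert x H.marked → v = XR.p ∨ v = XR.q := by
        intro v hv hvm
        rcases Finset.mem_insert.mp hvm with rfl | h1
        · exact Or.inl rfl
        · rcases hAm v (subXR hv) h1 with h2 | h2
          · exfalso
            obtain ⟨k, hk1, hk2, hvk⟩ := chXR v hv
            exact hokA.pnot k (by omega) hk2 (h2 ▸ hvk)
          · exact Or.inr h2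
      have hXRlen : XR.len = A.len - i := by
        show A.len - 1 + 1 - i = A.len - i
        omega
      have hXRnun : Nunch XR (insert x H.marked) → (n+1)/2 ≤ XR.len := by
        rintro ⟨-, hq⟩
        have hq' : A.q ∈ H.marked := by
          rcases Finset.mem_insert.mp hq with h1 | h1
          · exact absurd h1.symm hxq
          · exact h1
        obtain ⟨hp', hile⟩ := hcond hq'
        have := hlen A (by simp) ⟨hp', hq'⟩
        rw [hXRlen]
        omega
      by_cases hi2 : 2 ≤ i
      · obtain ⟨XL, okL, subL, yL, eL, covL, mkL, nuL, chL⟩ :=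
          left_piece (a := i-1) (b := i-1) hokA (by omega) (le_refl _) (by omega) hclean hAm
        have hxL : x ∉ XL.verts := by
          intro hmem
          obtain ⟨k, hk1, hvk⟩ := chL x hmem
          have := huniq k (by omega) hvk
          omega
        refine ⟨y, hstr.vsub A (by simp) hyA, hyfree, S ++ ([XL, XR] ++ T), ?_, ?_⟩
        · refine strSys_replace_plus hstr hxm hxA hyfree hyA [XL, XR] ?_ ?_ ?_ ?_ ?_ ?_ ?_
          · intro X hX
            simp only [List.mem_cons, List.not_mem_nil, or_false] at hX
            rcases hX with rfl | rfl
            · exact okL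
            · exact okXR
          · intro X hX
            simp only [List.mem_cons, List.not_mem_nil, or_false] at hX
            rcases hX with rfl | rfl
            · exact subL
            · exact subXR
          · intro X hX
            simp only [List.mem_cons, List.not_mem_nil, or_false] at hX
            rcases hX with rfl | rfl
            · exact yL
            · exact yXR
          · intro X hX
            simp only [List.mem_cons, List.not_mem_nil, or_false] at hX
            rcases hX with rfl | rfl
            · exact eL
            · exact eXR
          · intro e he hye
            obtain ⟨k, hk, hfk⟩ := Arc.mem_edges.mp he
            have hki : k ≠ i - 1 := fun h => hye (by rw [← hfk, h]; exact hy1)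
            by_cases h2 : k < i - 1
            · exact ⟨XL, by simp, hfk ▸ covL k h2⟩
            · exact ⟨XR, by simp, hfk ▸ covXR k (by omega) hk⟩
          · intro X hX v hv hvm
            simp only [List.mem_cons, List.not_mem_nil, or_false] at hX
            rcases hX with rfl | rfl
            · rcases Finset.mem_insert.mp hvm with rfl | h1
              · exact absurd hv hxL
              · exact mkL v hv h1
            · exact mkXR v hv hvm
          · refine List.Pairwise.cons ?_ (List.pairwise_singleton _ _)
            intro Y hY
            simp only [List.mem_singleton] at hY
            subst hY
            intro v h1 h2
            exfalso
            obtain ⟨k, hk, hvk⟩ := chL v h1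
            obtain ⟨l, hl1, hl2, hvl⟩ := chXR v h2
            have : v ∈ A.f k ∩ A.f l := Finset.mem_inter.mpr ⟨hvk, hvl⟩
            rw [hokA.far k l (by omega) hl2] at this
            exact absurd this (Finset.notMem_empty v)
        · intro B' hB' hN
          have : B' ∈ S ∨ B' ∈ T ∨ B' = XL ∨ B' = XR := by
            rcases List.mem_append.mp hB' with h1 | h1
            · exact Or.inl h1
            · rcases List.mem_append.mp h1 with h2 | h2
              · simp only [List.mem_cons, List.not_mem_nil, or_false] at h2
                rcases h2 with rfl | rfl
                · exact Or.inr (Or.inr (Or.inl rfl))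
                · exact Or.inr (Or.inr (Or.inr rfl))
              · exact Or.inr (Or.inl h2)
          rcases this with h1 | h1 | rfl | rfl
          · have := hOld B' (Or.inl h1) hN
            omega
          · have := hOld B' (Or.inr h1) hN
            omega
          · exfalso
            apply nuL
            obtain ⟨hp, hq⟩ := hN
            have hp' : B'.p ∈ H.marked := by
              rcases Finset.mem_insert.mp hp with rfl | h1
              · exact absurd okL.p_mem_verts hxL
              · exact h1
            have hq' : B'.q ∈ H.marked := by
              rcases Finset.mem_insert.mp hq with rfl | h1
              · exact absurd okL.q_mem_verts hxL
              · exact h1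
            exact ⟨hp', hq'⟩
          · exact hXRnun hN
      · -- i = 1 : only the right piece
        refine ⟨y, hstr.vsub A (by simp) hyA, hyfree, S ++ ([XR] ++ T), ?_, ?_⟩
        · refine strSys_replace_plus hstr hxm hxA hyfree hyA [XR] ?_ ?_ ?_ ?_ ?_ ?_
            (List.pairwise_singleton _ _)
          · intro X hX
            simp only [List.mem_singleton] at hX
            exact hX ▸ okXR
          · intro X hX
            simp only [List.mem_singleton] at hX
            exact hX ▸ subXR
          · intro X hX
            simp only [List.mem_singleton] at hX
            exact hX ▸ yXR
          · intro X hX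
            simp only [List.mem_singleton] at hX
            exact hX ▸ eXR
          · intro e he hye
            obtain ⟨k, hk, hfk⟩ := Arc.mem_edges.mp he
            have hki : k ≠ i - 1 := fun h => hye (by rw [← hfk, h]; exact hy1)
            exact ⟨XR, by simp, hfk ▸ covXR k (by omega) hk⟩
          · intro X hX v hv hvm
            simp only [List.mem_singleton] at hX
            exact hX ▸ mkXR v (hX ▸ hv) hvm
        · intro B' hB' hN
          have : B' ∈ S ∨ B' ∈ T ∨ B' = XR := by
            rcases List.mem_append.mp hB' with h1 | h1
            · exact Or.inl h1
            · rcases List.mem_append.mp h1 with h2 | h2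
              · simp only [List.mem_singleton] at h2
                exact Or.inr (Or.inr h2)
              · exact Or.inr (Or.inl h2)
          rcases this with h1 | h1 | rfl
          · have := hOld B' (Or.inl h1) hN
            omega
          · have := hOld B' (Or.inr h1) hN
            omega
          · exact hXRnun hN

end MB
namespace MB
open MarkedHypergraph

variable {V : Type} [DecidableEq V]

theorem goodSys_step {n : ℕ} {H : MarkedHypergraph V} (hG : GoodSys n H) (hn : 2 ≤ n)
    (hfree : 2 ≤ (H.verts \ H.marked).card) {x : V} (hxv : x ∈ H.verts) (hxm : x ∉ H.marked) :
    ∃ y ∈ (H.plus x).verts \ (H.plus x).marked, GoodSys ((n + 1) / 2) ((H.plus x).minus y) := by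
  obtain ⟨AS, hstr, hlen⟩ := hG
  by_cases hxin : ∃ A ∈ AS, x ∈ A.verts
  · obtain ⟨A, hA, hxA⟩ := hxin
    obtain ⟨S, T, rfl⟩ := List.append_of_mem hA
    have hokA := hstr.ok A (by simp)
    have hAm := hstr.marks A (by simp)
    have hxout := strSys_other_not_mem hstr hxm hxA
    have hOld := nunch_old_bound hstr hlen hxm hxA
    have hmemdec : ∀ B' : Arc V, B' ∈ S ++ A :: T → B' ∈ S ∨ B' = A ∨ B' ∈ T := by
      intro B' h1
      rcases List.mem_append.mp h1 with h2 | h2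
      · exact Or.inl h2
      · rcases List.mem_cons.mp h2 with h3 | h3
        · exact Or.inr (Or.inl h3)
        · exact Or.inr (Or.inr h3)
    by_cases hxe : x = A.p ∨ x = A.q
    · -- x is an endpoint of A
      have h1 : StrSys (S ++ A :: T) (H.plus x) := by
        refine strSys_plus hstr (fun B hB hxB => ?_)
        rcases hmemdec B hB with h2 | rfl | h2
        · exact absurd hxB (hxout B (Or.inl h2))
        · exact hxe
        · exact absurd hxB (hxout B (Or.inr h2))
      obtain ⟨y, hyA, hyp, hyq⟩ := kill_pick hokA
      have hyfree : y ∉ (H.plus x).marked := by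
        intro hmem
        rcases Finset.mem_insert.mp hmem with h2 | h2
        · rcases hxe with rfl | rfl
          · exact hyp h2
          · exact hyq h2
        · rcases hAm y hyA h2 with h3 | h3
          · exact hyp h3
          · exact hyq h3
      obtain ⟨AS', hstr', hconc⟩ := strSys_del h1 hyfree
      refine ⟨y, Finset.mem_sdiff.mpr ⟨hstr.vsub A (by simp) hyA, hyfree⟩, AS', hstr', ?_⟩
      intro B' hB' hN
      obtain ⟨hB'mem, hyB', hNB'⟩ := hconc B' hB' hN
      rcases hmemdec B' hB'mem with h2 | rfl | h2
      · have := hOld B' (Or.inl h2) hNB'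
        omega
      · exact absurd hyA hyB'
      · have := hOld B' (Or.inr h2) hNB'
        omega
    · push_neg at hxe
      obtain ⟨hxp, hxq⟩ := hxe
      rcases Arc.locate hokA hxA with ⟨i, hi, hx1, hx2⟩ | ⟨i, hi, hx1, huniq⟩
      · -- junction case: split A at x
        have h2 := strSys_split hstr hxm hi hx1 hx2
        set A1 := A.sub 0 i A.p x with hA1
        set A2 := A.sub (i + 1) (A.len - 1) x A.q with hA2
        have hA1len : A1.len = i + 1 := by show i + 1 - 0 = i + 1; omega
        have hA2len : A2.len = A.len - 1 - i := by
          show A.len - 1 + 1 - (i + 1) = A.len - 1 - i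
          omega
        have okA1 := h2.ok A1 (by simp)
        have okA2 := h2.ok A2 (by simp)
        have hmemdec2 : ∀ B' : Arc V, B' ∈ S ++ A1 :: A2 :: T →
            B' ∈ S ∨ B' = A1 ∨ B' = A2 ∨ B' ∈ T := by
          intro B' hmem
          rcases List.mem_append.mp hmem with h3 | h3
          · exact Or.inl h3
          · rcases List.mem_cons.mp h3 with h4 | h4
            · exact Or.inr (Or.inl h4)
            · rcases List.mem_cons.mp h4 with h5 | h5
              · exact Or.inr (Or.inr (Or.inl h5))
              · exact Or.inr (Or.inr (Or.inr h5))
        have hANun : A.p ∈ H.marked → A.q ∈ H.marked → n ≤ A.len :=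
          fun hp hq => hlen A (by simp) ⟨hp, hq⟩
        by_cases hside : A.q ∈ H.marked ∧ (A.p ∉ H.marked ∨ A.len - 1 - i < i + 1)
        · -- kill A2
          obtain ⟨y, hyA2, hyp, hyq⟩ := kill_pick okA2
          have hyfree : y ∉ (H.plus x).marked := by
            intro hmem
            rcases h2.marks A2 (by simp) y hyA2 hmem with h3 | h3
            · exact hyp h3
            · exact hyq h3
          obtain ⟨AS', hstr', hconc⟩ := strSys_del h2 hyfree
          refine ⟨y, Finset.mem_sdiff.mpr ⟨h2.vsub A2 (by simp) hyA2, hyfree⟩,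
            AS', hstr', ?_⟩
          intro B' hB' hN
          obtain ⟨hB'mem, hyB', hNB'⟩ := hconc B' hB' hN
          rcases hmemdec2 B' hB'mem with h3 | rfl | rfl | h3
          · have := hOld B' (Or.inl h3) hNB'
            omega
          · -- B' = A1 : nunchaku with endpoints A.p and x
            obtain ⟨hp, -⟩ := hNB'
            have hp' : A.p ∈ H.marked := by
              rcases Finset.mem_insert.mp hp with h4 | h4
              · exact absurd h4.symm hxp
              · exact h4
            have hq' := hside.1
            have hle := hANun hp' hq'
            rcases hside.2 with h5 | h5
            · exact absurd hp' h5
            · rw [hA1len]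
              omega
          · exact absurd hyA2 hyB'
          · have := hOld B' (Or.inr h3) hNB'
            omega
        · -- kill A1
          obtain ⟨y, hyA1, hyp, hyq⟩ := kill_pick okA1
          have hyfree : y ∉ (H.plus x).marked := by
            intro hmem
            rcases h2.marks A1 (by simp) y hyA1 hmem with h3 | h3
            · exact hyp h3
            · exact hyq h3
          obtain ⟨AS', hstr', hconc⟩ := strSys_del h2 hyfree
          refine ⟨y, Finset.mem_sdiff.mpr ⟨h2.vsub A1 (by simp) hyA1, hyfree⟩,
            AS', hstr', ?_⟩
          intro B' hB' hN
          obtain ⟨hB'mem, hyB', hNB'⟩ := hconc B' hB' hN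
          rcases hmemdec2 B' hB'mem with h3 | rfl | rfl | h3
          · have := hOld B' (Or.inl h3) hNB'
            omega
          · exact absurd hyA1 hyB'
          · -- B' = A2
            obtain ⟨-, hq⟩ := hNB'
            have hq' : A.q ∈ H.marked := by
              rcases Finset.mem_insert.mp hq with h4 | h4
              · exact absurd h4.symm hxq
              · exact h4
            push_neg at hside
            obtain ⟨hp', hile⟩ := hside hq'
            have hle := hANun hp' hq'
            rw [hA2len]
            omega
          · have := hOld B' (Or.inr h3) hNB'
            omega
      · -- center case, possibly after reversal
        by_cases hcnd : A.q ∈ H.marked → (A.p ∈ H.marked ∧ i + 1 ≤ A.len - i)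
        · obtain ⟨y, hyv, hyfree, AS', hstr', hbound⟩ :=
            step_center hstr hlen hn hxm hi hx1 huniq hxp hxq hcnd
          refine ⟨y, Finset.mem_sdiff.mpr ⟨hyv, hyfree⟩, AS', hstr', ?_⟩
          intro B' hB' hN
          apply hbound B' hB'
          rwa [minus_marked_eq (H := H.plus x) hyfree] at hN
        · have hrev := strSys_rev hstr
          have hokrev := Arc.rev_ok hokA
          have hlenrev : ∀ B ∈ S ++ A.rev :: T, Nunch B H.marked → n ≤ B.len := by
            intro B hB hN
            rcases List.mem_append.mp hB with h3 | h3
            · exact hlen B (List.mem_append.mpr (Or.inl h3)) hN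
            · rcases List.mem_cons.mp h3 with h4 | h4
              · subst h4
                exact hlen A (by simp) ⟨hN.2, hN.1⟩
              · exact hlen B (List.mem_append.mpr (Or.inr (List.mem_cons.mpr (Or.inr h4)))) hN
          have hI : A.len - 1 - (A.len - 1 - i) = i := by omega
          have hi' : A.len - 1 - i < A.rev.len := by
            rw [Arc.rev_len]
            omega
          have hx1' : x ∈ A.rev.f (A.len - 1 - i) := by
            show x ∈ A.f (A.len - 1 - (A.len - 1 - i))
            rw [hI]
            exact hx1
          have huniq' : ∀ j, j < A.rev.len → x ∈ A.rev.f j → j = A.len - 1 - i := by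
            intro j hj hxj
            rw [Arc.rev_len] at hj
            have := huniq (A.len - 1 - j) (by omega) hxj
            omega
          have hcnd' : A.rev.q ∈ H.marked →
              (A.rev.p ∈ H.marked ∧ (A.len - 1 - i) + 1 ≤ A.rev.len - (A.len - 1 - i)) := by
            intro hq
            push_neg at hcnd
            obtain ⟨hqm, hcnd2⟩ := hcnd
            refine ⟨hqm, ?_⟩
            have h5 : A.len - i < i + 1 := hcnd2 hq
            rw [Arc.rev_len]
            omega
          obtain ⟨y, hyv, hyfree, AS', hstr', hbound⟩ :=
            step_center hrev hlenrev hn hxm hi' hx1' huniq'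
              (fun h => hxq h) (fun h => hxp h) hcnd'
          refine ⟨y, Finset.mem_sdiff.mpr ⟨hyv, hyfree⟩, AS', hstr', ?_⟩
          intro B' hB' hN
          apply hbound B' hB'
          rwa [minus_marked_eq (H := H.plus x) hyfree] at hN
  · -- x in no arc
    push_neg at hxin
    have h1 : StrSys AS (H.plus x) :=
      strSys_plus hstr (fun A hA hxA => absurd hxA (hxin A hA))
    obtain ⟨y, hy, hyne⟩ := Finset.exists_mem_ne (s := H.verts \ H.marked) (by omega) x
    rw [Finset.mem_sdiff] at hy
    have hyfree : y ∉ (H.plus x).marked := by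
      intro hmem
      rcases Finset.mem_insert.mp hmem with h2 | h2
      · exact hyne h2
      · exact hy.2 h2
    obtain ⟨AS', hstr', hconc⟩ := strSys_del h1 hyfree
    refine ⟨y, Finset.mem_sdiff.mpr ⟨hy.1, hyfree⟩, AS', hstr', ?_⟩
    intro B' hB' hN
    obtain ⟨hB'mem, hyB', hNB'⟩ := hconc B' hB' hN
    obtain ⟨hp, hq⟩ := hNB'
    have hokB' := hstr.ok B' hB'mem
    have hp' : B'.p ∈ H.marked := by
      rcases Finset.mem_insert.mp hp with h2 | h2
      · exact absurd (h2 ▸ hokB'.p_mem_verts) (hxin B' hB'mem)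
      · exact h2
    have hq' : B'.q ∈ H.marked := by
      rcases Finset.mem_insert.mp hq with h2 | h2
      · exact absurd (h2 ▸ hokB'.q_mem_verts) (hxin B' hB'mem)
      · exact h2
    have := hlen B' hB'mem ⟨hp', hq'⟩
    omega

end MB
namespace MB
open MarkedHypergraph

variable {V : Type} [DecidableEq V]

theorem tau_lb (n : ℕ) : ∀ (H : MarkedHypergraph V), GoodSys n H →
    ((1 + Nat.clog 2 n : ℕ) : ℕ∞) ≤ tauM H := by
  induction n using Nat.strong_induction_on with
  | _ n ih =>
    intro H hG
    obtain ⟨AS, hstr, hlen⟩ := hG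
    by_cases hn : 2 ≤ n
    · -- inductive case
      have hfree2 : ∀ e ∈ H.edges, 2 ≤ (e \ H.marked).card :=
        hstr.edge_free (fun A hA hN => le_trans hn (hlen A hA hN))
      have hnt : ¬ TrivialMakerWin H := by
        rintro ⟨e, he, hec⟩
        have := hfree2 e he
        omega
      by_cases hsmall : (H.verts \ H.marked).card ≤ 1
      · rw [tauM_small hnt hsmall]
        exact le_top
      · rw [tauM_big hnt (by omega)]
        have hclog : Nat.clog 2 n = Nat.clog 2 ((n + 1) / 2) + 1 := by
          rw [Nat.clog_of_two_le (by norm_num) hn]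
          have h1 : n + 2 - 1 = n + 1 := by omega
          rw [h1]
        have hcast : ((1 + Nat.clog 2 n : ℕ) : ℕ∞) =
            1 + ((Nat.clog 2 n : ℕ) : ℕ∞) := by push_cast; ring
        rw [hcast]
        refine add_le_add_right ?_ 1
        refine Finset.le_inf ?_
        intro x hx
        rw [Finset.mem_sdiff] at hx
        obtain ⟨y, hy, hG'⟩ := goodSys_step ⟨AS, hstr, hlen⟩ hn (by omega) hx.1 hx.2
        have hIH := ih ((n + 1) / 2) (by omega) _ hG'
        refine le_trans ?_ (le_trans hIH
          (Finset.le_sup (f := fun y : {z // z ∈ (H.plus x).verts \ (H.plus x).marked} =>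
            tauM ((H.plus x).minus y.1)) (Finset.mem_attach _ ⟨y, hy⟩)))
        rw [hclog]
        norm_cast
        omega
    · -- base case : n ≤ 1, bound is 1
      have h1 : Nat.clog 2 n = 0 := Nat.clog_of_right_le_one (by omega) 2
      rw [h1]
      have hbound : ((1 + 0 : ℕ) : ℕ∞) = 1 := by norm_num
      rw [hbound]
      by_cases ht : TrivialMakerWin H
      · rw [tauM_trivial ht]
        refine Finset.le_inf ?_
        intro e he
        have := hstr.edge_free1 e he
        exact_mod_cast Nat.one_le_cast.mpr this
      · by_cases hsmall : (H.verts \ H.marked).card ≤ 1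
        · rw [tauM_small ht hsmall]
          exact le_top
        · rw [tauM_big ht (by omega)]
          exact le_self_add

end MB
namespace MB
open MarkedHypergraph

variable {V : Type} [DecidableEq V]

/-- The marked hypergraph realized by an arc with both endpoints marked (a nunchaku). -/
def Arc.toNun (A : Arc V) [DecidableEq V] : MarkedHypergraph V :=
  ⟨A.verts, A.edges, {A.p, A.q}⟩

theorem arc_edge_marked_card {A : Arc V} (hA : A.Ok) {k : ℕ} (hk : k < A.len)
    (hlen2 : 2 ≤ A.len) : (A.f k ∩ {A.p, A.q}).card ≤ 1 := by
  by_contra hc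
  obtain ⟨u, hu, w, hw, huw⟩ :=
    Finset.one_lt_card.mp (show 1 < (A.f k ∩ {A.p, A.q}).card by omega)
  rw [Finset.mem_inter, Finset.mem_insert, Finset.mem_singleton] at hu hw
  have hpq : A.p ∈ A.f k ∧ A.q ∈ A.f k := by
    rcases hu.2 with rfl | rfl <;> rcases hw.2 with rfl | rfl <;>
      first | (exact absurd rfl huw) | (exact ⟨hu.1, hw.1⟩) | (exact ⟨hw.1, hu.1⟩)
  have hk0 : k = 0 := by
    by_contra h0
    exact hA.pnot k (by omega) hk hpq.1
  exact hA.qnot 0 (by omega) (hk0 ▸ hpq.2)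

theorem arc_tau {A : Arc V} (hA : A.Ok) :
    tauM A.toNun ≤ ((1 + Nat.clog 2 A.len : ℕ) : ℕ∞) := by
  obtain ⟨L, hL⟩ : ∃ L, A.len ≤ L := ⟨A.len, le_refl _⟩
  induction L generalizing A with
  | zero => exact absurd hA.pos (by omega)
  | succ L ihL =>
    by_cases hlen1 : A.len = 1
    · -- single edge, trivial win
      have hm : A.q ∈ A.f 0 := by
        have := hA.qmem
        rwa [hlen1] at this
      have hsub : ({A.p, A.q} : Finset V) ⊆ A.f 0 := by
        intro v hv
        rcases Finset.mem_insert.mp hv with rfl | hv'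
        · exact hA.pmem
        · rw [Finset.mem_singleton] at hv'
          exact hv' ▸ hm
      have hcard : (A.f 0 \ ({A.p, A.q} : Finset V)).card = 1 := by
        have h1 := Finset.card_sdiff_add_card_inter (A.f 0) ({A.p, A.q} : Finset V)
        rw [Finset.inter_eq_right.mpr hsub, Finset.card_pair hA.pq,
          hA.card3 0 (by omega)] at h1
        omega
      have hf0 : A.f 0 ∈ A.toNun.edges := Arc.mem_edges.mpr ⟨0, by omega, rfl⟩
      have htriv : TrivialMakerWin A.toNun := ⟨A.f 0, hf0, by rw [show A.toNun.marked = ({A.p, A.q} : Finset V) from rfl, hcard]⟩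
      rw [tauM_trivial htriv]
      refine le_trans (Finset.inf_le hf0) ?_
      rw [show A.toNun.marked = ({A.p, A.q} : Finset V) from rfl, hcard, hlen1]
      simp [Nat.clog_of_right_le_one]
    · have hlen2 : 2 ≤ A.len := by have := hA.pos; omega
      set m := (A.len + 1) / 2 with hm
      have hm1 : 1 ≤ m := by omega
      have hmlt : m < A.len := by omega
      have hne : (A.f (m - 1) ∩ A.f m).Nonempty := by
        rw [← Finset.card_pos]
        have hc := hA.consec (m - 1) (by omega)
        rw [show m - 1 + 1 = m from by omega] at hc
        omega
      obtain ⟨u, hu⟩ := hne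
      rw [Finset.mem_inter] at hu
      have hup : A.p ≠ u := fun h => hA.pnot m hm1 hmlt (h ▸ hu.2)
      have huq : u ≠ A.q := fun h => hA.qnot (m - 1) (by omega) (h ▸ hu.1)
      have huv : u ∈ A.toNun.verts := Arc.mem_verts.mpr ⟨m, hmlt, hu.2⟩
      have hufree : u ∈ A.toNun.verts \ A.toNun.marked := by
        rw [Finset.mem_sdiff]
        refine ⟨huv, ?_⟩
        intro hmem
        rcases Finset.mem_insert.mp hmem with h1 | h1
        · exact hup h1.symm
        · rw [Finset.mem_singleton] at h1
          exact huq h1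
      have hnt : ¬ TrivialMakerWin A.toNun := by
        rintro ⟨e, he, hec⟩
        obtain ⟨k, hk, hfk⟩ := Arc.mem_edges.mp he
        have h1 := arc_edge_marked_card hA hk hlen2
        have h2 := Finset.card_sdiff_add_card_inter (A.f k) ({A.p, A.q} : Finset V)
        rw [hA.card3 k hk] at h2
        rw [← hfk] at hec
        have : (A.f k \ A.toNun.marked).card = (A.f k \ ({A.p, A.q} : Finset V)).card := rfl
        omega
      have hqf0 : A.q ∉ A.f 0 := hA.qnot 0 (by omega)
      have hfree2 : 2 ≤ (A.toNun.verts \ A.toNun.marked).card := by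
        have hsub : A.f 0 \ ({A.p, A.q} : Finset V) ⊆ A.toNun.verts \ A.toNun.marked := by
          intro v hv
          rw [Finset.mem_sdiff] at hv ⊢
          exact ⟨Arc.mem_verts.mpr ⟨0, by omega, hv.1⟩, hv.2⟩
        have hi : A.f 0 ∩ ({A.p, A.q} : Finset V) = {A.p} := by
          ext v
          rw [Finset.mem_inter, Finset.mem_insert, Finset.mem_singleton, Finset.mem_singleton]
          constructor
          · rintro ⟨h1, rfl | rfl⟩
            · rfl
            · exact absurd h1 hqf0
          · rintro rfl
            exact ⟨hA.pmem, Or.inl rfl⟩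
        have h2 := Finset.card_sdiff_add_card_inter (A.f 0) ({A.p, A.q} : Finset V)
        rw [hi, hA.card3 0 (by omega), Finset.card_singleton] at h2
        have := Finset.card_le_card hsub
        omega
      rw [tauM_big hnt hfree2]
      have hclog : Nat.clog 2 A.len = Nat.clog 2 m + 1 := by
        rw [Nat.clog_of_two_le (by norm_num) hlen2]
        have h1 : A.len + 2 - 1 = A.len + 1 := by omega
        rw [h1]
      -- the two half-arcs
      set A1 := A.sub 0 (m - 1) A.p u with hA1
      set A2 := A.sub m (A.len - 1) u A.q with hA2
      have okA1 : A1.Ok := by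
        refine Arc.sub_ok hA (by omega) (by omega) hA.pmem hu.1 hup ?_ ?_
        · intro h0
          exact hA.pnot 1 (le_refl _) (by omega)
        · intro h0 hmem
          have : u ∈ A.f (m - 1 - 1) ∩ A.f m := Finset.mem_inter.mpr ⟨hmem, hu.2⟩
          rw [hA.far (m - 1 - 1) m (by omega) hmlt] at this
          exact absurd this (Finset.notMem_empty u)
      have okA2 : A2.Ok := by
        refine Arc.sub_ok hA (by omega) (by omega) hu.2 hA.qmem huq ?_ ?_
        · intro h0 hmem
          have : u ∈ A.f (m - 1) ∩ A.f (m + 1) := Finset.mem_inter.mpr ⟨hu.1, hmem⟩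
          rw [hA.far (m - 1) (m + 1) (by omega) (by omega)] at this
          exact absurd this (Finset.notMem_empty u)
        · intro h0 hmem
          exact hA.qnot (A.len - 1 - 1) (by omega) hmem
      have hA1len : A1.len = m := by show m - 1 + 1 - 0 = m; omega
      have hA2len : A2.len = A.len - m := by show A.len - 1 + 1 - m = A.len - m; omega
      have ch1 : ∀ v ∈ A1.verts, ∃ k, k ≤ m - 1 ∧ v ∈ A.f k := by
        intro v hv
        obtain ⟨j, _, hj2, hj3⟩ := Arc.mem_sub_verts.mp hv
        exact ⟨j, hj2, hj3⟩
      have ch2 : ∀ v ∈ A2.verts, ∃ k, m ≤ k ∧ k < A.len ∧ v ∈ A.f k := by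
        intro v hv
        obtain ⟨j, hj1, hj2, hj3⟩ := Arc.mem_sub_verts.mp hv
        exact ⟨j, hj1, by omega, hj3⟩
      refine le_trans (add_le_add_right (Finset.inf_le hufree) 1) ?_
      have hsup : (((A.toNun.plus u).verts \ (A.toNun.plus u).marked).attach.sup fun y =>
          tauM ((A.toNun.plus u).minus y.1)) ≤ ((1 + Nat.clog 2 m : ℕ) : ℕ∞) := by
        refine Finset.sup_le ?_
        rintro ⟨y, hy⟩ -
        show tauM ((A.toNun.plus u).minus y) ≤ _
        rw [Finset.mem_sdiff] at hy
        have hyu : y ≠ u := by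
          intro h
          rw [h] at hy
          exact hy.2 (Finset.mem_insert_self u _)
        have hynm : y ∉ ({A.p, A.q} : Finset V) := fun h =>
          hy.2 (Finset.mem_insert_of_mem h)
        -- y misses A1 or A2
        have hymiss : y ∉ A1.verts ∨ y ∉ A2.verts := by
          by_contra hc
          push_neg at hc
          obtain ⟨k, hk, hvk⟩ := ch1 y hc.1
          obtain ⟨l, hl1, hl2, hvl⟩ := ch2 y hc.2
          have hkl : k = m - 1 ∧ l = m := by
            by_contra hkl
            have : y ∈ A.f k ∩ A.f l := Finset.mem_inter.mpr ⟨hvk, hvl⟩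
            rw [hA.far k l (by omega) hl2] at this
            exact absurd this (Finset.notMem_empty y)
          have hcard := hA.consec (m - 1) (by omega)
          rw [show m - 1 + 1 = m from by omega] at hcard
          apply hyu
          refine Finset.card_le_one.mp (le_of_eq hcard) y ?_ u
            (Finset.mem_inter.mpr ⟨hu.1, hu.2⟩)
          refine Finset.mem_inter.mpr ⟨?_, ?_⟩
          · rw [← hkl.1]; exact hvk
          · rw [← hkl.2]; exact hvl
        -- pick the arc avoided by y
        have key : ∀ B : Arc V, B.Ok → y ∉ B.verts → B.verts ⊆ A.verts →
            (∀ e ∈ B.edges, e ∈ A.edges) →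
            ((B.p = A.p ∧ B.q = u ∧ A.q ∉ B.verts) ∨ (B.p = u ∧ B.q = A.q ∧ A.p ∉ B.verts)) →
            B.len < A.len → B.len ≤ L →
            tauM ((A.toNun.plus u).minus y) ≤ ((1 + Nat.clog 2 B.len : ℕ) : ℕ∞) := by
          intro B okB hyB hBsub hBe hBend hBlt hBle
          refine le_trans (tauM_sub (X := B.toNun) ?_ ?_) (ihL okB hBle)
          · refine ⟨?_, ?_, ?_⟩
            · intro v hv
              simp only [plus, minus]
              exact Finset.mem_erase.mpr ⟨fun h => hyB (h ▸ hv), hBsub hv⟩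
            · intro e he
              simp only [plus, minus, Finset.mem_filter]
              have hsv : e ⊆ B.verts := by
                obtain ⟨j, hj, hfj⟩ := Arc.mem_edges.mp he
                exact hfj ▸ Arc.edge_sub_verts hj
              exact ⟨hBe e he, fun hye => hyB (hsv hye)⟩
            · show ({B.p, B.q} : Finset V) = B.verts ∩ ((insert u ({A.p, A.q} : Finset V)).erase y)
              ext v
              rw [Finset.mem_inter, Finset.mem_erase, Finset.mem_insert, Finset.mem_insert,
                Finset.mem_insert, Finset.mem_singleton, Finset.mem_singleton]
              constructor
              · rintro (rfl | rfl)
                · refine ⟨okB.p_mem_verts, fun h => hyB (h ▸ okB.p_mem_verts), ?_⟩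
                  rcases hBend with ⟨h1, h2, h3⟩ | ⟨h1, h2, h3⟩
                  · exact Or.inr (Or.inl h1)
                  · exact Or.inl h1
                · refine ⟨okB.q_mem_verts, fun h => hyB (h ▸ okB.q_mem_verts), ?_⟩
                  rcases hBend with ⟨h1, h2, h3⟩ | ⟨h1, h2, h3⟩
                  · exact Or.inl h2
                  · exact Or.inr (Or.inr h2)
              · rintro ⟨hvB, hvy, (rfl | rfl | rfl)⟩
                · rcases hBend with ⟨h1, h2, h3⟩ | ⟨h1, h2, h3⟩
                  · exact Or.inr h2.symm
                  · exact Or.inl h1.symm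
                · rcases hBend with ⟨h1, h2, h3⟩ | ⟨h1, h2, h3⟩
                  · exact Or.inl h1.symm
                  · exact absurd hvB h3
                · rcases hBend with ⟨h1, h2, h3⟩ | ⟨h1, h2, h3⟩
                  · exact absurd hvB h3
                  · exact Or.inr h2.symm
          · intro e he
            obtain ⟨j, hj, hfj⟩ := Arc.mem_edges.mp he
            exact hfj ▸ Arc.edge_sub_verts hj
        have sub1 : A1.verts ⊆ A.verts := by
          intro v hv
          obtain ⟨k, hk, hvk⟩ := ch1 v hv
          exact Arc.mem_verts.mpr ⟨k, by omega, hvk⟩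
        have sub2 : A2.verts ⊆ A.verts := by
          intro v hv
          obtain ⟨k, hk1, hk2, hvk⟩ := ch2 v hv
          exact Arc.mem_verts.mpr ⟨k, hk2, hvk⟩
        have e1 : ∀ e ∈ A1.edges, e ∈ A.edges := by
          intro e he
          obtain ⟨j, _, hj2, hj3⟩ := Arc.mem_sub_edges.mp he
          exact Arc.mem_edges.mpr ⟨j, by omega, hj3⟩
        have e2 : ∀ e ∈ A2.edges, e ∈ A.edges := by
          intro e he
          obtain ⟨j, hj1, hj2, hj3⟩ := Arc.mem_sub_edges.mp he
          exact Arc.mem_edges.mpr ⟨j, by omega, hj3⟩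
        rcases hymiss with hmiss | hmiss
        · have hq1 : A.q ∉ A1.verts := by
            intro hv
            obtain ⟨k, hk, hvk⟩ := ch1 A.q hv
            exact hA.qnot k (by omega) hvk
          have hk1 := key A1 okA1 hmiss sub1 e1 (Or.inl ⟨rfl, rfl, hq1⟩)
            (by rw [hA1len]; omega) (by rw [hA1len]; omega)
          rwa [hA1len] at hk1
        · have hp2 : A.p ∉ A2.verts := by
            intro hv
            obtain ⟨k, hk1, hk2, hvk⟩ := ch2 A.p hv
            exact hA.pnot k (by omega) hk2 hvk
          have hk2 := key A2 okA2 hmiss sub2 e2 (Or.inr ⟨rfl, rfl, hp2⟩)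
            (by rw [hA2len]; omega) (by rw [hA2len]; omega)
          refine le_trans hk2 ?_
          rw [hA2len]
          have hmono : Nat.clog 2 (A.len - m) ≤ Nat.clog 2 m :=
            Nat.clog_mono_right 2 (by omega)
          exact Nat.cast_le.mpr (by omega)
      calc 1 + ((A.toNun.plus u).verts \ (A.toNun.plus u).marked).attach.sup
            (fun y => tauM ((A.toNun.plus u).minus y.1))
          ≤ 1 + ((1 + Nat.clog 2 m : ℕ) : ℕ∞) := add_le_add_right hsup 1
        _ = ((1 + Nat.clog 2 A.len : ℕ) : ℕ∞) := by
            rw [hclog]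
            push_cast
            ring

end MB
namespace MB
open MarkedHypergraph

variable {V : Type} [DecidableEq V]

/-- Bundled structural facts of an `a`-cycle. -/
structure CycOk (e : ℕ → Finset V) (a : V) (L : ℕ) : Prop where
  hL : 2 ≤ L
  card3 : ∀ i, i < L → (e i).card = 3
  ha0 : a ∈ e 0
  haL : a ∈ e (L - 1)
  hmid : ∀ i, 0 < i → i + 1 < L → a ∉ e i
  h2 : L = 2 → (e 0 ∩ e 1).card = 2
  h3 : 3 ≤ L → (e 0 ∩ e (L - 1) = {a} ∧ ∀ i, i + 1 < L → (e i ∩ e (i + 1)).card = 1)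
  far : ∀ i j, i < j → j < L → 2 ≤ j - i → j - i ≤ L - 2 → e i ∩ e j = ∅

namespace CycOk

/-- The master (non-Ok) arc of a cycle; its `sub`s are the genuine segment arcs. -/
def master (e : ℕ → Finset V) (a : V) (L : ℕ) : Arc V := ⟨e, L, a, a⟩

theorem seg_ok {e : ℕ → Finset V} {a : V} {L : ℕ} (h : CycOk e a L) (hL3 : 3 ≤ L)
    {s t : ℕ} (hst : s ≤ t) (ht : t < L) (hgap : t - s ≤ L - 2)
    {p' q' : V} (hp : p' ∈ e s) (hq : q' ∈ e t) (hpq : p' ≠ q')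
    (hp2 : s < t → p' ∉ e (s + 1)) (hq2 : s < t → q' ∉ e (t - 1)) :
    ((master e a L).sub s t p' q').Ok := by
  have hcons := (h.h3 hL3).2
  constructor
  · show 1 ≤ t + 1 - s; omega
  · intro i hi
    exact h.card3 (s + i) (by simp only [master, Arc.sub] at hi ⊢; omega)
  · intro i hi
    simp only [master, Arc.sub] at hi ⊢
    rw [show s + (i + 1) = (s + i) + 1 from by omega]
    exact hcons (s + i) (by omega)
  · intro i j hij hj
    simp only [master, Arc.sub] at hj ⊢
    exact h.far (s + i) (s + j) (by omega) (by omega) (by omega) (by omega)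
  · show p' ∈ e (s + 0); simpa using hp
  · show q' ∈ e (s + (t + 1 - s - 1))
    rw [show s + (t + 1 - s - 1) = t from by omega]
    exact hq
  · exact hpq
  · intro i h1 h2
    simp only [master, Arc.sub] at h2 ⊢
    rcases Nat.eq_or_lt_of_le h1 with h3 | h3
    · rw [show s + i = s + 1 from by omega]
      exact hp2 (by omega)
    · intro hmem
      have : p' ∈ e s ∩ e (s + i) := Finset.mem_inter.mpr ⟨hp, hmem⟩
      rw [h.far s (s + i) (by omega) (by omega) (by omega) (by omega)] at this
      exact absurd this (Finset.notMem_empty _)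
  · intro i h1
    simp only [master, Arc.sub] at h1 ⊢
    by_cases h3 : s + i = t - 1
    · rw [h3]
      exact hq2 (by omega)
    · intro hmem
      have : q' ∈ e (s + i) ∩ e t := Finset.mem_inter.mpr ⟨hmem, hq⟩
      rw [h.far (s + i) t (by omega) ht (by omega) (by omega)] at this
      exact absurd this (Finset.notMem_empty _)

theorem adj {e : ℕ → Finset V} {a : V} {L : ℕ} (h : CycOk e a L) (hL3 : 3 ≤ L)
    {x : V} (hxa : x ≠ a) {i j : ℕ} (hij : i < j) (hj : j < L)
    (h1 : x ∈ e i) (h2 : x ∈ e j) : j = i + 1 := by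
  by_contra hc
  by_cases hwrap : i = 0 ∧ j = L - 1
  · have : x ∈ e 0 ∩ e (L - 1) := Finset.mem_inter.mpr ⟨hwrap.1 ▸ h1, hwrap.2 ▸ h2⟩
    rw [(h.h3 hL3).1, Finset.mem_singleton] at this
    exact hxa this
  · have : x ∈ e i ∩ e j := Finset.mem_inter.mpr ⟨h1, h2⟩
    rw [h.far i j hij hj (by omega) (by omega)] at this
    exact absurd this (Finset.notMem_empty x)

theorem locate {e : ℕ → Finset V} {a : V} {L : ℕ} (h : CycOk e a L) (hL3 : 3 ≤ L)
    {x : V} (hxa : x ≠ a) {i0 : ℕ} (hi0 : i0 < L) (hx : x ∈ e i0) :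
    (∃ i, i + 1 < L ∧ x ∈ e i ∧ x ∈ e (i + 1)) ∨
    (∃ i, i < L ∧ x ∈ e i ∧ ∀ j, j < L → x ∈ e j → j = i) := by
  classical
  set S := (Finset.range L).filter (fun i => x ∈ e i) with hS
  have hSne : S.Nonempty := ⟨i0, by simp [hS, Finset.mem_filter, hi0, hx]⟩
  set m := S.min' hSne with hm
  have hmS : m ∈ S := S.min'_mem hSne
  rw [hS, Finset.mem_filter, Finset.mem_range] at hmS
  by_cases hj : m + 1 < L ∧ x ∈ e (m + 1)
  · exact Or.inl ⟨m, hj.1, hmS.2, hj.2⟩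
  · refine Or.inr ⟨m, hmS.1, hmS.2, fun j hjlen hjx => ?_⟩
    have hmj : m ≤ j := S.min'_le j (by simp [hS, Finset.mem_filter, hjlen, hjx])
    rcases Nat.eq_or_lt_of_le hmj with h1 | h1
    · omega
    · have := h.adj hL3 hxa h1 hjlen hmS.2 hjx
      exact absurd ⟨this ▸ hjlen, this ▸ hjx⟩ hj

end CycOk

end MB
namespace MB
open MarkedHypergraph

variable {V : Type} [DecidableEq V]

section CycleUB

variable {C : MarkedHypergraph V} {a : V} {L : ℕ} {e : ℕ → Finset V}

theorem cyc_not_trivial (h : CycOk e a L) (hE : C.edges = (Finset.range L).image e)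
    (hm : C.marked = {a}) : ¬ TrivialMakerWin C := by
  rintro ⟨ed, hed, hec⟩
  rw [hE] at hed
  obtain ⟨k, hk, hfk⟩ := Finset.mem_image.mp hed
  rw [Finset.mem_range] at hk
  have h1 : (ed ∩ C.marked).card ≤ 1 := by
    rw [hm]
    exact le_trans (Finset.card_le_card Finset.inter_subset_right) (by simp)
  have h2 := Finset.card_sdiff_add_card_inter ed C.marked
  have h3 : ed.card = 3 := hfk ▸ h.card3 k hk
  omega

theorem cyc_free2 (h : CycOk e a L) (hV : C.verts = (Finset.range L).biUnion e)
    (hm : C.marked = {a}) : 2 ≤ (C.verts \ C.marked).card := by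
  have hsub : e 0 \ {a} ⊆ C.verts \ C.marked := by
    intro v hv
    rw [Finset.mem_sdiff] at hv ⊢
    refine ⟨?_, by rw [hm]; exact hv.2⟩
    rw [hV]
    exact Finset.mem_biUnion.mpr ⟨0, Finset.mem_range.mpr (by have := h.hL; omega), hv.1⟩
  have h1 : (e 0 ∩ {a}).card = 1 := by
    rw [Finset.inter_singleton_of_mem h.ha0, Finset.card_singleton]
  have h2 := Finset.card_sdiff_add_card_inter (e 0) ({a} : Finset V)
  rw [h1, h.card3 0 (by have := h.hL; omega)] at h2
  have := Finset.card_le_card hsub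
  omega

theorem cyc_mem_verts (hV : C.verts = (Finset.range L).biUnion e) {v : V} {k : ℕ}
    (hk : k < L) (hv : v ∈ e k) : v ∈ C.verts := by
  rw [hV]
  exact Finset.mem_biUnion.mpr ⟨k, Finset.mem_range.mpr hk, hv⟩

theorem cyc_mem_edges (hE : C.edges = (Finset.range L).image e) {k : ℕ}
    (hk : k < L) : e k ∈ C.edges := by
  rw [hE]
  exact Finset.mem_image.mpr ⟨k, Finset.mem_range.mpr hk, rfl⟩

theorem cycle_tau_ub (h : CycOk e a L) (hE : C.edges = (Finset.range L).image e)
    (hV : C.verts = (Finset.range L).biUnion e) (hm : C.marked = {a}) :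
    tauM C ≤ ((1 + Nat.clog 2 L : ℕ) : ℕ∞) := by
  have hL2 := h.hL
  have hnt := cyc_not_trivial h hE hm
  have hfr := cyc_free2 h hV hm
  by_cases hL3 : 3 ≤ L
  · -- main case
    set m := (L + 1) / 2 with hmdef
    have hm2 : 2 ≤ m := by omega
    have hmlt : m ≤ L - 1 := by omega
    have hcons := (h.h3 hL3).2
    have hne : (e (m - 1) ∩ e m).Nonempty := by
      rw [← Finset.card_pos]
      have hc := hcons (m - 1) (by omega)
      rw [show m - 1 + 1 = m from by omega] at hc
      omega
    obtain ⟨u, hu⟩ := hne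
    rw [Finset.mem_inter] at hu
    have hua : u ≠ a := by
      intro heq
      exact h.hmid (m - 1) (by omega) (by omega) (heq ▸ hu.1)
    have hufree : u ∈ C.verts \ C.marked := by
      rw [Finset.mem_sdiff, hm]
      exact ⟨cyc_mem_verts hV (by omega) hu.2, by simpa using hua⟩
    set A1 := (CycOk.master e a L).sub 0 (m - 1) a u with hA1
    set A2 := (CycOk.master e a L).sub m (L - 1) u a with hA2
    have okA1 : A1.Ok := by
      refine CycOk.seg_ok h hL3 (by omega) (by omega) (by omega) h.ha0 hu.1 hua.symm ?_ ?_
      · intro h0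
        exact h.hmid 1 (by omega) (by omega)
      · intro h0 hmem
        have := h.adj hL3 hua (show m - 1 - 1 < m from by omega) (by omega) hmem hu.2
        omega
    have okA2 : A2.Ok := by
      refine CycOk.seg_ok h hL3 (by omega) (by omega) (by omega) hu.2 h.haL hua ?_ ?_
      · intro h0 hmem
        have := h.adj hL3 hua (show m - 1 < m + 1 from by omega) (by omega) hu.1 hmem
        omega
      · intro h0 hmem
        exact h.hmid (L - 1 - 1) (by omega) (by omega) hmem
    have hA1len : A1.len = m := by show m - 1 + 1 - 0 = m; omega
    have hA2len : A2.len = L - m := by show L - 1 + 1 - m = L - m; omega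
    have ch1 : ∀ v ∈ A1.verts, ∃ k, k ≤ m - 1 ∧ v ∈ e k := by
      intro v hv
      obtain ⟨j, _, hj2, hj3⟩ := Arc.mem_sub_verts.mp hv
      exact ⟨j, hj2, hj3⟩
    have ch2 : ∀ v ∈ A2.verts, ∃ k, m ≤ k ∧ k ≤ L - 1 ∧ v ∈ e k := by
      intro v hv
      obtain ⟨j, hj1, hj2, hj3⟩ := Arc.mem_sub_verts.mp hv
      exact ⟨j, hj1, hj2, hj3⟩
    rw [tauM_big hnt hfr]
    have hclog : Nat.clog 2 L = Nat.clog 2 m + 1 := by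
      rw [Nat.clog_of_two_le (by norm_num) (by omega)]
      rw [show L + 2 - 1 = L + 1 from by omega]
    refine le_trans (add_le_add_right (Finset.inf_le hufree) 1) ?_
    have hsup : ((C.plus u).verts \ (C.plus u).marked).attach.sup
        (fun y => tauM ((C.plus u).minus y.1)) ≤ ((1 + Nat.clog 2 m : ℕ) : ℕ∞) := by
      refine Finset.sup_le ?_
      rintro ⟨y, hy⟩ -
      show tauM ((C.plus u).minus y) ≤ _
      rw [Finset.mem_sdiff] at hy
      have hyu : y ≠ u := by
        intro heq
        rw [heq] at hy
        exact hy.2 (Finset.mem_insert_self u _)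
      have hya : y ≠ a := by
        intro heq
        apply hy.2
        show y ∈ insert u C.marked
        rw [hm, heq]
        simp
      have hymiss : y ∉ A1.verts ∨ y ∉ A2.verts := by
        by_contra hc
        push_neg at hc
        obtain ⟨k, hk, hvk⟩ := ch1 y hc.1
        obtain ⟨l, hl1, hl2, hvl⟩ := ch2 y hc.2
        have hadj := h.adj hL3 hya (show k < l from by omega) (by omega) hvk hvl
        have hk' : k = m - 1 := by omega
        have hl' : l = m := by omega
        have hcard := hcons (m - 1) (by omega)
        rw [show m - 1 + 1 = m from by omega] at hcard
        apply hyu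
        refine Finset.card_le_one.mp (le_of_eq hcard) y ?_ u (Finset.mem_inter.mpr hu)
        exact Finset.mem_inter.mpr ⟨hk' ▸ hvk, hl' ▸ hvl⟩
      have key : ∀ B : Arc V, B.Ok → y ∉ B.verts →
          (∀ v ∈ B.verts, ∃ k, k < L ∧ v ∈ e k) →
          (∀ ed ∈ B.edges, ∃ k, k < L ∧ e k = ed) →
          (B.p = a ∧ B.q = u ∨ B.p = u ∧ B.q = a) →
          tauM ((C.plus u).minus y) ≤ ((1 + Nat.clog 2 B.len : ℕ) : ℕ∞) := by
        intro B okB hyB hBv hBe hBend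
        refine le_trans (tauM_sub (X := B.toNun) ?_ ?_) (arc_tau okB)
        · refine ⟨?_, ?_, ?_⟩
          · intro v hv
            obtain ⟨k, hk, hvk⟩ := hBv v hv
            exact Finset.mem_erase.mpr ⟨fun heq => hyB (heq ▸ hv), cyc_mem_verts hV hk hvk⟩
          · intro ed hed
            simp only [plus, minus, Finset.mem_filter]
            have hsv : ed ⊆ B.verts := by
              obtain ⟨j, hj, hfj⟩ := Arc.mem_edges.mp hed
              exact hfj ▸ Arc.edge_sub_verts hj
            obtain ⟨k, hk, hfk⟩ := hBe ed hed
            exact ⟨hfk ▸ cyc_mem_edges hE hk, fun hye => hyB (hsv hye)⟩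
          · show ({B.p, B.q} : Finset V) = B.toNun.verts ∩ ((C.plus u).minus y).marked
            have hmm : ((C.plus u).minus y).marked = (insert u ({a} : Finset V)).erase y := by
              show (insert u C.marked).erase y = _
              rw [hm]
            rw [hmm]
            ext v
            rw [Finset.mem_inter, Finset.mem_erase, Finset.mem_insert, Finset.mem_insert,
              Finset.mem_singleton, Finset.mem_singleton]
            constructor
            · rintro (rfl | rfl)
              · refine ⟨okB.p_mem_verts, fun heq => hyB (heq ▸ okB.p_mem_verts), ?_⟩
                rcases hBend with ⟨h1, h2⟩ | ⟨h1, h2⟩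
                · exact Or.inr h1
                · exact Or.inl h1
              · refine ⟨okB.q_mem_verts, fun heq => hyB (heq ▸ okB.q_mem_verts), ?_⟩
                rcases hBend with ⟨h1, h2⟩ | ⟨h1, h2⟩
                · exact Or.inl h2
                · exact Or.inr h2
            · rintro ⟨hvB, hvy, (rfl | rfl)⟩
              · rcases hBend with ⟨h1, h2⟩ | ⟨h1, h2⟩
                · exact Or.inr h2.symm
                · exact Or.inl h1.symm
              · rcases hBend with ⟨h1, h2⟩ | ⟨h1, h2⟩
                · exact Or.inl h1.symm
                · exact Or.inr h2.symm
        · intro ed hed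
          obtain ⟨j, hj, hfj⟩ := Arc.mem_edges.mp hed
          exact hfj ▸ Arc.edge_sub_verts hj
      rcases hymiss with hmiss | hmiss
      · have hk1 := key A1 okA1 hmiss
          (fun v hv => by
            obtain ⟨k, hk, hvk⟩ := ch1 v hv
            exact ⟨k, by omega, hvk⟩)
          (fun ed hed => by
            obtain ⟨j, _, hj2, hj3⟩ := Arc.mem_sub_edges.mp hed
            exact ⟨j, by omega, hj3⟩)
          (Or.inl ⟨rfl, rfl⟩)
        rwa [hA1len] at hk1
      · have hk2 := key A2 okA2 hmiss
          (fun v hv => by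
            obtain ⟨k, hk1, hk2, hvk⟩ := ch2 v hv
            exact ⟨k, by omega, hvk⟩)
          (fun ed hed => by
            obtain ⟨j, hj1, hj2, hj3⟩ := Arc.mem_sub_edges.mp hed
            exact ⟨j, by omega, hj3⟩)
          (Or.inr ⟨rfl, rfl⟩)
        refine le_trans hk2 ?_
        rw [hA2len]
        have hmono : Nat.clog 2 (L - m) ≤ Nat.clog 2 m := Nat.clog_mono_right 2 (by omega)
        exact Nat.cast_le.mpr (by omega)
    calc 1 + ((C.plus u).verts \ (C.plus u).marked).attach.sup
          (fun y => tauM ((C.plus u).minus y.1))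
        ≤ 1 + ((1 + Nat.clog 2 m : ℕ) : ℕ∞) := add_le_add_right hsup 1
      _ = ((1 + Nat.clog 2 L : ℕ) : ℕ∞) := by
          rw [hclog]
          push_cast
          ring
  · -- L = 2
    have hL2' : L = 2 := by omega
    have ha1 : a ∈ e 1 := by
      have := h.haL
      rw [show L - 1 = 1 from by omega] at this
      exact this
    have hcd : (e 0 ∩ e 1).card = 2 := h.h2 hL2'
    have hne : ((e 0 ∩ e 1).erase a).Nonempty := by
      rw [← Finset.card_pos, Finset.card_erase_of_mem (Finset.mem_inter.mpr ⟨h.ha0, ha1⟩), hcd]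
      omega
    obtain ⟨u, hu⟩ := hne
    rw [Finset.mem_erase, Finset.mem_inter] at hu
    have hua : u ≠ a := hu.1
    have hu0 : u ∈ e 0 := hu.2.1
    have hu1 : u ∈ e 1 := hu.2.2
    have hufree : u ∈ C.verts \ C.marked := by
      rw [Finset.mem_sdiff, hm]
      exact ⟨cyc_mem_verts hV (by omega) hu0, by simpa using hua⟩
    rw [tauM_big hnt hfr]
    have hsup : ((C.plus u).verts \ (C.plus u).marked).attach.sup
        (fun y => tauM ((C.plus u).minus y.1)) ≤ 1 := by
      refine Finset.sup_le ?_
      rintro ⟨y, hy⟩ -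
      show tauM ((C.plus u).minus y) ≤ _
      rw [Finset.mem_sdiff] at hy
      have hyu : y ≠ u := by
        intro heq
        rw [heq] at hy
        exact hy.2 (Finset.mem_insert_self u _)
      have hya : y ≠ a := by
        intro heq
        apply hy.2
        show y ∈ insert u C.marked
        rw [hm, heq]
        simp
      have hymiss : y ∉ e 0 ∨ y ∉ e 1 := by
        by_contra hc
        push_neg at hc
        have hsub3 : ({a, u, y} : Finset V) ⊆ e 0 ∩ e 1 := by
          intro v hv
          rcases Finset.mem_insert.mp hv with rfl | hv'
          · exact Finset.mem_inter.mpr ⟨h.ha0, ha1⟩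
          · rcases Finset.mem_insert.mp hv' with rfl | hv''
            · exact Finset.mem_inter.mpr ⟨hu0, hu1⟩
            · rw [Finset.mem_singleton] at hv''
              exact hv'' ▸ Finset.mem_inter.mpr ⟨hc.1, hc.2⟩
        have hc3 : ({a, u, y} : Finset V).card = 3 := by
          rw [Finset.card_insert_of_notMem, Finset.card_insert_of_notMem, Finset.card_singleton]
          · simp [hyu.symm]
          · simp only [Finset.mem_insert, Finset.mem_singleton]
            push_neg
            exact ⟨hua.symm, hya.symm⟩
        have := Finset.card_le_card hsub3
        omega
      obtain ⟨k, hk2, hyk⟩ : ∃ k, k < 2 ∧ y ∉ e k := by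
        rcases hymiss with h1 | h1
        · exact ⟨0, by omega, h1⟩
        · exact ⟨1, by omega, h1⟩
      have hek : e k ∈ ((C.plus u).minus y).edges := by
        simp only [plus, minus, Finset.mem_filter]
        exact ⟨cyc_mem_edges hE (by omega), hyk⟩
      have hak : a ∈ e k ∧ u ∈ e k := by
        interval_cases k
        · exact ⟨h.ha0, hu0⟩
        · exact ⟨ha1, hu1⟩
      have hcard : (e k \ ((C.plus u).minus y).marked).card ≤ 1 := by
        have hsub2 : ({a, u} : Finset V) ⊆ e k ∩ ((C.plus u).minus y).marked := by
          have hma : a ∈ (insert u C.marked).erase y := by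
            rw [hm]
            exact Finset.mem_erase.mpr ⟨hya.symm, by simp⟩
          have hmu : u ∈ (insert u C.marked).erase y :=
            Finset.mem_erase.mpr ⟨hyu.symm, Finset.mem_insert_self _ _⟩
          intro w hw
          rcases Finset.mem_insert.mp hw with h1 | h1
          · rw [h1]
            exact Finset.mem_inter.mpr ⟨hak.1, hma⟩
          · rw [Finset.mem_singleton] at h1
            rw [h1]
            exact Finset.mem_inter.mpr ⟨hak.2, hmu⟩
        have h1 := Finset.card_sdiff_add_card_inter (e k) ((C.plus u).minus y).marked
        have h2 : 2 ≤ (e k ∩ ((C.plus u).minus y).marked).card := by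
          have := Finset.card_le_card hsub2
          rwa [Finset.card_pair (by exact fun heq => hua (heq.symm ▸ rfl))] at this
        have h3 := h.card3 k (by omega)
        omega
      have htriv : TrivialMakerWin ((C.plus u).minus y) := ⟨e k, hek, hcard⟩
      rw [tauM_trivial htriv]
      refine le_trans (Finset.inf_le hek) ?_
      exact_mod_cast hcard
    refine le_trans (add_le_add_right (Finset.inf_le hufree) 1) ?_
    refine le_trans (add_le_add_right hsup 1) ?_
    have : Nat.clog 2 L = 1 := by
      rw [hL2']
      exact Nat.clog_eq_one (by norm_num) (by norm_num)
    rw [this]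
    norm_num

end CycleUB

end MB
namespace MB
open MarkedHypergraph

variable {V : Type} [DecidableEq V]

theorem inter_union_card_le {ed s t : Finset V} {c1 c2 : ℕ} (h1 : (ed ∩ s).card ≤ c1)
    (h2 : (ed ∩ t).card ≤ c2) : (ed ∩ (s ∪ t)).card ≤ c1 + c2 := by
  rw [Finset.inter_union_distrib_left]
  exact le_trans (Finset.card_union_le _ _) (by omega)

theorem inter_singleton_card_le {ed : Finset V} {v : V} : (ed ∩ {v}).card ≤ 1 :=
  le_trans (Finset.card_le_card Finset.inter_subset_right) (by simp)

theorem inter_singleton_card_zero {ed : Finset V} {v : V} (h : v ∉ ed) :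
    (ed ∩ {v}).card = 0 := by
  rw [Finset.card_eq_zero, Finset.eq_empty_iff_forall_notMem]
  intro w hw
  rw [Finset.mem_inter, Finset.mem_singleton] at hw
  exact h (hw.2 ▸ hw.1)

namespace CycOk

/-- a single-edge segment arc of a cycle is Ok -/
theorem seg1_ok {e : ℕ → Finset V} {a : V} {L : ℕ} (h : CycOk e a L) {s : ℕ} (hs : s < L)
    {p' q' : V} (hp : p' ∈ e s) (hq : q' ∈ e s) (hpq : p' ≠ q') :
    ((master e a L).sub s s p' q').Ok := by
  constructor
  · show 1 ≤ s + 1 - s; omega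
  · intro i hi
    simp only [master, Arc.sub] at hi ⊢
    rw [show s + i = s from by omega]
    exact h.card3 s hs
  · intro i hi
    simp only [master, Arc.sub] at hi
    omega
  · intro i j hij hj
    simp only [master, Arc.sub] at hj
    omega
  · show p' ∈ e (s + 0); simpa using hp
  · show q' ∈ e (s + (s + 1 - s - 1))
    rw [show s + (s + 1 - s - 1) = s from by omega]
    exact hq
  · exact hpq
  · intro i h1 h2
    simp only [master, Arc.sub] at h2
    omega
  · intro i h1
    simp only [master, Arc.sub] at h1
    omega

end CycOk

section CycGood

variable {C : MarkedHypergraph V} {a : V} {L : ℕ} {e : ℕ → Finset V}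

/-- Assemble a `GoodSys` for the position after the first round on a necklace. -/
theorem cyc_goodsys (h : CycOk e a L) (hE : C.edges = (Finset.range L).image e)
    (hV : C.verts = (Finset.range L).biUnion e) (hm : C.marked = {a})
    {x y : V} (hxa : x ≠ a) (hya : y ≠ a) (hyx : y ≠ x) {n : ℕ}
    (P : List (Arc V))
    (hPok : ∀ A ∈ P, A.Ok)
    (hPv : ∀ A ∈ P, ∀ v ∈ A.verts, ∃ k, k < L ∧ v ∈ e k)
    (hPy : ∀ A ∈ P, y ∉ A.verts)
    (hPe : ∀ A ∈ P, ∀ ed ∈ A.edges, ∃ k, k < L ∧ e k = ed)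
    (hPcov : ∀ k, k < L → y ∉ e k → ∃ A ∈ P, e k ∈ A.edges)
    (hPmark : ∀ A ∈ P, ∀ v ∈ A.verts, (v = x ∨ v = a) → v = A.p ∨ v = A.q)
    (hPpw : List.Pairwise (fun A B' => ∀ v, v ∈ A.verts → v ∈ B'.verts → (v = x ∨ v = a)) P)
    (hPnun : ∀ A ∈ P, (A.p = x ∨ A.p = a) → (A.q = x ∨ A.q = a) → n ≤ A.len) :
    GoodSys n ((C.plus x).minus y) := by
  have hmark'' : ((C.plus x).minus y).marked = (insert x ({a} : Finset V)).erase y := by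
    show (insert x C.marked).erase y = _
    rw [hm]
  have hmm : ∀ v, v ∈ ((C.plus x).minus y).marked → v = x ∨ v = a := by
    intro v hv
    rw [hmark''] at hv
    rcases Finset.mem_insert.mp (Finset.mem_erase.mp hv).2 with h1 | h1
    · exact Or.inl h1
    · exact Or.inr (Finset.mem_singleton.mp h1)
  refine ⟨P, ⟨hPok, ?_, ?_, ?_, ?_, ?_⟩, ?_⟩
  · intro A hA v hv
    obtain ⟨k, hk, hvk⟩ := hPv A hA v hv
    refine Finset.mem_erase.mpr ⟨fun heq => hPy A hA (heq ▸ hv), ?_⟩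
    exact cyc_mem_verts hV hk hvk
  · intro A hA ed hed
    have hsv : ed ⊆ A.verts := by
      obtain ⟨j, hj, hfj⟩ := Arc.mem_edges.mp hed
      exact hfj ▸ Arc.edge_sub_verts hj
    obtain ⟨k, hk, hfk⟩ := hPe A hA ed hed
    simp only [plus, minus, Finset.mem_filter]
    exact ⟨hfk ▸ cyc_mem_edges hE hk, fun hye => hPy A hA (hsv hye)⟩
  · intro ed hed
    simp only [plus, minus, Finset.mem_filter] at hed
    have hed1 : ed ∈ C.edges := hed.1
    rw [hE] at hed1
    obtain ⟨k, hk, hfk⟩ := Finset.mem_image.mp hed1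
    rw [Finset.mem_range] at hk
    obtain ⟨A, hA, heA⟩ := hPcov k hk (fun hy' => hed.2 (hfk ▸ hy'))
    exact ⟨A, hA, hfk ▸ heA⟩
  · intro A hA v hv hvm
    exact hPmark A hA v hv (hmm v hvm)
  · refine hPpw.imp_of_mem (fun {A B'} hA hB' hr v h1 h2 => ?_)
    rw [hmark'']
    have hvy : v ≠ y := fun heq => hPy A hA (heq ▸ h1)
    rcases hr v h1 h2 with h3 | h3
    · exact Finset.mem_erase.mpr ⟨hvy, h3 ▸ Finset.mem_insert_self _ _⟩
    · exact Finset.mem_erase.mpr ⟨hvy, Finset.mem_insert_of_mem (by simp [h3])⟩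
  · intro A hA hN
    obtain ⟨hp, hq⟩ := hN
    exact hPnun A hA (hmm _ hp) (hmm _ hq)

end CycGood

end MB
namespace MB
open MarkedHypergraph

variable {V : Type} [DecidableEq V]

namespace CycOk

theorem rev {e : ℕ → Finset V} {a : V} {L : ℕ} (h : CycOk e a L) :
    CycOk (fun k => e (L - 1 - k)) a L := by
  have hL := h.hL
  constructor
  · exact h.hL
  · intro i hi
    exact h.card3 _ (by omega)
  · show a ∈ e (L - 1 - 0)
    simpa using h.haL
  · show a ∈ e (L - 1 - (L - 1))
    rw [show L - 1 - (L - 1) = 0 from by omega]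
    exact h.ha0
  · intro i h1 h2
    exact h.hmid (L - 1 - i) (by omega) (by omega)
  · intro h2
    show (e (L - 1 - 0) ∩ e (L - 1 - 1)).card = 2
    rw [show L - 1 - 0 = 1 from by omega, show L - 1 - 1 = 0 from by omega,
      Finset.inter_comm]
    exact h.h2 h2
  · intro h3
    constructor
    · show e (L - 1 - 0) ∩ e (L - 1 - (L - 1)) = {a}
      rw [show L - 1 - 0 = L - 1 from by omega, show L - 1 - (L - 1) = 0 from by omega,
        Finset.inter_comm]
      exact (h.h3 h3).1
    · intro i hi
      show (e (L - 1 - i) ∩ e (L - 1 - (i + 1))).card = 1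
      rw [show L - 1 - i = (L - 1 - (i + 1)) + 1 from by omega, Finset.inter_comm]
      exact (h.h3 h3).2 _ (by omega)
  · intro i j hij hj h2 h3
    show e (L - 1 - i) ∩ e (L - 1 - j) = ∅
    rw [Finset.inter_comm]
    exact h.far (L - 1 - j) (L - 1 - i) (by omega) (by omega) (by omega) (by omega)

theorem rev_image {e : ℕ → Finset V} {L : ℕ} :
    (Finset.range L).image (fun k => e (L - 1 - k)) = (Finset.range L).image e := by
  ext ed
  simp only [Finset.mem_image, Finset.mem_range]
  constructor
  · rintro ⟨k, hk, rfl⟩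
    exact ⟨L - 1 - k, by omega, rfl⟩
  · rintro ⟨k, hk, rfl⟩
    exact ⟨L - 1 - k, by omega, by rw [show L - 1 - (L - 1 - k) = k from by omega]⟩

theorem rev_biUnion {e : ℕ → Finset V} {L : ℕ} :
    (Finset.range L).biUnion (fun k => e (L - 1 - k)) = (Finset.range L).biUnion e := by
  ext v
  simp only [Finset.mem_biUnion, Finset.mem_range]
  constructor
  · rintro ⟨k, hk, hv⟩
    exact ⟨L - 1 - k, by omega, hv⟩
  · rintro ⟨k, hk, hv⟩
    exact ⟨L - 1 - k, by omega, by rw [show L - 1 - (L - 1 - k) = k from by omega]; exact hv⟩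

end CycOk

section CycCases

variable {C : MarkedHypergraph V} {a : V} {L : ℕ} {e : ℕ → Finset V}

theorem yfree_of (hV : C.verts = (Finset.range L).biUnion e) (hm : C.marked = {a})
    {x y : V} {k : ℕ} (hk : k < L) (hyk : y ∈ e k) (h2 : y ≠ x) (h3 : y ≠ a) :
    y ∈ (C.plus x).verts \ (C.plus x).marked := by
  rw [Finset.mem_sdiff]
  refine ⟨cyc_mem_verts hV hk hyk, ?_⟩
  intro hmem
  rcases Finset.mem_insert.mp hmem with h4 | h4
  · exact h2 h4
  · rw [hm, Finset.mem_singleton] at h4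
    exact h3 h4

/-- Junction case on the cycle, when the left side is at most as long as the right side. -/
theorem cyc_case_junction (h : CycOk e a L) (hE : C.edges = (Finset.range L).image e)
    (hV : C.verts = (Finset.range L).biUnion e) (hm : C.marked = {a}) (hL3 : 3 ≤ L)
    {x : V} (hxa : x ≠ a) {i : ℕ} (hi : i + 1 < L)
    (hx1 : x ∈ e i) (hx2 : x ∈ e (i + 1)) (hside : i + 1 ≤ L - 1 - i) :
    ∃ y ∈ (C.plus x).verts \ (C.plus x).marked, GoodSys ((L + 1) / 2) ((C.plus x).minus y) := by
  have hcons := (h.h3 hL3).2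
  -- y : the vertex of e 0 outside e 1 and different from a
  have hpick : (e 0 \ (e 1 ∪ {a})).Nonempty := by
    refine pick3' (h.card3 0 (by omega)) ?_
    exact le_of_eq (hcons 0 (by omega))
  obtain ⟨y, hy⟩ := hpick
  rw [Finset.mem_sdiff, Finset.mem_union, Finset.mem_singleton] at hy
  push_neg at hy
  obtain ⟨hy0, hy1, hya⟩ := hy
  have hyonly : ∀ k, k < L → y ∈ e k → k = 0 := by
    intro k hk hyk
    by_contra hk0
    have := h.adj hL3 hya (show 0 < k from by omega) hk hy0 hyk
    exact hy1 (by rw [show k = 1 from by omega] at hyk; exact hyk)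
  have hyx : y ≠ x := by
    intro heq
    subst heq
    -- y ∈ e i and e (i+1); y only in e 0 : contradiction
    have h1 := hyonly (i + 1) hi hx2
    omega
    -- XR : the surviving right nunchaku from x to a
  set XR := (CycOk.master e a L).sub (i + 1) (L - 1) x a with hXR
  have okXR : XR.Ok := by
    refine CycOk.seg_ok h hL3 (by omega) (by omega) (by omega) hx2 h.haL hxa ?_ ?_
    · intro h0 hmem
      have := h.adj hL3 hxa (show i < i + 2 from by omega) (by omega) hx1 hmem
      omega
    · intro h0 hmem
      exact h.hmid (L - 1 - 1) (by omega) (by omega) hmem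
  have chXR : ∀ v ∈ XR.verts, ∃ k, i + 1 ≤ k ∧ k ≤ L - 1 ∧ v ∈ e k := by
    intro v hv
    obtain ⟨j, hj1, hj2, hj3⟩ := Arc.mem_sub_verts.mp hv
    exact ⟨j, hj1, hj2, hj3⟩
  have hyXR : y ∉ XR.verts := by
    intro hv
    obtain ⟨k, hk1, hk2, hvk⟩ := chXR y hv
    have := hyonly k (by omega) hvk
    omega
  have hXRnun : (L + 1) / 2 ≤ XR.len := by
    show (L + 1) / 2 ≤ L - 1 + 1 - (i + 1)
    omega
  by_cases hi0 : 1 ≤ i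
  · -- middle piece [1..i] with endpoints p₂, x
    have hpick2 : (e 1 \ ((if 2 ≤ i then e 2 else ∅) ∪ ({x} ∪ {a}))).Nonempty := by
      refine pick3 (h.card3 1 (by omega)) ?_
      refine inter_union_card_le (c1 := 1) (c2 := 1) ?_
        (inter_union_card_le (c1 := 1) (c2 := 0) inter_singleton_card_le
          (le_of_eq (inter_singleton_card_zero (h.hmid 1 (by omega) (by omega)))))
      by_cases h2 : 2 ≤ i
      · rw [if_pos h2]
        exact le_of_eq (hcons 1 (by omega))
      · rw [if_neg h2]
        simp
    obtain ⟨p₂, hp₂⟩ := hpick2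
    rw [Finset.mem_sdiff, Finset.mem_union, Finset.mem_union, Finset.mem_singleton,
      Finset.mem_singleton] at hp₂
    push_neg at hp₂
    obtain ⟨hp₂1, hp₂if, hp₂x, hp₂a⟩ := hp₂
    set Xm := (CycOk.master e a L).sub 1 i p₂ x with hXm
    have okXm : Xm.Ok := by
      refine CycOk.seg_ok h hL3 hi0 (by omega) (by omega) hp₂1 hx1 hp₂x ?_ ?_
      · intro h0
        rw [if_pos (show 2 ≤ i from by omega)] at hp₂if
        exact hp₂if
      · intro h0 hmem
        have := h.adj hL3 hxa (show i - 1 < i + 1 from by omega) hi hmem hx2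
        omega
    have chXm : ∀ v ∈ Xm.verts, ∃ k, 1 ≤ k ∧ k ≤ i ∧ v ∈ e k := by
      intro v hv
      obtain ⟨j, hj1, hj2, hj3⟩ := Arc.mem_sub_verts.mp hv
      exact ⟨j, hj1, hj2, hj3⟩
    have hyXm : y ∉ Xm.verts := by
      intro hv
      obtain ⟨k, hk1, hk2, hvk⟩ := chXm y hv
      have := hyonly k (by omega) hvk
      omega
    refine ⟨y, yfree_of hV hm (k := 0) (by omega) hy0 hyx hya, ?_⟩
    refine cyc_goodsys h hE hV hm hxa hya hyx [Xm, XR] ?_ ?_ ?_ ?_ ?_ ?_ ?_ ?_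
    · intro A hA
      simp only [List.mem_cons, List.not_mem_nil, or_false] at hA
      rcases hA with rfl | rfl
      · exact okXm
      · exact okXR
    · intro A hA v hv
      simp only [List.mem_cons, List.not_mem_nil, or_false] at hA
      rcases hA with rfl | rfl
      · obtain ⟨k, hk1, hk2, hvk⟩ := chXm v hv
        exact ⟨k, by omega, hvk⟩
      · obtain ⟨k, hk1, hk2, hvk⟩ := chXR v hv
        exact ⟨k, by omega, hvk⟩
    · intro A hA
      simp only [List.mem_cons, List.not_mem_nil, or_false] at hA
      rcases hA with rfl | rfl
      · exact hyXm
      · exact hyXR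
    · intro A hA ed hed
      simp only [List.mem_cons, List.not_mem_nil, or_false] at hA
      rcases hA with rfl | rfl
      · obtain ⟨j, hj1, hj2, hj3⟩ := Arc.mem_sub_edges.mp hed
        exact ⟨j, by omega, hj3⟩
      · obtain ⟨j, hj1, hj2, hj3⟩ := Arc.mem_sub_edges.mp hed
        exact ⟨j, by omega, hj3⟩
    · intro k hk hyk
      have hk0 : k ≠ 0 := fun heq => hyk (heq ▸ hy0)
      by_cases h2 : k ≤ i
      · exact ⟨Xm, by simp, Arc.mem_sub_edges.mpr ⟨k, by omega, h2, rfl⟩⟩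
      · exact ⟨XR, by simp, Arc.mem_sub_edges.mpr ⟨k, by omega, by omega, rfl⟩⟩
    · intro A hA v hv hva
      simp only [List.mem_cons, List.not_mem_nil, or_false] at hA
      rcases hA with rfl | rfl
      · rcases hva with rfl | rfl
        · exact Or.inr rfl
        · exfalso
          obtain ⟨k, hk1, hk2, hvk⟩ := chXm v hv
          exact h.hmid k (by omega) (by omega) hvk
      · rcases hva with rfl | rfl
        · exact Or.inl rfl
        · exact Or.inr rfl
    · refine List.Pairwise.cons ?_ (List.pairwise_singleton _ _)
      intro Y hY
      simp only [List.mem_singleton] at hY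
      subst hY
      intro v h1 h2
      by_cases hvx : v = x
      · exact Or.inl hvx
      by_cases hva : v = a
      · exact Or.inr hva
      exfalso
      obtain ⟨k, hk1, hk2, hvk⟩ := chXm v h1
      obtain ⟨l, hl1, hl2, hvl⟩ := chXR v h2
      have hadj := h.adj hL3 hva (show k < l from by omega) (by omega) hvk hvl
      have hk' : k = i := by omega
      have hl' : l = i + 1 := by omega
      apply hvx
      refine Finset.card_le_one.mp (le_of_eq (hcons i hi)) v ?_ x
        (Finset.mem_inter.mpr ⟨hx1, hx2⟩)
      exact Finset.mem_inter.mpr ⟨hk' ▸ hvk, hl' ▸ hvl⟩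
    · intro A hA h1 h2
      simp only [List.mem_cons, List.not_mem_nil, or_false] at hA
      rcases hA with rfl | rfl
      · exfalso
        rcases h1 with h3 | h3
        · exact hp₂x h3
        · exact hp₂a h3
      · exact hXRnun
  · -- i = 0 : only the right piece survives
    refine ⟨y, yfree_of hV hm (k := 0) (by omega) hy0 hyx hya, ?_⟩
    refine cyc_goodsys h hE hV hm hxa hya hyx [XR] ?_ ?_ ?_ ?_ ?_ ?_ ?_ ?_
    · intro A hA
      simp only [List.mem_singleton] at hA
      exact hA ▸ okXR
    · intro A hA v hv
      simp only [List.mem_singleton] at hA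
      subst hA
      obtain ⟨k, hk1, hk2, hvk⟩ := chXR v hv
      exact ⟨k, by omega, hvk⟩
    · intro A hA
      simp only [List.mem_singleton] at hA
      exact hA ▸ hyXR
    · intro A hA ed hed
      simp only [List.mem_singleton] at hA
      subst hA
      obtain ⟨j, hj1, hj2, hj3⟩ := Arc.mem_sub_edges.mp hed
      exact ⟨j, by omega, hj3⟩
    · intro k hk hyk
      have hk0 : k ≠ 0 := fun heq => hyk (heq ▸ hy0)
      exact ⟨XR, by simp, Arc.mem_sub_edges.mpr ⟨k, by omega, by omega, rfl⟩⟩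
    · intro A hA v hv hva
      simp only [List.mem_singleton] at hA
      subst hA
      rcases hva with rfl | rfl
      · exact Or.inl rfl
      · exact Or.inr rfl
    · exact List.pairwise_singleton _ _
    · intro A hA h1 h2
      simp only [List.mem_singleton] at hA
      subst hA
      exact hXRnun

end CycCases

end MB
namespace MB
open MarkedHypergraph

variable {V : Type} [DecidableEq V]

section CycCases2

variable {C : MarkedHypergraph V} {a : V} {L : ℕ} {e : ℕ → Finset V}

/-- Center case with `i = 0`. -/
theorem cyc_case_center0 (h : CycOk e a L) (hE : C.edges = (Finset.range L).image e)
    (hV : C.verts = (Finset.range L).biUnion e) (hm : C.marked = {a}) (hL3 : 3 ≤ L)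
    {x : V} (hxa : x ≠ a) (hx0 : x ∈ e 0) (huniq : ∀ j, j < L → x ∈ e j → j = 0) :
    ∃ y ∈ (C.plus x).verts \ (C.plus x).marked, GoodSys ((L + 1) / 2) ((C.plus x).minus y) := by
  have hcons := (h.h3 hL3).2
  have hne : (e 0 ∩ e 1).Nonempty := by
    rw [← Finset.card_pos, hcons 0 (by omega)]
    omega
  obtain ⟨y, hy⟩ := hne
  rw [Finset.mem_inter] at hy
  obtain ⟨hy0, hy1⟩ := hy
  have hya : y ≠ a := fun heq => h.hmid 1 (by omega) (by omega) (heq ▸ hy1)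
  have hyx : y ≠ x := by
    intro heq
    have := huniq 1 (by omega) (heq ▸ hy1)
    omega
  have hyonly : ∀ k, k < L → y ∈ e k → k = 0 ∨ k = 1 := by
    intro k hk hyk
    by_contra hc
    push_neg at hc
    have h2 := h.adj hL3 hya (show 1 < k from by omega) hk hy1 hyk
    have h3 := h.adj hL3 hya (show 0 < k from by omega) hk hy0 hyk
    omega
  have hpick : (e 2 \ ((if 3 ≤ L - 1 then e 3 else ∅) ∪ {a})).Nonempty := by
    refine pick3' (h.card3 2 (by omega)) ?_
    by_cases h2 : 3 ≤ L - 1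
    · rw [if_pos h2]
      exact le_of_eq (hcons 2 (by omega))
    · rw [if_neg h2]
      simp
  obtain ⟨p', hp'⟩ := hpick
  rw [Finset.mem_sdiff, Finset.mem_union, Finset.mem_singleton] at hp'
  push_neg at hp'
  obtain ⟨hp1, hp2, hp3⟩ := hp'
  set XR := (CycOk.master e a L).sub 2 (L - 1) p' a with hXR
  have okXR : XR.Ok := by
    refine CycOk.seg_ok h hL3 (by omega) (by omega) (by omega) hp1 h.haL hp3 ?_ ?_
    · intro h0
      rw [if_pos (show 3 ≤ L - 1 from by omega)] at hp2
      exact hp2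
    · intro h0 hmem
      exact h.hmid (L - 1 - 1) (by omega) (by omega) hmem
  have chXR : ∀ v ∈ XR.verts, ∃ k, 2 ≤ k ∧ k ≤ L - 1 ∧ v ∈ e k := by
    intro v hv
    obtain ⟨j, hj1, hj2, hj3⟩ := Arc.mem_sub_verts.mp hv
    exact ⟨j, hj1, hj2, hj3⟩
  have hyXR : y ∉ XR.verts := by
    intro hv
    obtain ⟨k, hk1, hk2, hvk⟩ := chXR y hv
    rcases hyonly k (by omega) hvk with h1 | h1 <;> omega
  have hxXR : x ∉ XR.verts := by
    intro hv
    obtain ⟨k, hk1, hk2, hvk⟩ := chXR x hv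
    have := huniq k (by omega) hvk
    omega
  refine ⟨y, yfree_of hV hm (k := 0) (by omega) hy0 hyx hya, ?_⟩
  refine cyc_goodsys h hE hV hm hxa hya hyx [XR] ?_ ?_ ?_ ?_ ?_ ?_ ?_ ?_
  · intro A hA
    simp only [List.mem_singleton] at hA
    exact hA ▸ okXR
  · intro A hA v hv
    simp only [List.mem_singleton] at hA
    subst hA
    obtain ⟨k, hk1, hk2, hvk⟩ := chXR v hv
    exact ⟨k, by omega, hvk⟩
  · intro A hA
    simp only [List.mem_singleton] at hA
    exact hA ▸ hyXR
  · intro A hA ed hed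
    simp only [List.mem_singleton] at hA
    subst hA
    obtain ⟨j, hj1, hj2, hj3⟩ := Arc.mem_sub_edges.mp hed
    exact ⟨j, by omega, hj3⟩
  · intro k hk hyk
    have hk0 : k ≠ 0 := fun heq => hyk (heq ▸ hy0)
    have hk1 : k ≠ 1 := fun heq => hyk (heq ▸ hy1)
    exact ⟨XR, by simp, Arc.mem_sub_edges.mpr ⟨k, by omega, by omega, rfl⟩⟩
  · intro A hA v hv hva
    simp only [List.mem_singleton] at hA
    subst hA
    rcases hva with rfl | rfl
    · exact absurd hv hxXR
    · exact Or.inr rfl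
  · exact List.pairwise_singleton _ _
  · intro A hA h1 h2
    simp only [List.mem_singleton] at hA
    subst hA
    exfalso
    rcases h1 with h3 | h3
    · exact hxXR (h3 ▸ okXR.p_mem_verts)
    · exact hp3 h3

/-- Center case with `1 ≤ i ≤ L - 2` and left side at most as long as the right side. -/
theorem cyc_case_center_mid (h : CycOk e a L) (hE : C.edges = (Finset.range L).image e)
    (hV : C.verts = (Finset.range L).biUnion e) (hm : C.marked = {a}) (hL3 : 3 ≤ L)
    {x : V} (hxa : x ≠ a) {i : ℕ} (hi1 : 1 ≤ i) (hi2 : i ≤ L - 2) (hxi : x ∈ e i)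
    (huniq : ∀ j, j < L → x ∈ e j → j = i) (hside : i + 1 ≤ L - i) :
    ∃ y ∈ (C.plus x).verts \ (C.plus x).marked, GoodSys ((L + 1) / 2) ((C.plus x).minus y) := by
  have hcons := (h.h3 hL3).2
  have hpick : (e (i - 1) \ ((if 2 ≤ i then e (i - 2) else ∅) ∪ (e i ∪ {a}))).Nonempty := by
    refine pick3 (h.card3 (i - 1) (by omega)) ?_
    by_cases h2 : 2 ≤ i
    · rw [if_pos h2]
      refine inter_union_card_le (c1 := 1) (c2 := 1) ?_
        (inter_union_card_le (c1 := 1) (c2 := 0) ?_ ?_)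
      · have hc := hcons (i - 2) (by omega)
        rw [show i - 2 + 1 = i - 1 from by omega, Finset.inter_comm] at hc
        omega
      · have hc := hcons (i - 1) (by omega)
        rw [show i - 1 + 1 = i from by omega] at hc
        omega
      · exact le_of_eq (inter_singleton_card_zero (h.hmid (i - 1) (by omega) (by omega)))
    · rw [if_neg h2]
      rw [Finset.empty_union]
      refine inter_union_card_le (c1 := 1) (c2 := 1) ?_ inter_singleton_card_le
      have hc := hcons (i - 1) (by omega)
      rw [show i - 1 + 1 = i from by omega] at hc
      omega
  obtain ⟨y, hy⟩ := hpick
  rw [Finset.mem_sdiff, Finset.mem_union, Finset.mem_union, Finset.mem_singleton] at hy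
  push_neg at hy
  obtain ⟨hy1, hyif, hyi, hya⟩ := hy
  have hyx : y ≠ x := by
    intro heq
    have := huniq (i - 1) (by omega) (heq ▸ hy1)
    omega
  have hyonly : ∀ k, k < L → y ∈ e k → k = i - 1 := by
    intro k hk hyk
    rcases lt_trichotomy k (i - 1) with h1 | h1 | h1
    · have h2 := h.adj hL3 hya h1 (by omega) hyk hy1
      exfalso
      rw [if_pos (show 2 ≤ i from by omega)] at hyif
      exact hyif (by rw [show i - 2 = k from by omega]; exact hyk)
    · exact h1
    · have h2 := h.adj hL3 hya h1 hk hy1 hyk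
      exfalso
      exact hyi (by rw [show i = k from by omega]; exact hyk)
  set XR := (CycOk.master e a L).sub i (L - 1) x a with hXR
  have okXR : XR.Ok := by
    refine CycOk.seg_ok h hL3 (by omega) (by omega) (by omega) hxi h.haL hxa ?_ ?_
    · intro h0 hmem
      have := huniq (i + 1) (by omega) hmem
      omega
    · intro h0 hmem
      exact h.hmid (L - 1 - 1) (by omega) (by omega) hmem
  have chXR : ∀ v ∈ XR.verts, ∃ k, i ≤ k ∧ k ≤ L - 1 ∧ v ∈ e k := by
    intro v hv
    obtain ⟨j, hj1, hj2, hj3⟩ := Arc.mem_sub_verts.mp hv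
    exact ⟨j, hj1, hj2, hj3⟩
  have hyXR : y ∉ XR.verts := by
    intro hv
    obtain ⟨k, hk1, hk2, hvk⟩ := chXR y hv
    have := hyonly k (by omega) hvk
    omega
  have hXRnun : (L + 1) / 2 ≤ XR.len := by
    show (L + 1) / 2 ≤ L - 1 + 1 - i
    omega
  by_cases hi2' : 2 ≤ i
  · -- left piece [0 .. i-2]
    have hpickq : (e (i - 2) \ ((if 3 ≤ i then e (i - 3) else ∅) ∪ {a})).Nonempty := by
      refine pick3' (h.card3 (i - 2) (by omega)) ?_
      by_cases h3 : 3 ≤ i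
      · rw [if_pos h3]
        have hc := hcons (i - 3) (by omega)
        rw [show i - 3 + 1 = i - 2 from by omega, Finset.inter_comm] at hc
        omega
      · rw [if_neg h3]
        simp
    obtain ⟨q', hq'⟩ := hpickq
    rw [Finset.mem_sdiff, Finset.mem_union, Finset.mem_singleton] at hq'
    push_neg at hq'
    obtain ⟨hq1, hqif, hqa⟩ := hq'
    set XL := (CycOk.master e a L).sub 0 (i - 2) a q' with hXL
    have okXL : XL.Ok := by
      refine CycOk.seg_ok h hL3 (by omega) (by omega) (by omega) h.ha0 hq1
        (fun heq => hqa heq.symm) ?_ ?_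
      · intro h0
        exact h.hmid 1 (by omega) (by omega)
      · intro h0
        rw [if_pos (show 3 ≤ i from by omega)] at hqif
        rw [show i - 2 - 1 = i - 3 from by omega]
        exact hqif
    have chXL : ∀ v ∈ XL.verts, ∃ k, k ≤ i - 2 ∧ v ∈ e k := by
      intro v hv
      obtain ⟨j, hj1, hj2, hj3⟩ := Arc.mem_sub_verts.mp hv
      exact ⟨j, hj2, hj3⟩
    have hyXL : y ∉ XL.verts := by
      intro hv
      obtain ⟨k, hk1, hvk⟩ := chXL y hv
      have := hyonly k (by omega) hvk
      omega
    have hxXL : x ∉ XL.verts := by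
      intro hv
      obtain ⟨k, hk1, hvk⟩ := chXL x hv
      have := huniq k (by omega) hvk
      omega
    have hqx : q' ≠ x := by
      intro heq
      have := huniq (i - 2) (by omega) (heq ▸ hq1)
      omega
    refine ⟨y, yfree_of hV hm (k := i - 1) (by omega) hy1 hyx hya, ?_⟩
    refine cyc_goodsys h hE hV hm hxa hya hyx [XL, XR] ?_ ?_ ?_ ?_ ?_ ?_ ?_ ?_
    · intro A hA
      simp only [List.mem_cons, List.not_mem_nil, or_false] at hA
      rcases hA with rfl | rfl
      · exact okXL
      · exact okXR
    · intro A hA v hv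
      simp only [List.mem_cons, List.not_mem_nil, or_false] at hA
      rcases hA with rfl | rfl
      · obtain ⟨k, hk1, hvk⟩ := chXL v hv
        exact ⟨k, by omega, hvk⟩
      · obtain ⟨k, hk1, hk2, hvk⟩ := chXR v hv
        exact ⟨k, by omega, hvk⟩
    · intro A hA
      simp only [List.mem_cons, List.not_mem_nil, or_false] at hA
      rcases hA with rfl | rfl
      · exact hyXL
      · exact hyXR
    · intro A hA ed hed
      simp only [List.mem_cons, List.not_mem_nil, or_false] at hA
      rcases hA with rfl | rfl
      · obtain ⟨j, hj1, hj2, hj3⟩ := Arc.mem_sub_edges.mp hed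
        exact ⟨j, by omega, hj3⟩
      · obtain ⟨j, hj1, hj2, hj3⟩ := Arc.mem_sub_edges.mp hed
        exact ⟨j, by omega, hj3⟩
    · intro k hk hyk
      have hki : k ≠ i - 1 := fun heq => hyk (heq ▸ hy1)
      by_cases h2 : k ≤ i - 2
      · exact ⟨XL, by simp, Arc.mem_sub_edges.mpr ⟨k, by omega, h2, rfl⟩⟩
      · exact ⟨XR, by simp, Arc.mem_sub_edges.mpr ⟨k, by omega, by omega, rfl⟩⟩
    · intro A hA v hv hva
      simp only [List.mem_cons, List.not_mem_nil, or_false] at hA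
      rcases hA with rfl | rfl
      · rcases hva with rfl | rfl
        · exact absurd hv hxXL
        · exact Or.inl rfl
      · rcases hva with rfl | rfl
        · exact Or.inl rfl
        · exact Or.inr rfl
    · refine List.Pairwise.cons ?_ (List.pairwise_singleton _ _)
      intro Y hY
      simp only [List.mem_singleton] at hY
      subst hY
      intro v h1 h2
      by_cases hvx : v = x
      · exact Or.inl hvx
      by_cases hva : v = a
      · exact Or.inr hva
      exfalso
      obtain ⟨k, hk1, hvk⟩ := chXL v h1
      obtain ⟨l, hl1, hl2, hvl⟩ := chXR v h2
      have hadj := h.adj hL3 hva (show k < l from by omega) (by omega) hvk hvl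
      omega
    · intro A hA h1 h2
      simp only [List.mem_cons, List.not_mem_nil, or_false] at hA
      rcases hA with rfl | rfl
      · exfalso
        rcases h2 with h3 | h3
        · exact hqx h3
        · exact hqa h3
      · exact hXRnun
  · -- i = 1 : only the right piece
    refine ⟨y, yfree_of hV hm (k := i - 1) (by omega) hy1 hyx hya, ?_⟩
    refine cyc_goodsys h hE hV hm hxa hya hyx [XR] ?_ ?_ ?_ ?_ ?_ ?_ ?_ ?_
    · intro A hA
      simp only [List.mem_singleton] at hA
      exact hA ▸ okXR
    · intro A hA v hv
      simp only [List.mem_singleton] at hA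
      subst hA
      obtain ⟨k, hk1, hk2, hvk⟩ := chXR v hv
      exact ⟨k, by omega, hvk⟩
    · intro A hA
      simp only [List.mem_singleton] at hA
      exact hA ▸ hyXR
    · intro A hA ed hed
      simp only [List.mem_singleton] at hA
      subst hA
      obtain ⟨j, hj1, hj2, hj3⟩ := Arc.mem_sub_edges.mp hed
      exact ⟨j, by omega, hj3⟩
    · intro k hk hyk
      have hki : k ≠ i - 1 := fun heq => hyk (heq ▸ hy1)
      exact ⟨XR, by simp, Arc.mem_sub_edges.mpr ⟨k, by omega, by omega, rfl⟩⟩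
    · intro A hA v hv hva
      simp only [List.mem_singleton] at hA
      subst hA
      rcases hva with rfl | rfl
      · exact Or.inl rfl
      · exact Or.inr rfl
    · exact List.pairwise_singleton _ _
    · intro A hA h1 h2
      simp only [List.mem_singleton] at hA
      subst hA
      exact hXRnun

/-- The case `L = 2`. -/
theorem cyc_case_L2 (h : CycOk e a L) (hE : C.edges = (Finset.range L).image e)
    (hV : C.verts = (Finset.range L).biUnion e) (hm : C.marked = {a}) (hL2 : L = 2)
    {x : V} (hxa : x ≠ a) {i0 : ℕ} (hi0 : i0 < L) (hx : x ∈ e i0) :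
    ∃ y ∈ (C.plus x).verts \ (C.plus x).marked, GoodSys ((L + 1) / 2) ((C.plus x).minus y) := by
  have ha1 : a ∈ e 1 := by
    have := h.haL
    rwa [show L - 1 = 1 from by omega] at this
  have hcd : (e 0 ∩ e 1).card = 2 := h.h2 hL2
  have hn12 : (L + 1) / 2 = 1 := by omega
  have main : ∀ (s t : ℕ), s < L → t < L → s ≠ t → x ∈ e s → a ∈ e s →
      ∃ y ∈ (C.plus x).verts \ (C.plus x).marked,
        GoodSys ((L + 1) / 2) ((C.plus x).minus y) := by
    intro s t hs ht hst hxs has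
    -- delete a vertex of e t outside e s
    have hpick : (e t \ e s).Nonempty := by
      rw [← Finset.card_pos]
      have h1 := Finset.card_sdiff_add_card_inter (e t) (e s)
      have h2 : (e t ∩ e s).card ≤ 2 := by
        have hst' : (s = 0 ∧ t = 1) ∨ (s = 1 ∧ t = 0) := by omega
        rcases hst' with ⟨rfl, rfl⟩ | ⟨rfl, rfl⟩
        · rw [Finset.inter_comm]
          omega
        · omega
      have h3 := h.card3 t ht
      omega
    obtain ⟨y, hy⟩ := hpick
    rw [Finset.mem_sdiff] at hy
    have hya : y ≠ a := fun heq => hy.2 (heq ▸ has)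
    have hyx : y ≠ x := fun heq => hy.2 (heq ▸ hxs)
    set X := (CycOk.master e a L).sub s s a x with hX
    have okX : X.Ok := CycOk.seg1_ok h hs has hxs (fun heq => hxa heq.symm)
    have chX : ∀ v ∈ X.verts, v ∈ e s := by
      intro v hv
      obtain ⟨j, hj1, hj2, hj3⟩ := Arc.mem_sub_verts.mp hv
      rwa [show j = s from by omega] at hj3
    refine ⟨y, yfree_of hV hm (k := t) ht hy.1 hyx hya, ?_⟩
    refine cyc_goodsys h hE hV hm hxa hya hyx [X] ?_ ?_ ?_ ?_ ?_ ?_ ?_ ?_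
    · intro A hA
      simp only [List.mem_singleton] at hA
      exact hA ▸ okX
    · intro A hA v hv
      simp only [List.mem_singleton] at hA
      subst hA
      exact ⟨s, hs, chX v hv⟩
    · intro A hA
      simp only [List.mem_singleton] at hA
      subst hA
      exact fun hv => hy.2 (chX y hv)
    · intro A hA ed hed
      simp only [List.mem_singleton] at hA
      subst hA
      obtain ⟨j, hj1, hj2, hj3⟩ := Arc.mem_sub_edges.mp hed
      exact ⟨j, by omega, hj3⟩
    · intro k hk hyk
      have hkt : k ≠ t := fun heq => hyk (heq ▸ hy.1)
      have hks : k = s := by omega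
      exact ⟨X, by simp, Arc.mem_sub_edges.mpr ⟨k, by omega, by omega, hks ▸ rfl⟩⟩
    · intro A hA v hv hva
      simp only [List.mem_singleton] at hA
      subst hA
      rcases hva with rfl | rfl
      · exact Or.inr rfl
      · exact Or.inl rfl
    · exact List.pairwise_singleton _ _
    · intro A hA h1 h2
      simp only [List.mem_singleton] at hA
      subst hA
      show (L + 1) / 2 ≤ s + 1 - s
      omega
  by_cases hx0 : x ∈ e 0
  · exact main 0 1 (by omega) (by omega) (by omega) hx0 h.ha0
  · have hx1 : x ∈ e 1 := by
      have : i0 = 0 ∨ i0 = 1 := by omega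
      rcases this with rfl | rfl
      · exact absurd hx hx0
      · exact hx
    exact main 1 0 (by omega) (by omega) (by omega) hx1 ha1

end CycCases2

end MB
namespace MB
open MarkedHypergraph

variable {V : Type} [DecidableEq V]

section CycMain

variable {C : MarkedHypergraph V} {a : V} {L : ℕ} {e : ℕ → Finset V}

theorem cycle_good (h : CycOk e a L) (hE : C.edges = (Finset.range L).image e)
    (hV : C.verts = (Finset.range L).biUnion e) (hm : C.marked = {a})
    {x : V} (hx : x ∈ C.verts \ C.marked) :
    ∃ y ∈ (C.plus x).verts \ (C.plus x).marked, GoodSys ((L + 1) / 2) ((C.plus x).minus y) := by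
  rw [Finset.mem_sdiff, hm] at hx
  have hxa : x ≠ a := by simpa using hx.2
  have hxv := hx.1
  rw [hV] at hxv
  obtain ⟨i0, hi0, hx0⟩ := Finset.mem_biUnion.mp hxv
  rw [Finset.mem_range] at hi0
  have h' := h.rev
  have hE' : C.edges = (Finset.range L).image (fun k => e (L - 1 - k)) := by
    rw [hE, CycOk.rev_image]
  have hV' : C.verts = (Finset.range L).biUnion (fun k => e (L - 1 - k)) := by
    rw [hV, CycOk.rev_biUnion]
  by_cases hL3 : 3 ≤ L
  · rcases h.locate hL3 hxa hi0 hx0 with ⟨i, hi, h1, h2⟩ | ⟨i, hi, h1, huniq⟩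
    · by_cases hside : i + 1 ≤ L - 1 - i
      · exact cyc_case_junction h hE hV hm hL3 hxa hi h1 h2 hside
      · refine cyc_case_junction h' hE' hV' hm hL3 hxa (i := L - 2 - i) (by omega) ?_ ?_
          (by omega)
        · show x ∈ e (L - 1 - (L - 2 - i))
          rw [show L - 1 - (L - 2 - i) = i + 1 from by omega]
          exact h2
        · show x ∈ e (L - 1 - (L - 2 - i + 1))
          rw [show L - 1 - (L - 2 - i + 1) = i from by omega]
          exact h1
    · by_cases hia : i = 0
      · subst hia
        exact cyc_case_center0 h hE hV hm hL3 hxa h1 huniq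
      · by_cases hiL : i = L - 1
        · refine cyc_case_center0 h' hE' hV' hm hL3 hxa ?_ ?_
          · show x ∈ e (L - 1 - 0)
            rw [show L - 1 - 0 = L - 1 from by omega, ← hiL]
            exact h1
          · intro j hj hxj
            have := huniq (L - 1 - j) (by omega) hxj
            omega
        · by_cases hside : i + 1 ≤ L - i
          · exact cyc_case_center_mid h hE hV hm hL3 hxa (by omega) (by omega) h1 huniq hside
          · refine cyc_case_center_mid h' hE' hV' hm hL3 hxa (i := L - 1 - i)
              (by omega) (by omega) ?_ ?_ (by omega)
            · show x ∈ e (L - 1 - (L - 1 - i))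
              rw [show L - 1 - (L - 1 - i) = i from by omega]
              exact h1
            · intro j hj hxj
              have := huniq (L - 1 - j) (by omega) hxj
              omega
  · exact cyc_case_L2 h hE hV hm (by have := h.hL; omega) hxa hi0 hx0

theorem cycle_tau_lb (h : CycOk e a L) (hE : C.edges = (Finset.range L).image e)
    (hV : C.verts = (Finset.range L).biUnion e) (hm : C.marked = {a}) :
    ((1 + Nat.clog 2 L : ℕ) : ℕ∞) ≤ tauM C := by
  have hnt := cyc_not_trivial h hE hm
  have hfr := cyc_free2 h hV hm
  rw [tauM_big hnt hfr]
  have hclog : Nat.clog 2 L = Nat.clog 2 ((L + 1) / 2) + 1 := by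
    rw [Nat.clog_of_two_le (by norm_num) h.hL, show L + 2 - 1 = L + 1 from by omega]
  have hcast : ((1 + Nat.clog 2 L : ℕ) : ℕ∞) = 1 + ((Nat.clog 2 L : ℕ) : ℕ∞) := by
    push_cast
    ring
  rw [hcast]
  refine add_le_add_right (Finset.le_inf ?_) 1
  intro x hxmem
  obtain ⟨y, hy, hG⟩ := cycle_good h hE hV hm hxmem
  have hIH := tau_lb ((L + 1) / 2) _ hG
  refine le_trans ?_ (le_trans hIH
    (Finset.le_sup (f := fun y : {z // z ∈ (C.plus x).verts \ (C.plus x).marked} =>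
      tauM ((C.plus x).minus y.1)) (Finset.mem_attach _ ⟨y, hy⟩)))
  rw [hclog]
  norm_cast
  omega

end CycMain

end MB
namespace MB
open MarkedHypergraph

variable {V : Type} [DecidableEq V]

theorem pointedIso_refl (X : MarkedHypergraph V) (x : V) : PointedIso X x X x := by
  refine ⟨id, fun v _ w _ h => h, Finset.image_id, ?_, fun v _ => Iff.rfl, rfl⟩
  intro ed hed
  rw [Finset.image_id]

section NotJ

variable {C : MarkedHypergraph V} {a : V} {L : ℕ} {e : ℕ → Finset V}

theorem cyc_notJ (h : CycOk e a L)
    (hinj : ∀ i j, i < L → j < L → i ≠ j → e i ≠ e j)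
    (hE : C.edges = (Finset.range L).image e)
    (hV : C.verts = (Finset.range L).biUnion e) (hm : C.marked = {a}) :
    ¬ J famS 1 C := by
  have hL2 := h.hL
  have ha1 : a ∈ e 1 ∨ 3 ≤ L := by
    by_cases hL3 : 3 ≤ L
    · exact Or.inr hL3
    · left
      have := h.haL
      rwa [show L - 1 = 1 from by omega] at this
  obtain ⟨x, hx0, hx1, hxa⟩ : ∃ x, x ∈ e 0 ∧ x ∈ e 1 ∧ x ≠ a := by
    by_cases hL3 : 3 ≤ L
    · have hne : (e 0 ∩ e 1).Nonempty := by
        rw [← Finset.card_pos, (h.h3 hL3).2 0 (by omega)]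
        omega
      obtain ⟨x, hx⟩ := hne
      rw [Finset.mem_inter] at hx
      refine ⟨x, hx.1, hx.2, fun heq => ?_⟩
      exact h.hmid 1 (by omega) (by omega) (heq ▸ hx.2)
    · have hL2' : L = 2 := by omega
      have ha1' : a ∈ e 1 := by
        have := h.haL
        rwa [show L - 1 = 1 from by omega] at this
      have hne : ((e 0 ∩ e 1).erase a).Nonempty := by
        rw [← Finset.card_pos,
          Finset.card_erase_of_mem (Finset.mem_inter.mpr ⟨h.ha0, ha1'⟩), h.h2 hL2']
        omega
      obtain ⟨x, hx⟩ := hne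
      rw [Finset.mem_erase, Finset.mem_inter] at hx
      exact ⟨x, hx.2.1, hx.2.2, hx.1⟩
  have hxfree : x ∈ C.verts \ C.marked := by
    rw [Finset.mem_sdiff, hm]
    exact ⟨cyc_mem_verts hV (by omega) hx0, by simpa using hxa⟩
  intro hJ
  obtain ⟨y, hy, -⟩ := hJ x hxfree
  obtain ⟨hy1, hy2, hy3⟩ := hy
  have hyx : y ≠ x := by
    intro heq
    exact hy2 (by rw [heq]; exact Finset.mem_insert_self x _)
  have hya : y ≠ a := by
    intro heq
    apply hy2
    show y ∈ insert x C.marked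
    rw [hm, heq]
    simp
  -- the two snakes at x
  set e₁ : ℕ → Finset V := fun _ => e 0 with he₁
  set X1 : MarkedHypergraph V :=
    ⟨(Finset.range 1).biUnion e₁, (Finset.range 1).image e₁, {a}⟩ with hX1
  set e₂ : ℕ → Finset V := fun k => e (1 + k) with he₂
  set X2 : MarkedHypergraph V :=
    ⟨(Finset.range (L - 1)).biUnion e₂, (Finset.range (L - 1)).image e₂, {a}⟩ with hX2
  have hX1v : ∀ v, v ∈ X1.verts ↔ v ∈ e 0 := by
    intro v
    simp [hX1, he₁, Finset.mem_biUnion]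
  have hX1e : ∀ ed, ed ∈ X1.edges ↔ ed = e 0 := by
    intro ed
    simp [hX1, he₁, Finset.mem_image, eq_comm]
  have hX2v : ∀ v, v ∈ X2.verts ↔ ∃ k, k < L - 1 ∧ v ∈ e (1 + k) := by
    intro v
    simp [hX2, he₂, Finset.mem_biUnion]
  have haX2 : a ∈ X2.verts := by
    rw [hX2v]
    refine ⟨L - 2, by omega, ?_⟩
    rw [show 1 + (L - 2) = L - 1 from by omega]
    exact h.haL
  have hX1mem : X1 ∈ xFam famS C x := by
    refine ⟨⟨⟨x, (hX1v x).mpr hx0⟩, ?_, ?_⟩, ⟨?_, ?_, ?_⟩, (hX1v x).mpr hx0, (X1, x), ?_, ?_⟩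
    · intro ed hed
      rw [hX1e] at hed
      subst hed
      constructor
      · intro v hv
        exact (hX1v v).mpr hv
      · rw [← Finset.card_pos, h.card3 0 (by omega)]
        omega
    · intro v hv
      rw [Finset.mem_singleton] at hv
      subst hv
      exact (hX1v v).mpr h.ha0
    · intro v hv
      exact cyc_mem_verts hV (by omega) ((hX1v v).mp hv)
    · intro ed hed
      rw [hX1e] at hed
      exact hed ▸ cyc_mem_edges hE (by omega)
    · show ({a} : Finset V) = X1.verts ∩ C.marked
      rw [hm]
      ext v
      rw [Finset.mem_inter, Finset.mem_singleton]
      constructor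
      · rintro rfl
        exact ⟨(hX1v v).mpr h.ha0, rfl⟩
      · rintro ⟨-, hv⟩
        exact hv
    · -- (X1, x) ∈ famS
      refine ⟨⟨a, 1, le_refl 1, ?_, Finset.mem_singleton_self a⟩, Finset.card_singleton a⟩
      right
      refine ⟨le_refl 1, hxa, e₁, rfl, rfl, ?_, ?_, ?_, ?_, ?_, ?_, ?_, ?_⟩
      · intro i hi
        rw [show i = 0 from by omega]
        exact h.card3 0 (by omega)
      · intro i j hi hj hij
        omega
      · exact hx0
      · exact h.ha0
      · intro i hi
        omega
      · intro i j hij hj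
        omega
      · intro i h1 h2
        omega
      · intro i hi
        omega
    · exact pointedIso_refl X1 x
  have hX2mem : X2 ∈ xFam famS C x := by
    have hxX2 : x ∈ X2.verts := by
      rw [hX2v]
      exact ⟨0, by omega, by simpa using hx1⟩
    refine ⟨⟨⟨a, haX2⟩, ?_, ?_⟩, ⟨?_, ?_, ?_⟩, hxX2, (X2, x), ?_, ?_⟩
    · intro ed hed
      simp only [hX2, he₂, Finset.mem_image, Finset.mem_range] at hed
      obtain ⟨k, hk, hfk⟩ := hed
      constructor
      · intro v hv
        rw [hX2v]
        exact ⟨k, hk, hfk ▸ hv⟩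
      · rw [← Finset.card_pos, ← hfk, h.card3 (1 + k) (by omega)]
        omega
    · intro v hv
      rw [Finset.mem_singleton] at hv
      exact hv ▸ haX2
    · intro v hv
      obtain ⟨k, hk, hvk⟩ := (hX2v v).mp hv
      exact cyc_mem_verts hV (by omega) hvk
    · intro ed hed
      simp only [hX2, he₂, Finset.mem_image, Finset.mem_range] at hed
      obtain ⟨k, hk, hfk⟩ := hed
      exact hfk ▸ cyc_mem_edges hE (by omega)
    · show ({a} : Finset V) = X2.verts ∩ C.marked
      rw [hm]
      ext v
      rw [Finset.mem_inter, Finset.mem_singleton]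
      constructor
      · rintro rfl
        exact ⟨haX2, rfl⟩
      · rintro ⟨-, hv⟩
        exact hv
    · -- (X2, x) ∈ famS
      refine ⟨⟨a, L - 1, by omega, ?_, Finset.mem_singleton_self a⟩, Finset.card_singleton a⟩
      right
      refine ⟨by omega, hxa, e₂, rfl, rfl, ?_, ?_, ?_, ?_, ?_, ?_, ?_, ?_⟩
      · intro i hi
        exact h.card3 (1 + i) (by omega)
      · intro i j hi hj hij
        exact hinj (1 + i) (1 + j) (by omega) (by omega) (by omega)
      · show x ∈ e (1 + 0)
        simpa using hx1
      · show a ∈ e (1 + (L - 1 - 1))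
        rw [show 1 + (L - 1 - 1) = L - 1 from by omega]
        exact h.haL
      · intro i hi
        show (e (1 + i) ∩ e (1 + (i + 1))).card = 1
        rw [show 1 + (i + 1) = (1 + i) + 1 from by omega]
        exact (h.h3 (by omega)).2 (1 + i) (by omega)
      · intro i j hij hj
        show e (1 + i) ∩ e (1 + j) = ∅
        exact h.far (1 + i) (1 + j) (by omega) (by omega) (by omega) (by omega)
      · intro i h1 h2 hmem
        have hL3 : 3 ≤ L := by omega
        by_cases hwrap : 1 + i = L - 1
        · have : x ∈ e 0 ∩ e (L - 1) := Finset.mem_inter.mpr ⟨hx0, hwrap ▸ hmem⟩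
          rw [(h.h3 hL3).1, Finset.mem_singleton] at this
          exact hxa this
        · have : x ∈ e 0 ∩ e (1 + i) := Finset.mem_inter.mpr ⟨hx0, hmem⟩
          rw [h.far 0 (1 + i) (by omega) (by omega) (by omega) (by omega)] at this
          exact absurd this (Finset.notMem_empty x)
      · intro i hi
        exact h.hmid (1 + i) (by omega) (by omega)
    · exact pointedIso_refl X2 x
  -- contradiction from the two memberships
  have hy0 : y ∈ e 0 := (hX1v y).mp (hy3 X1 hX1mem)
  obtain ⟨k, hk, hyk⟩ := (hX2v y).mp (hy3 X2 hX2mem)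
  by_cases hk0 : k = 0
  · subst hk0
    have hyk1 : y ∈ e 1 := by simpa using hyk
    by_cases hL3 : 3 ≤ L
    · apply hyx
      have hcard := (h.h3 hL3).2 0 (by omega)
      exact Finset.card_le_one.mp (le_of_eq hcard) y
        (Finset.mem_inter.mpr ⟨hy0, hyk1⟩) x (Finset.mem_inter.mpr ⟨hx0, hx1⟩)
    · have hL2' : L = 2 := by omega
      have ha1' : a ∈ e 1 := by
        have := h.haL
        rwa [show L - 1 = 1 from by omega] at this
      have hsub : ({a, x} : Finset V) ⊆ e 0 ∩ e 1 := by
        intro v hv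
        rcases Finset.mem_insert.mp hv with rfl | hv'
        · exact Finset.mem_inter.mpr ⟨h.ha0, ha1'⟩
        · rw [Finset.mem_singleton] at hv'
          exact hv' ▸ Finset.mem_inter.mpr ⟨hx0, hx1⟩
      have heq : ({a, x} : Finset V) = e 0 ∩ e 1 := by
        refine Finset.eq_of_subset_of_card_le hsub ?_
        rw [h.h2 hL2', Finset.card_pair (fun heq => hxa heq.symm)]
      have : y ∈ ({a, x} : Finset V) := by
        rw [heq]
        exact Finset.mem_inter.mpr ⟨hy0, hyk1⟩
      rcases Finset.mem_insert.mp this with rfl | h1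
      · exact hya rfl
      · rw [Finset.mem_singleton] at h1
        exact hyx h1
  · by_cases hkL : 1 + k = L - 1
    · apply hya
      have : y ∈ e 0 ∩ e (L - 1) := Finset.mem_inter.mpr ⟨hy0, hkL ▸ hyk⟩
      rw [(h.h3 (by omega)).1, Finset.mem_singleton] at this
      exact this
    · have : y ∈ e 0 ∩ e (1 + k) := Finset.mem_inter.mpr ⟨hy0, hyk⟩
      rw [h.far 0 (1 + k) (by omega) (by omega) (by omega) (by omega)] at this
      exact absurd this (Finset.notMem_empty y)

end NotJ

end MB

/-- Proposition 3.11: a necklace of length `L` is a Maker win with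
`τ_M = 1 + ⌈log₂ L⌉`, and `J_1(𝒮,·)` fails on it. -/
theorem statement16 {V : Type} [DecidableEq V] (C : MB.MarkedHypergraph V)
    (a : V) (L : ℕ) (hC : MB.IsCycleLen C a L) (hm : C.marked = {a}) :
    C.MakerWin ∧ MB.MarkedHypergraph.tauM C = ((1 + Nat.clog 2 L : ℕ) : ℕ∞) ∧
      ¬ MB.J MB.famS 1 C := by
  obtain ⟨hL2, e, hE, hV, hcard, hinj, ha0, haL, hamid, h2L, h3L, hfar⟩ := hC
  have h : MB.CycOk e a L :=
    ⟨hL2, hcard, ha0, haL, hamid, h2L, h3L, hfar⟩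
  have htau : MB.MarkedHypergraph.tauM C = ((1 + Nat.clog 2 L : ℕ) : ℕ∞) :=
    le_antisymm (MB.cycle_tau_ub h hE hV hm) (MB.cycle_tau_lb h hE hV hm)
  refine ⟨?_, htau, MB.cyc_notJ h hinj hE hV hm⟩
  refine MB.MarkedHypergraph.makerWin_of_tauM_ne_top ?_ ?_
  · intro ed hed
    rw [hE] at hed
    obtain ⟨k, hk, hfk⟩ := Finset.mem_image.mp hed
    rw [Finset.mem_range] at hk
    intro v hv
    rw [hV]
    exact Finset.mem_biUnion.mpr ⟨k, Finset.mem_range.mpr hk, hfk ▸ hv⟩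
  · rw [htau]
    exact ENat.coe_ne_top _
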